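/- arXiv:2012.03742 — 5 statements merged into one kernel-verified Lean document; each statement's English description precedes it below -/
import Mathlib

section
/- Let D be a digraph with a subdigraph Q that has a good pair. Let X = N_D^-(Q) and Y = N_D^+(Q), and assume X ∩ Y = ∅ and X ∪ Y = V(D) − V(Q). Let X_1, …, X_a be the initial strong components of D[X] and Y_1, …, Y_b the terminal strong components of D[Y]. If either (1) d_Y^-(X_1) ≥ 1, d_Y^-(X_i) ≥ 2 for all i with 2 ≤ i ≤ a, and d_X^+(Y_j) ≥ 2 for all j with 1 ≤ j ≤ b, or (2) d_X^+(Y_1) ≥ 1, d_X^+(Y_j) ≥ 2 for all j with 2 ≤ j ≤ b, and d_Y^-(X_i) ≥ 2 for all i with 1 ≤ i ≤ a, then D has a good pair. -/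
/-!
Basic notions for finite digraphs (modelled as an arc relation `D : V → V → Prop`
on a finite vertex type; absence of loops is an explicit hypothesis, parallel
arcs are impossible in this model).
-/

variable {V : Type*}

/-- Reachability inside a vertex set `S` using arcs of `D`. -/
def ReachIn (D : V → V → Prop) (S : Set V) : V → V → Prop :=
  Relation.ReflTransGen (fun a b => D a b ∧ a ∈ S ∧ b ∈ S)

/-- `B` is an out-branching (spanning out-arborescence) of the subdigraph of `D`
induced on the vertex set `S`, rooted at `r`: all arcs of `B` are arcs of `D`
inside `S`, every vertex of `S` other than the root `r` has exactly one in-arc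
in `B`, the root has none, and every vertex of `S` is reachable from `r` in `B`
(equivalently, the underlying graph of `B` is a spanning tree of `S`). -/
def IsOutBranchingOn (D B : V → V → Prop) (S : Set V) (r : V) : Prop :=
  r ∈ S ∧ (∀ u v, B u v → D u v ∧ u ∈ S ∧ v ∈ S) ∧
    (∀ u, ¬ B u r) ∧ (∀ v ∈ S, v ≠ r → ∃! u, B u v) ∧
    (∀ v ∈ S, Relation.ReflTransGen B r v)

/-- `B` is an in-branching of the subdigraph of `D` induced on `S`, rooted at `r`. -/
def IsInBranchingOn (D B : V → V → Prop) (S : Set V) (r : V) : Prop :=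
  r ∈ S ∧ (∀ u v, B u v → D u v ∧ u ∈ S ∧ v ∈ S) ∧
    (∀ v, ¬ B r v) ∧ (∀ u ∈ S, u ≠ r → ∃! v, B u v) ∧
    (∀ u ∈ S, Relation.ReflTransGen B u r)

/-- The subdigraph of `D` induced on `S` has a good pair: an out-branching and an
in-branching of it which are arc-disjoint. -/
def HasGoodPairOn (D : V → V → Prop) (S : Set V) : Prop :=
  ∃ (Bp Bm : V → V → Prop) (r s : V),
    IsOutBranchingOn D Bp S r ∧ IsInBranchingOn D Bm S s ∧
      ∀ u v, ¬ (Bp u v ∧ Bm u v)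

/-- `D` has a good pair: an out-branching and an in-branching which are arc-disjoint. -/
def HasGoodPair (D : V → V → Prop) : Prop :=
  HasGoodPairOn D Set.univ

/-- `D` is 2-arc-strong: every nonempty proper vertex subset has at least two
arcs leaving it. -/
def TwoArcStrong (D : V → V → Prop) : Prop :=
  ∀ X : Set V, X.Nonempty → X ≠ Set.univ →
    2 ≤ {p : V × V | p.1 ∈ X ∧ p.2 ∉ X ∧ D p.1 p.2}.ncard

/-- `D` is an oriented graph: it has no digon (and in particular no loop). -/
def IsOriented (D : V → V → Prop) : Prop :=
  ∀ u v, D u v → ¬ D v u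

/-- The in-neighbourhood `N_D^-(S)` of a vertex set `S`: vertices outside `S`
sending an arc into `S`. -/
def NMinus (D : V → V → Prop) (S : Set V) : Set V :=
  {v | v ∉ S ∧ ∃ q ∈ S, D v q}

/-- The out-neighbourhood `N_D^+(S)` of a vertex set `S`: vertices outside `S`
receiving an arc from `S`. -/
def NPlus (D : V → V → Prop) (S : Set V) : Set V :=
  {v | v ∉ S ∧ ∃ q ∈ S, D q v}

/-- `C` is a strong component of the subdigraph of `D` induced on `S`. -/
def IsSCOn (D : V → V → Prop) (S C : Set V) : Prop :=
  ∃ u ∈ S, C = {v | v ∈ S ∧ ReachIn D S u v ∧ ReachIn D S v u}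

/-- `C` is an initial strong component of `D[S]`: a strong component with no
arc of `D[S]` entering it. -/
def IsInitialSC (D : V → V → Prop) (S C : Set V) : Prop :=
  IsSCOn D S C ∧ ∀ a ∈ S, ∀ b ∈ C, D a b → a ∈ C

/-- `C` is a terminal strong component of `D[S]`: a strong component with no
arc of `D[S]` leaving it. -/
def IsTerminalSC (D : V → V → Prop) (S C : Set V) : Prop :=
  IsSCOn D S C ∧ ∀ a ∈ C, ∀ b ∈ S, D a b → b ∈ C

/-- `d_T^-(C)`: the number of vertices of `T` that have an arc to some vertex of `C`. -/
noncomputable def dInFrom (D : V → V → Prop) (T C : Set V) : ℕ :=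
  {y ∈ T | ∃ c ∈ C, D y c}.ncard

/-- `d_T^+(C)`: the number of vertices of `T` that receive an arc from some vertex of `C`. -/
noncomputable def dOutTo (D : V → V → Prop) (T C : Set V) : ℕ :=
  {x ∈ T | ∃ c ∈ C, D c x}.ncard

/-- `S` is an independent set of `D`: no arc joins two distinct vertices of `S`
in either direction. -/
def IsIndepSet (D : V → V → Prop) (S : Set V) : Prop :=
  ∀ u ∈ S, ∀ v ∈ S, u ≠ v → ¬ D u v

/-- `D` contains a directed path on `t` (distinct) vertices. -/
def HasDipath (D : V → V → Prop) (t : ℕ) : Prop :=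
  ∃ x : Fin t → V, Function.Injective x ∧
    ∀ i : Fin t, ∀ h : (i : ℕ) + 1 < t, D (x i) (x ⟨(i : ℕ) + 1, h⟩)

/-- `C` is the vertex set of a directed cycle of `D`. -/
def IsDicycle (D : V → V → Prop) (C : Set V) : Prop :=
  ∃ (m : ℕ) (c : Fin m → V), 2 ≤ m ∧ Function.Injective c ∧ C = Set.range c ∧
    (∀ i : Fin m, ∀ h : (i : ℕ) + 1 < m, D (c i) (c ⟨(i : ℕ) + 1, h⟩)) ∧
    (∀ h : 0 < m, D (c ⟨m - 1, by omega⟩) (c ⟨0, h⟩))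

/-- `D` contains `K₄` as a subdigraph: four pairwise adjacent vertices. -/
def ContainsK4 (D : V → V → Prop) : Prop :=
  ∃ a b c d : V, a ≠ b ∧ a ≠ c ∧ a ≠ d ∧ b ≠ c ∧ b ≠ d ∧ c ≠ d ∧
    (D a b ∨ D b a) ∧ (D a c ∨ D c a) ∧ (D a d ∨ D d a) ∧
    (D b c ∨ D c b) ∧ (D b d ∨ D d b) ∧ (D c d ∨ D d c)
section Aux

open Relation

variable {V : Type*}

lemma sc_subset {D : V → V → Prop} {S C : Set V} (h : IsSCOn D S C) : C ⊆ S := by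
  obtain ⟨u, hu, rfl⟩ := h; intro v hv; exact hv.1

lemma sc_reach {D : V → V → Prop} {S C : Set V} (h : IsSCOn D S C)
    {w z : V} (hw : w ∈ C) (hz : z ∈ C) : ReachIn D S w z := by
  obtain ⟨u, hu, rfl⟩ := h
  exact hw.2.2.trans hz.2.1

lemma sc_eq_of_mem {D : V → V → Prop} {S C C' : Set V} (h : IsSCOn D S C)
    (h' : IsSCOn D S C') {v : V} (hv : v ∈ C) (hv' : v ∈ C') : C = C' := by
  obtain ⟨u, hu, rfl⟩ := h
  obtain ⟨u', hu', rfl⟩ := h'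
  ext w
  constructor
  · rintro ⟨hwS, h1, h2⟩
    exact ⟨hwS, (hv'.2.1.trans hv.2.2).trans h1, h2.trans (hv.2.1.trans hv'.2.2)⟩
  · rintro ⟨hwS, h1, h2⟩
    exact ⟨hwS, (hv.2.1.trans hv'.2.2).trans h1, h2.trans (hv'.2.1.trans hv.2.2)⟩

lemma reachIn_flip {D : V → V → Prop} {S : Set V} {a b : V} :
    ReachIn (fun x y => D y x) S a b ↔ ReachIn D S b a := by
  constructor
  · intro h
    have := Relation.ReflTransGen.swap b a h
    exact Relation.ReflTransGen.mono (fun x y hxy => ⟨hxy.1, hxy.2.2, hxy.2.1⟩) _ _ this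
  · intro h
    have := Relation.ReflTransGen.swap a b h
    exact Relation.ReflTransGen.mono (fun x y hxy => ⟨hxy.1, hxy.2.2, hxy.2.1⟩) _ _ this

lemma isSCOn_flip {D : V → V → Prop} {S C : Set V} :
    IsSCOn (fun x y => D y x) S C ↔ IsSCOn D S C := by
  constructor <;>
  · rintro ⟨u, hu, rfl⟩
    refine ⟨u, hu, ?_⟩
    ext v
    simp only [Set.mem_setOf_eq, reachIn_flip]
    tauto

lemma isInitialSC_flip {D : V → V → Prop} {S C : Set V} :
    IsInitialSC (fun x y => D y x) S C ↔ IsTerminalSC D S C := by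
  unfold IsInitialSC IsTerminalSC
  rw [isSCOn_flip]
  constructor
  · rintro ⟨h1, h2⟩
    exact ⟨h1, fun a ha b hb hab => h2 b hb a ha hab⟩
  · rintro ⟨h1, h2⟩
    exact ⟨h1, fun a ha b hb hab => h2 b hb a ha hab⟩

lemma out_flip {D B : V → V → Prop} {S : Set V} {r : V}
    (h : IsOutBranchingOn D B S r) :
    IsInBranchingOn (fun x y => D y x) (fun x y => B y x) S r := by
  obtain ⟨h1, h2, h3, h4, h5⟩ := h
  refine ⟨h1, fun u v hB => ?_, fun v hB => h3 v hB, h4, fun u hu => ?_⟩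
  · obtain ⟨hD, hu, hv⟩ := h2 v u hB
    exact ⟨hD, hv, hu⟩
  · exact Relation.ReflTransGen.swap u r (h5 u hu)

lemma in_flip {D B : V → V → Prop} {S : Set V} {r : V}
    (h : IsInBranchingOn D B S r) :
    IsOutBranchingOn (fun x y => D y x) (fun x y => B y x) S r := by
  obtain ⟨h1, h2, h3, h4, h5⟩ := h
  refine ⟨h1, fun u v hB => ?_, fun v hB => h3 v hB, h4, fun u hu => ?_⟩
  · obtain ⟨hD, hu, hv⟩ := h2 v u hB
    exact ⟨hD, hv, hu⟩
  · exact Relation.ReflTransGen.swap r u (h5 u hu)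

lemma hasGoodPairOn_flip {D : V → V → Prop} {S : Set V}
    (h : HasGoodPairOn D S) : HasGoodPairOn (fun x y => D y x) S := by
  obtain ⟨Bp, Bm, r, s, hout, hin, hdisj⟩ := h
  exact ⟨(fun x y => Bm y x), (fun x y => Bp y x), s, r, in_flip hin, out_flip hout,
    fun u v hc => hdisj v u ⟨hc.2, hc.1⟩⟩

lemma nminus_flip {D : V → V → Prop} {S : Set V} :
    NMinus (fun x y => D y x) S = NPlus D S := rfl

lemma nplus_flip {D : V → V → Prop} {S : Set V} :
    NPlus (fun x y => D y x) S = NMinus D S := rfl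

lemma dInFrom_flip {D : V → V → Prop} {T C : Set V} :
    dInFrom (fun x y => D y x) T C = dOutTo D T C := rfl

lemma dOutTo_flip {D : V → V → Prop} {T C : Set V} :
    dOutTo (fun x y => D y x) T C = dInFrom D T C := rfl

/-- Every vertex of `S` is reachable, inside `S`, from a vertex of some
initial strong component of `D[S]`. -/
lemma exists_initial_reach [Finite V] (D : V → V → Prop) (S : Set V)
    {v : V} (hv : v ∈ S) :
    ∃ C, IsInitialSC D S C ∧ ∃ w ∈ C, ReachIn D S w v := by
  classical
  set P : Set V := {u | u ∈ S ∧ ReachIn D S u v} with hP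
  have hPne : P.Nonempty := ⟨v, hv, Relation.ReflTransGen.refl⟩
  set g : V → ℕ := fun u => {w | w ∈ S ∧ ReachIn D S w u}.ncard with hg
  obtain ⟨u, huP, hmin⟩ := Set.exists_min_image P g (Set.toFinite P) hPne
  refine ⟨{z | z ∈ S ∧ ReachIn D S u z ∧ ReachIn D S z u}, ⟨⟨u, huP.1, rfl⟩, ?_⟩,
    u, ⟨huP.1, Relation.ReflTransGen.refl, Relation.ReflTransGen.refl⟩, huP.2⟩
  rintro a ha b ⟨hbS, hub, hbu⟩ hab
  have hau : ReachIn D S a u := Relation.ReflTransGen.head ⟨hab, ha, hbS⟩ hbu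
  have haP : a ∈ P := ⟨ha, hau.trans huP.2⟩
  by_cases hua : ReachIn D S u a
  · exact ⟨ha, hua, hau⟩
  · exfalso
    have hsub : {w | w ∈ S ∧ ReachIn D S w a} ⊂ {w | w ∈ S ∧ ReachIn D S w u} := by
      constructor
      · rintro w ⟨hwS, hwa⟩
        exact ⟨hwS, hwa.trans hau⟩
      · intro hcon
        have : u ∈ {w | w ∈ S ∧ ReachIn D S w a} := hcon ⟨huP.1, Relation.ReflTransGen.refl⟩
        exact hua this.2
    have := Set.ncard_lt_ncard hsub (Set.toFinite _)
    have h2 := hmin a haP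
    simp only [hg] at h2
    omega

end Aux
section Aux2

open Relation

variable {V : Type*}

/-- Spanning out-forest of `D[S]` rooted at the set `R`. -/
lemma exists_forest [Finite V] (D : V → V → Prop) (S R : Set V)
    (hreach : ∀ v ∈ S, ∃ u ∈ R, ReachIn D S u v) :
    ∃ par : V → V, (∀ v, v ∈ S → v ∉ R → par v ∈ S ∧ D (par v) v) ∧
      ∀ v ∈ S, ∃ u ∈ R, Relation.ReflTransGen (fun a b => b ∈ S ∧ b ∉ R ∧ a = par b) u v := by
  classical
  let Lay : ℕ → Set V := fun n => Nat.rec (R ∩ S)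
    (fun _ L => L ∪ {v | v ∈ S ∧ ∃ u ∈ L, D u v}) n
  have hLay0 : Lay 0 = R ∩ S := rfl
  have hLaySucc : ∀ n, Lay (n+1) = Lay n ∪ {v | v ∈ S ∧ ∃ u ∈ Lay n, D u v} := fun n => rfl
  have hLayS : ∀ n, Lay n ⊆ S := by
    intro n
    induction n with
    | zero => exact Set.inter_subset_right
    | succ n ih =>
      rw [hLaySucc]
      rintro v (hv | hv)
      · exact ih hv
      · exact hv.1
  have hEx : ∀ v ∈ S, ∃ n, v ∈ Lay n := by
    intro v hv
    obtain ⟨u, huR, hpath⟩ := hreach v hv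
    have key : ∀ x, ReachIn D S u x → (x = u ∨ ∃ n, x ∈ Lay n) := by
      intro x hx
      induction hx with
      | refl => exact Or.inl rfl
      | tail hab hbc ih =>
        right
        rcases ih with heq | ⟨n, hn⟩
        · exact ⟨1, Or.inr ⟨hbc.2.2, u, ⟨huR, heq ▸ hbc.2.1⟩, heq ▸ hbc.1⟩⟩
        · exact ⟨n+1, Or.inr ⟨hbc.2.2, _, hn, hbc.1⟩⟩
    rcases key v hpath with rfl | h
    · exact ⟨0, huR, hv⟩
    · exact h
  let lvl : V → ℕ := fun v => sInf {n | v ∈ Lay n}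
  have claim : ∀ v, v ∈ S → v ∉ R → ∃ u, (u ∈ S ∧ D u v) ∧ lvl u < lvl v := by
    intro v hvS hvR
    have hvmem : v ∈ Lay (sInf {n | v ∈ Lay n}) := Nat.sInf_mem (hEx v hvS)
    have hlvlv : lvl v = sInf {n | v ∈ Lay n} := rfl
    cases hn : sInf {n | v ∈ Lay n} with
    | zero =>
      rw [hn] at hvmem
      exact absurd hvmem.1 hvR
    | succ m =>
      rw [hn, hLaySucc] at hvmem
      rcases hvmem with hvmem | ⟨_, u, huL, hDuv⟩
      · have := Nat.sInf_le (s := {n | v ∈ Lay n}) hvmem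
        omega
      · refine ⟨u, ⟨hLayS m huL, hDuv⟩, ?_⟩
        have h1 : lvl u ≤ m := Nat.sInf_le huL
        omega
  choose! par hpar1 hpar2 using claim
  refine ⟨par, fun v h1 h2 => hpar1 v h1 h2, ?_⟩
  have main : ∀ n v, v ∈ S → lvl v ≤ n →
      ∃ u ∈ R, Relation.ReflTransGen (fun a b => b ∈ S ∧ b ∉ R ∧ a = par b) u v := by
    intro n
    induction n with
    | zero =>
      intro v hvS hlvl
      by_cases hvR : v ∈ R
      · exact ⟨v, hvR, Relation.ReflTransGen.refl⟩
      · have := hpar2 v hvS hvR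
        omega
    | succ n ih =>
      intro v hvS hlvl
      by_cases hvR : v ∈ R
      · exact ⟨v, hvR, Relation.ReflTransGen.refl⟩
      · have hpS := hpar1 v hvS hvR
        have hplt := hpar2 v hvS hvR
        obtain ⟨u, huR, hpath⟩ := ih (par v) hpS.1 (by omega)
        exact ⟨u, huR, hpath.tail ⟨hvS, hvR, rfl⟩⟩
  intro v hvS
  exact main (lvl v) v hvS le_rfl

/-- Assembling a global out-branching from a good out-branching on `Q`,
entry arcs into `Y`, a root set `R ⊆ X` with entry arcs from `Y`, and a
spanning out-forest of `X` rooted at `R`. -/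
lemma build_out (D B0 : V → V → Prop) (Q X Y : Set V) (r : V)
    (hB0 : IsOutBranchingOn D B0 Q r)
    (hpart : ∀ v : V, v ∈ Q ∨ v ∈ X ∨ v ∈ Y)
    (hXQ : ∀ v ∈ X, v ∉ Q) (hYQ : ∀ v ∈ Y, v ∉ Q) (hXY : ∀ v ∈ X, v ∉ Y)
    (qc : V → V) (hqc : ∀ v ∈ Y, qc v ∈ Q ∧ D (qc v) v)
    (R : Set V) (hRX : R ⊆ X)
    (yc : V → V) (hyc : ∀ v ∈ R, yc v ∈ Y ∧ D (yc v) v)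
    (par : V → V) (hpar : ∀ v, v ∈ X → v ∉ R → par v ∈ X ∧ D (par v) v)
    (hreach : ∀ v ∈ X, ∃ u ∈ R, Relation.ReflTransGen
      (fun a b => b ∈ X ∧ b ∉ R ∧ a = par b) u v) :
    IsOutBranchingOn D
      (fun u v => (v ∈ Q ∧ B0 u v) ∨ (v ∈ Y ∧ u = qc v) ∨
        (v ∈ X ∧ v ∈ R ∧ u = yc v) ∨ (v ∈ X ∧ v ∉ R ∧ u = par v))
      Set.univ r := by
  obtain ⟨hrQ, harc, hroot, huniq, hreachQ⟩ := hB0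
  set B : V → V → Prop := fun u v => (v ∈ Q ∧ B0 u v) ∨ (v ∈ Y ∧ u = qc v) ∨
        (v ∈ X ∧ v ∈ R ∧ u = yc v) ∨ (v ∈ X ∧ v ∉ R ∧ u = par v) with hB
  have harcs : ∀ u v, B u v → D u v ∧ u ∈ Set.univ ∧ v ∈ Set.univ := by
    rintro u v (⟨hvQ, h⟩ | ⟨hvY, rfl⟩ | ⟨hvX, hvR, rfl⟩ | ⟨hvX, hvR, rfl⟩)
    · exact ⟨(harc u v h).1, trivial, trivial⟩
    · exact ⟨(hqc v hvY).2, trivial, trivial⟩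
    · exact ⟨(hyc v hvR).2, trivial, trivial⟩
    · exact ⟨(hpar v hvX hvR).2, trivial, trivial⟩
  have hreachY : ∀ y ∈ Y, Relation.ReflTransGen B r y := by
    intro y hy
    have h1 : Relation.ReflTransGen B r (qc y) :=
      Relation.ReflTransGen.mono (fun a b h => Or.inl ⟨(harc a b h).2.2, h⟩) _ _ (hreachQ (qc y) (hqc y hy).1)
    exact h1.tail (Or.inr (Or.inl ⟨hy, rfl⟩))
  have hreachX : ∀ x ∈ X, Relation.ReflTransGen B r x := by
    intro x hx
    obtain ⟨u, huR, hpath⟩ := hreach x hx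
    have h1 : Relation.ReflTransGen B r (yc u) := hreachY _ (hyc u huR).1
    have h2 : Relation.ReflTransGen B r u := h1.tail (Or.inr (Or.inr (Or.inl ⟨hRX huR, huR, rfl⟩)))
    exact h2.trans (Relation.ReflTransGen.mono (fun a b h => Or.inr (Or.inr (Or.inr h))) _ _ hpath)
  refine ⟨trivial, harcs, ?_, ?_, ?_⟩
  · rintro u (⟨hvQ, h⟩ | ⟨hvY, rfl⟩ | ⟨hvX, hvR, rfl⟩ | ⟨hvX, hvR, rfl⟩)
    · exact hroot u h
    · exact hYQ r hvY hrQ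
    · exact hXQ r hvX hrQ
    · exact hXQ r hvX hrQ
  · intro v _ hvr
    rcases hpart v with hvQ | hvX | hvY
    · obtain ⟨u, hu, huu⟩ := huniq v hvQ hvr
      refine ⟨u, Or.inl ⟨hvQ, hu⟩, ?_⟩
      rintro u' (⟨_, h⟩ | ⟨hvY, rfl⟩ | ⟨hvX, _, rfl⟩ | ⟨hvX, _, rfl⟩)
      · exact huu u' h
      · exact absurd hvQ (hYQ v hvY)
      · exact absurd hvQ (hXQ v hvX)
      · exact absurd hvQ (hXQ v hvX)
    · by_cases hvR : v ∈ R
      · refine ⟨yc v, Or.inr (Or.inr (Or.inl ⟨hvX, hvR, rfl⟩)), ?_⟩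
        rintro u' (⟨hvQ, _⟩ | ⟨hvY, rfl⟩ | ⟨_, _, rfl⟩ | ⟨_, h, _⟩)
        · exact absurd hvQ (hXQ v hvX)
        · exact absurd hvY (hXY v hvX)
        · rfl
        · exact absurd hvR h
      · refine ⟨par v, Or.inr (Or.inr (Or.inr ⟨hvX, hvR, rfl⟩)), ?_⟩
        rintro u' (⟨hvQ, _⟩ | ⟨hvY, rfl⟩ | ⟨_, h, _⟩ | ⟨_, _, rfl⟩)
        · exact absurd hvQ (hXQ v hvX)
        · exact absurd hvY (hXY v hvX)
        · exact absurd h hvR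
        · rfl
    · refine ⟨qc v, Or.inr (Or.inl ⟨hvY, rfl⟩), ?_⟩
      rintro u' (⟨hvQ, _⟩ | ⟨_, rfl⟩ | ⟨hvX, _, rfl⟩ | ⟨hvX, _, rfl⟩)
      · exact absurd hvQ (hYQ v hvY)
      · rfl
      · exact absurd hvY (hXY v hvX)
      · exact absurd hvY (hXY v hvX)
  · intro v _
    rcases hpart v with hvQ | hvX | hvY
    · exact Relation.ReflTransGen.mono (fun a b h => Or.inl ⟨(harc a b h).2.2, h⟩) _ _ (hreachQ v hvQ)
    · exact hreachX v hvX
    · exact hreachY v hvY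

end Aux2
section Aux2b

variable {V : Type*}

/-- Arc-disjointness of the two assembled branchings. -/
lemma disj_helper (D Bp0 Bm0 : V → V → Prop) (Q X Y Roots Exits : Set V)
    (qc yc parX xq ex chil : V → V)
    (hdisj0 : ∀ u v, ¬ (Bp0 u v ∧ Bm0 u v))
    (hBp0arc : ∀ u v, Bp0 u v → u ∈ Q ∧ v ∈ Q)
    (hBm0arc : ∀ u v, Bm0 u v → u ∈ Q ∧ v ∈ Q)
    (hXQ : ∀ v ∈ X, v ∉ Q) (hYQ : ∀ v ∈ Y, v ∉ Q) (hXY' : ∀ v ∈ X, v ∉ Y)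
    (hqcQ : ∀ v ∈ Y, qc v ∈ Q) (hycY : ∀ v ∈ Roots, yc v ∈ Y)
    (hparX : ∀ v, v ∈ X → v ∉ Roots → parX v ∈ X)
    (hxqQ : ∀ v ∈ X, xq v ∈ Q) (hexX : ∀ v ∈ Exits, ex v ∈ X)
    (hchilY : ∀ v, v ∈ Y → v ∉ Exits → chil v ∈ Y)
    (hRX : Roots ⊆ X) (hEY : Exits ⊆ Y)
    (hkey : ∀ u v, u ∈ Exits → v ∈ Roots → u = yc v → v = ex u → False) :
    ∀ u v, ¬ (((v ∈ Q ∧ Bp0 u v) ∨ (v ∈ Y ∧ u = qc v) ∨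
        (v ∈ X ∧ v ∈ Roots ∧ u = yc v) ∨ (v ∈ X ∧ v ∉ Roots ∧ u = parX v)) ∧
      ((u ∈ Q ∧ Bm0 u v) ∨ (u ∈ X ∧ v = xq u) ∨
        (u ∈ Y ∧ u ∈ Exits ∧ v = ex u) ∨ (u ∈ Y ∧ u ∉ Exits ∧ v = chil u))) := by
  rintro u v ⟨hp, hm⟩
  rcases hp with ⟨hvQ, hp0⟩ | ⟨hvY, rfl⟩ | ⟨hvX, hvR, rfl⟩ | ⟨hvX, hvR, rfl⟩
  · rcases hm with ⟨huQ, hm0⟩ | ⟨huX, heq⟩ | ⟨huY, huE, heq⟩ | ⟨huY, huE, heq⟩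
    · exact hdisj0 u v ⟨hp0, hm0⟩
    · exact hXQ u huX (hBp0arc u v hp0).1
    · exact hYQ u huY (hBp0arc u v hp0).1
    · exact hYQ u huY (hBp0arc u v hp0).1
  · rcases hm with ⟨huQ, hm0⟩ | ⟨huX, heq⟩ | ⟨huY, huE, heq⟩ | ⟨huY, huE, heq⟩
    · exact hYQ v hvY (hBm0arc _ v hm0).2
    · exact hXQ _ huX (hqcQ v hvY)
    · exact hYQ _ huY (hqcQ v hvY)
    · exact hYQ _ huY (hqcQ v hvY)
  · rcases hm with ⟨huQ, hm0⟩ | ⟨huX, heq⟩ | ⟨huY, huE, heq⟩ | ⟨huY, huE, heq⟩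
    · exact hYQ _ (hycY v hvR) huQ
    · exact hXY' _ huX (hycY v hvR)
    · exact hkey _ v huE hvR rfl heq
    · exact hXY' v hvX (heq ▸ hchilY _ huY huE)
  · rcases hm with ⟨huQ, hm0⟩ | ⟨huX, heq⟩ | ⟨huY, huE, heq⟩ | ⟨huY, huE, heq⟩
    · exact hXQ _ (hparX v hvX hvR) huQ
    · exact hXQ v hvX (heq ▸ hxqQ _ huX)
    · exact hXY' _ (hparX v hvX hvR) huY
    · exact hXY' _ (hparX v hvX hvR) huY

end Aux2b
section Aux3

open Relation

variable {V : Type*}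

theorem main_case1 [Fintype V] (D : V → V → Prop)
    (Q : Set V) (hQ : HasGoodPairOn D Q)
    (X Y : Set V) (hX : X = NMinus D Q) (hY : Y = NPlus D Q)
    (hXY : X ∩ Y = ∅) (hcover : X ∪ Y = Set.univ \ Q)
    (X1 : Set V) (hX1 : IsInitialSC D X X1) (hX1d : 1 ≤ dInFrom D Y X1)
    (hXd : ∀ C, IsInitialSC D X C → C ≠ X1 → 2 ≤ dInFrom D Y C)
    (hYd : ∀ C, IsTerminalSC D Y C → 2 ≤ dOutTo D X C) :
    HasGoodPair D := by
  classical
  obtain ⟨Bp0, Bm0, r, s, hBp0, hBm0, hdisj0⟩ := hQ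
  -- region facts
  have hXQ : ∀ v ∈ X, v ∉ Q := by
    intro v hv hvQ
    have h : v ∈ X ∪ Y := Or.inl hv
    rw [hcover] at h; exact h.2 hvQ
  have hYQ : ∀ v ∈ Y, v ∉ Q := by
    intro v hv hvQ
    have h : v ∈ X ∪ Y := Or.inr hv
    rw [hcover] at h; exact h.2 hvQ
  have hXY' : ∀ v ∈ X, v ∉ Y := by
    intro v hv hv'
    have h : v ∈ X ∩ Y := ⟨hv, hv'⟩
    rw [hXY] at h; exact h
  have hYX : ∀ v ∈ Y, v ∉ X := fun v hv hv' => hXY' v hv' hv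
  have hpart : ∀ v, v ∈ Q ∨ v ∈ X ∨ v ∈ Y := by
    intro v
    by_cases hvQ : v ∈ Q
    · exact Or.inl hvQ
    · have h : v ∈ X ∪ Y := by rw [hcover]; exact ⟨trivial, hvQ⟩
      rcases h with h | h
      · exact Or.inr (Or.inl h)
      · exact Or.inr (Or.inr h)
  have hpart' : ∀ v, v ∈ Q ∨ v ∈ Y ∨ v ∈ X := by
    intro v; rcases hpart v with h | h | h
    · exact Or.inl h
    · exact Or.inr (Or.inr h)
    · exact Or.inr (Or.inl h)
  -- Hall marriage setup
  let Ic := {C : Set V // IsInitialSC D X C}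
  let Tc := {C : Set V // IsTerminalSC D Y C}
  let tA : Set V → Finset (V × V) :=
    fun C => (Set.toFinite {p : V × V | p.1 ∈ Y ∧ p.2 ∈ C ∧ D p.1 p.2}).toFinset
  let tB : Set V → Finset (V × V) :=
    fun C => (Set.toFinite {p : V × V | p.1 ∈ C ∧ p.2 ∈ X ∧ D p.1 p.2}).toFinset
  let t : Ic ⊕ Tc → Finset (V × V) := fun i =>
    match i with
    | Sum.inl C => tA C.1
    | Sum.inr C => tB C.1
  have hcardA : ∀ C : Set V, dInFrom D Y C ≤ (tA C).card := by
    intro C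
    rw [show (tA C).card = {p : V × V | p.1 ∈ Y ∧ p.2 ∈ C ∧ D p.1 p.2}.ncard from
      (Set.ncard_eq_toFinset_card _ (Set.toFinite _)).symm]
    apply Set.ncard_le_ncard_of_injOn
      (fun y => (y, if h : ∃ c ∈ C, D y c then h.choose else y))
    · rintro y ⟨hyY, hc⟩
      simp only [Set.mem_setOf_eq, dif_pos hc]
      exact ⟨hyY, hc.choose_spec.1, hc.choose_spec.2⟩
    · intro a _ b _ hab
      exact congrArg Prod.fst hab
  have hcardB : ∀ C : Set V, dOutTo D X C ≤ (tB C).card := by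
    intro C
    rw [show (tB C).card = {p : V × V | p.1 ∈ C ∧ p.2 ∈ X ∧ D p.1 p.2}.ncard from
      (Set.ncard_eq_toFinset_card _ (Set.toFinite _)).symm]
    apply Set.ncard_le_ncard_of_injOn
      (fun x => ((if h : ∃ c ∈ C, D c x then h.choose else x), x))
    · rintro x ⟨hxX, hc⟩
      simp only [Set.mem_setOf_eq, dif_pos hc]
      exact ⟨hc.choose_spec.1, hxX, hc.choose_spec.2⟩
    · intro a _ b _ hab
      exact congrArg Prod.snd hab
  have hdisjA : ∀ C C' : Ic, C ≠ C' → Disjoint (tA C.1) (tA C'.1) := by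
    intro C C' hne
    rw [Finset.disjoint_left]
    intro p hp hp'
    rw [Set.Finite.mem_toFinset] at hp hp'
    exact hne (Subtype.ext (sc_eq_of_mem C.2.1 C'.2.1 hp.2.1 hp'.2.1))
  have hdisjB : ∀ C C' : Tc, C ≠ C' → Disjoint (tB C.1) (tB C'.1) := by
    intro C C' hne
    rw [Finset.disjoint_left]
    intro p hp hp'
    rw [Set.Finite.mem_toFinset] at hp hp'
    exact hne (Subtype.ext (sc_eq_of_mem C.2.1 C'.2.1 hp.1 hp'.1))
  have hall : ∀ sF : Finset (Ic ⊕ Tc), sF.card ≤ (sF.biUnion t).card := by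
    intro sF
    have hcards : sF.toLeft.card + sF.toRight.card = sF.card :=
      Finset.card_toLeft_add_card_toRight
    have hsubL : (sF.toLeft).biUnion (fun C => tA C.1) ⊆ sF.biUnion t := by
      intro p hp
      rw [Finset.mem_biUnion] at hp ⊢
      obtain ⟨C, hC, hpC⟩ := hp
      exact ⟨Sum.inl C, Finset.mem_toLeft.mp hC, hpC⟩
    have hsubR : (sF.toRight).biUnion (fun C => tB C.1) ⊆ sF.biUnion t := by
      intro p hp
      rw [Finset.mem_biUnion] at hp ⊢
      obtain ⟨C, hC, hpC⟩ := hp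
      exact ⟨Sum.inr C, Finset.mem_toRight.mp hC, hpC⟩
    have hsumL : ((sF.toLeft).biUnion (fun C => tA C.1)).card
        = ∑ C ∈ sF.toLeft, (tA C.1).card :=
      Finset.card_biUnion (fun C _ C' _ hne => hdisjA C C' hne)
    have hsumR : ((sF.toRight).biUnion (fun C => tB C.1)).card
        = ∑ C ∈ sF.toRight, (tB C.1).card :=
      Finset.card_biUnion (fun C _ C' _ hne => hdisjB C C' hne)
    have hboundR : 2 * sF.toRight.card ≤ ∑ C ∈ sF.toRight, (tB C.1).card := by
      have h2 : ∀ C ∈ sF.toRight, 2 ≤ (tB (C : Tc).1).card :=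
        fun C _ => le_trans (hYd C.1 C.2) (hcardB C.1)
      calc 2 * sF.toRight.card = ∑ _C ∈ sF.toRight, 2 := by
            rw [Finset.sum_const, smul_eq_mul, mul_comm]
        _ ≤ _ := Finset.sum_le_sum h2
    have hboundL : 2 * sF.toLeft.card ≤ (∑ C ∈ sF.toLeft, (tA C.1).card) + 1 := by
      by_cases hmem : (⟨X1, hX1⟩ : Ic) ∈ sF.toLeft
      · have herase : ∀ C ∈ sF.toLeft.erase ⟨X1, hX1⟩, 2 ≤ (tA (C : Ic).1).card := by
          intro C hC
          have hne : C ≠ ⟨X1, hX1⟩ := (Finset.mem_erase.mp hC).1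
          have hne' : C.1 ≠ X1 := fun h => hne (Subtype.ext h)
          exact le_trans (hXd C.1 C.2 hne') (hcardA C.1)
        have h1 : 1 ≤ (tA X1).card := le_trans hX1d (hcardA X1)
        have hsum : ∑ C ∈ sF.toLeft, (tA C.1).card
            = (∑ C ∈ sF.toLeft.erase ⟨X1, hX1⟩, (tA C.1).card) + (tA X1).card := by
          rw [Finset.sum_erase_add _ _ hmem]
        have h2 : 2 * (sF.toLeft.erase ⟨X1, hX1⟩).card
            ≤ ∑ C ∈ sF.toLeft.erase ⟨X1, hX1⟩, (tA C.1).card := by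
          calc 2 * (sF.toLeft.erase ⟨X1, hX1⟩).card
              = ∑ _C ∈ sF.toLeft.erase ⟨X1, hX1⟩, 2 := by
                rw [Finset.sum_const, smul_eq_mul, mul_comm]
            _ ≤ _ := Finset.sum_le_sum herase
        have h3 : (sF.toLeft.erase ⟨X1, hX1⟩).card + 1 = sF.toLeft.card :=
          Finset.card_erase_add_one hmem
        omega
      · have hge : ∀ C ∈ sF.toLeft, 2 ≤ (tA (C : Ic).1).card := by
          intro C hC
          have hne : C.1 ≠ X1 := by
            intro h
            exact hmem (by rwa [show (⟨X1, hX1⟩ : Ic) = C from (Subtype.ext h).symm])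
          exact le_trans (hXd C.1 C.2 hne) (hcardA C.1)
        calc 2 * sF.toLeft.card = ∑ _C ∈ sF.toLeft, 2 := by
              rw [Finset.sum_const, smul_eq_mul, mul_comm]
          _ ≤ ∑ C ∈ sF.toLeft, (tA C.1).card := Finset.sum_le_sum hge
          _ ≤ _ := Nat.le_succ_of_le le_rfl
    have hA : 2 * sF.toLeft.card ≤ (sF.biUnion t).card + 1 := by
      have := Finset.card_le_card hsubL
      omega
    have hB : 2 * sF.toRight.card ≤ (sF.biUnion t).card := by
      have := Finset.card_le_card hsubR
      omega
    omega
  obtain ⟨f, hfinj, hfmem⟩ := (Finset.all_card_le_biUnion_card_iff_exists_injective t).mp hall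
  have hfA : ∀ C : Ic, (f (Sum.inl C)).1 ∈ Y ∧ (f (Sum.inl C)).2 ∈ C.1 ∧
      D (f (Sum.inl C)).1 (f (Sum.inl C)).2 := by
    intro C
    have := hfmem (Sum.inl C)
    rwa [Set.Finite.mem_toFinset] at this
  have hfB : ∀ C : Tc, (f (Sum.inr C)).1 ∈ C.1 ∧ (f (Sum.inr C)).2 ∈ X ∧
      D (f (Sum.inr C)).1 (f (Sum.inr C)).2 := by
    intro C
    have := hfmem (Sum.inr C)
    rwa [Set.Finite.mem_toFinset] at this
  -- root/exit sets and their entry arcs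
  let Roots : Set V := {v | ∃ C : Ic, (f (Sum.inl C)).2 = v}
  let yc : V → V := fun v =>
    if h : ∃ C : Ic, (f (Sum.inl C)).2 = v then (f (Sum.inl h.choose)).1 else v
  let Exits : Set V := {v | ∃ C : Tc, (f (Sum.inr C)).1 = v}
  let ex : V → V := fun v =>
    if h : ∃ C : Tc, (f (Sum.inr C)).1 = v then (f (Sum.inr h.choose)).2 else v
  have hycP : ∀ v ∈ Roots, (yc v ∈ Y ∧ D (yc v) v) ∧ ∃ C : Ic, (yc v, v) = f (Sum.inl C) := by
    intro v hv
    have hv' : ∃ C : Ic, (f (Sum.inl C)).2 = v := hv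
    have hyc : yc v = (f (Sum.inl hv'.choose)).1 := dif_pos hv'
    have h2 := hv'.choose_spec
    have h3 := hfA hv'.choose
    rcases hfp : f (Sum.inl hv'.choose) with ⟨a, b⟩
    rw [hfp] at h2 h3 hyc
    subst h2
    exact ⟨⟨hyc ▸ h3.1, hyc ▸ h3.2.2⟩, hv'.choose, by rw [hyc, hfp]⟩
  have hexP : ∀ v ∈ Exits, (ex v ∈ X ∧ D v (ex v)) ∧ ∃ C : Tc, (v, ex v) = f (Sum.inr C) := by
    intro v hv
    have hv' : ∃ C : Tc, (f (Sum.inr C)).1 = v := hv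
    have hex : ex v = (f (Sum.inr hv'.choose)).2 := dif_pos hv'
    have h2 := hv'.choose_spec
    have h3 := hfB hv'.choose
    rcases hfp : f (Sum.inr hv'.choose) with ⟨a, b⟩
    rw [hfp] at h2 h3 hex
    subst h2
    exact ⟨⟨hex ▸ h3.2.1, hex ▸ h3.2.2⟩, hv'.choose, by rw [hex, hfp]⟩
  have hRX : Roots ⊆ X := by
    rintro v ⟨C, hC⟩
    exact sc_subset C.2.1 (hC ▸ (hfA C).2.1)
  have hEY : Exits ⊆ Y := by
    rintro v ⟨C, hC⟩
    exact sc_subset C.2.1 (hC ▸ (hfB C).1)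
  -- arcs into Q and from Q
  have hqcE : ∀ v, v ∈ Y → ∃ q, q ∈ Q ∧ D q v := by
    intro v hv
    rw [hY] at hv
    obtain ⟨_, q, hq, hD⟩ := hv
    exact ⟨q, hq, hD⟩
  choose! qc hqc1 hqc2 using hqcE
  have hxqE : ∀ v, v ∈ X → ∃ q, q ∈ Q ∧ D v q := by
    intro v hv
    rw [hX] at hv
    obtain ⟨_, q, hq, hD⟩ := hv
    exact ⟨q, hq, hD⟩
  choose! xq hxq1 hxq2 using hxqE
  -- spanning forests of X (from Roots) and of Y (to Exits)
  have hreachX : ∀ v ∈ X, ∃ u ∈ Roots, ReachIn D X u v := by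
    intro v hv
    obtain ⟨C, hCinit, w, hwC, hwv⟩ := exists_initial_reach D X hv
    refine ⟨(f (Sum.inl ⟨C, hCinit⟩)).2, ⟨⟨C, hCinit⟩, rfl⟩, ?_⟩
    have hm : (f (Sum.inl ⟨C, hCinit⟩)).2 ∈ C := (hfA ⟨C, hCinit⟩).2.1
    exact (sc_reach hCinit.1 hm hwC).trans hwv
  obtain ⟨parX, hparX, hforX⟩ := exists_forest D X Roots hreachX
  have hreachY : ∀ v ∈ Y, ∃ u ∈ Exits, ReachIn (fun a b => D b a) Y u v := by
    intro v hv
    obtain ⟨C, hCinit, w, hwC, hwv⟩ := exists_initial_reach (fun a b => D b a) Y hv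
    have hCterm : IsTerminalSC D Y C := isInitialSC_flip.mp hCinit
    refine ⟨(f (Sum.inr ⟨C, hCterm⟩)).1, ⟨⟨C, hCterm⟩, rfl⟩, ?_⟩
    have hm : (f (Sum.inr ⟨C, hCterm⟩)).1 ∈ C := (hfB ⟨C, hCterm⟩).1
    exact (sc_reach hCinit.1 hm hwC).trans hwv
  obtain ⟨chil, hchil, hforY⟩ := exists_forest (fun a b => D b a) Y Exits hreachY
  -- assemble the two branchings
  have hBplus := build_out D Bp0 Q X Y r hBp0 hpart hXQ hYQ hXY'
    qc (fun v hv => ⟨hqc1 v hv, hqc2 v hv⟩) Roots hRX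
    yc (fun v hv => (hycP v hv).1) parX hparX hforX
  have hBm0' : IsOutBranchingOn (fun a b => D b a) (fun a b => Bm0 b a) Q s := in_flip hBm0
  have hBminus' := build_out (fun a b => D b a) (fun a b => Bm0 b a) Q Y X s hBm0'
    hpart' hYQ hXQ hYX
    xq (fun v hv => ⟨hxq1 v hv, hxq2 v hv⟩) Exits hEY
    ex (fun v hv => (hexP v hv).1) chil hchil hforY
  have hBminus : IsInBranchingOn D
      (fun u v => (u ∈ Q ∧ Bm0 u v) ∨ (u ∈ X ∧ v = xq u) ∨
        (u ∈ Y ∧ u ∈ Exits ∧ v = ex u) ∨ (u ∈ Y ∧ u ∉ Exits ∧ v = chil u))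
      Set.univ s := out_flip hBminus'
  have hkey : ∀ u v, u ∈ Exits → v ∈ Roots → u = yc v → v = ex u → False := by
    intro u v huE hvR h1 h2
    obtain ⟨C, hC⟩ := (hycP v hvR).2
    obtain ⟨C', hC'⟩ := (hexP u huE).2
    rw [← h1] at hC
    rw [← h2] at hC'
    have : f (Sum.inl C) = f (Sum.inr C') := by rw [← hC, ← hC']
    exact Sum.inl_ne_inr (hfinj this)
  refine ⟨_, _, r, s, hBplus, hBminus, ?_⟩
  exact disj_helper D Bp0 Bm0 Q X Y Roots Exits qc yc parX xq ex chil hdisj0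
    (fun u v h => ⟨(hBp0.2.1 u v h).2.1, (hBp0.2.1 u v h).2.2⟩)
    (fun u v h => ⟨(hBm0.2.1 u v h).2.1, (hBm0.2.1 u v h).2.2⟩)
    hXQ hYQ hXY'
    (fun v hv => hqc1 v hv) (fun v hv => ((hycP v hv).1).1)
    (fun v hv hv' => (hparX v hv hv').1)
    (fun v hv => hxq1 v hv) (fun v hv => ((hexP v hv).1).1)
    (fun v hv hv' => (hchil v hv hv').1)
    hRX hEY hkey

end Aux3

/-- If `Q` is a subdigraph of `D` with a good pair, `X = N_D^-(Q)` and
`Y = N_D^+(Q)` partition the rest of the vertices, and the initial strong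
components of `D[X]` and terminal strong components of `D[Y]` satisfy the
degree conditions (1) or (2), then `D` has a good pair. -/
theorem hasGoodPair_of_degree_conditions {V : Type*} [Fintype V]
    (D : V → V → Prop) (hloop : ∀ v, ¬ D v v)
    (Q : Set V) (hQ : HasGoodPairOn D Q)
    (X Y : Set V) (hX : X = NMinus D Q) (hY : Y = NPlus D Q)
    (hXY : X ∩ Y = ∅) (hcover : X ∪ Y = Set.univ \ Q)
    (hcond :
      (∃ X1, IsInitialSC D X X1 ∧ 1 ≤ dInFrom D Y X1 ∧
        (∀ C, IsInitialSC D X C → C ≠ X1 → 2 ≤ dInFrom D Y C) ∧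
        (∀ C, IsTerminalSC D Y C → 2 ≤ dOutTo D X C)) ∨
      (∃ Y1, IsTerminalSC D Y Y1 ∧ 1 ≤ dOutTo D X Y1 ∧
        (∀ C, IsTerminalSC D Y C → C ≠ Y1 → 2 ≤ dOutTo D X C) ∧
        (∀ C, IsInitialSC D X C → 2 ≤ dInFrom D Y C))) :
    HasGoodPair D := by

  rcases hcond with ⟨X1, hX1, h1, h2, h3⟩ | ⟨Y1, hY1, h1, h2, h3⟩
  · exact main_case1 D Q hQ X Y hX hY hXY hcover X1 hX1 h1 h2 h3
  · have hflip := main_case1 (fun a b => D b a) Q (hasGoodPairOn_flip hQ) Y X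
      hY hX (by rw [Set.inter_comm]; exact hXY) (by rw [Set.union_comm]; exact hcover)
      Y1 (isInitialSC_flip.mpr hY1) h1
      (fun C hC hne => h2 C (isInitialSC_flip.mp hC) hne)
      (fun C hC => h3 C ((isInitialSC_flip (D := fun a b => D b a)).mpr hC))
    exact hasGoodPairOn_flip hflip
end

section
/- Let D be a 2-arc-strong digraph that contains a subdigraph Q with a good pair. Set X = N_D^-(Q) and Y = N_D^+(Q). If X ∩ Y = ∅ and X ∪ Y = V(D) − V(Q), then D has a good pair. -/
/-!
Basic notions for finite digraphs (modelled as an arc relation `D : V → V → Prop`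
on a finite vertex type; absence of loops is an explicit hypothesis, parallel
arcs are impossible in this model).
-/

variable {V : Type*}

def stepSet (E : V → V → Prop) (r : V) : ℕ → V → Prop
  | 0 => fun v => v = r
  | n+1 => fun v => stepSet E r n v ∨ ∃ u, stepSet E r n u ∧ E u v

theorem stepSet_of_reach {E : V → V → Prop} {r v : V}
    (h : Relation.ReflTransGen E r v) : ∃ n, stepSet E r n v := by
  induction h with
  | refl => exact ⟨0, rfl⟩
  | tail _ hE ih => obtain ⟨n, hn⟩ := ih; exact ⟨n+1, Or.inr ⟨_, hn, hE⟩⟩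

theorem exists_outBranching (D E : V → V → Prop) (r : V)
    (hE : ∀ u v, E u v → D u v) (hreach : ∀ v, Relation.ReflTransGen E r v) :
    ∃ B : V → V → Prop, IsOutBranchingOn D B Set.univ r ∧ ∀ u v, B u v → E u v := by
  classical
  have hex : ∀ v, ∃ n, stepSet E r n v := fun v => stepSet_of_reach (hreach v)
  have key : ∀ v, v ≠ r → ∃ u, E u v ∧ Nat.find (hex u) < Nat.find (hex v) := by
    intro v hv
    have hspec : stepSet E r (Nat.find (hex v)) v := Nat.find_spec (hex v)
    have h0 : Nat.find (hex v) ≠ 0 := by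
      intro h; rw [h] at hspec; exact hv hspec
    obtain ⟨m, hm⟩ : ∃ m, Nat.find (hex v) = m + 1 := ⟨Nat.find (hex v) - 1, by omega⟩
    rw [hm] at hspec
    have hmin : ¬ stepSet E r m v := Nat.find_min (hex v) (by omega)
    rcases hspec with h | ⟨u, hu, huv⟩
    · exact absurd h hmin
    · exact ⟨u, huv, by have := Nat.find_le (h := hex u) hu; omega⟩
  choose p hpE hpd using key
  refine ⟨fun u v => ∃ h : v ≠ r, u = p v h, ⟨trivial, ?_, ?_, ?_, ?_⟩, ?_⟩
  · rintro u v ⟨h, rfl⟩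
    exact ⟨hE _ _ (hpE v h), trivial, trivial⟩
  · rintro u ⟨h, -⟩
    exact h rfl
  · intro v _ hv
    exact ⟨p v hv, ⟨hv, rfl⟩, fun u ⟨h', e⟩ => e⟩
  · have main : ∀ n v, Nat.find (hex v) ≤ n → Relation.ReflTransGen (fun u v => ∃ h : v ≠ r, u = p v h) r v := by
      intro n
      induction n with
      | zero =>
        intro v hv
        have hspec : stepSet E r (Nat.find (hex v)) v := Nat.find_spec (hex v)
        have h0 : Nat.find (hex v) = 0 := by omega
        rw [h0] at hspec
        subst hspec
        exact Relation.ReflTransGen.refl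
      | succ n ih =>
        intro v hv
        by_cases hvr : v = r
        · subst hvr; exact Relation.ReflTransGen.refl
        · have h1 := hpd v hvr
          exact (ih _ (by omega)).tail ⟨hvr, rfl⟩
    exact fun v _ => main _ v le_rfl
  · rintro u v ⟨h, rfl⟩
    exact hpE v h

theorem exists_inBranching (D E : V → V → Prop) (s : V)
    (hE : ∀ u v, E u v → D u v) (hreach : ∀ v, Relation.ReflTransGen E v s) :
    ∃ B : V → V → Prop, IsInBranchingOn D B Set.univ s ∧ ∀ u v, B u v → E u v := by
  obtain ⟨B, hB, hBE⟩ := exists_outBranching (fun a b => D b a) (fun a b => E b a) s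
    (fun u v h => hE v u h)
    (fun v => (Relation.reflTransGen_swap (r := E)).mpr (hreach v))
  refine ⟨fun a b => B b a, ⟨hB.1, fun u v h => ⟨(hB.2.1 v u h).1, trivial, trivial⟩,
    fun v h => hB.2.2.1 v h, fun u hu hus => hB.2.2.2.1 u hu hus,
    fun u _ => (Relation.reflTransGen_swap (r := fun a b => B b a)).mp (hB.2.2.2.2 u trivial)⟩,
    fun u v h => hBE v u h⟩

def reachSetTo (D : V → V → Prop) (X : Set V) (x : V) : Set V :=
  {b | b ∈ X ∧ ReachIn D X b x}

def reachSetFrom (D : V → V → Prop) (Y : Set V) (y : V) : Set V :=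
  {c | c ∈ Y ∧ ReachIn D Y y c}

def ClosedL (D : V → V → Prop) (X : Set V) (R : Set V) : Prop :=
  (∃ x ∈ X, R = reachSetTo D X x) ∧ ∀ b ∈ R, reachSetTo D X b = R

def ClosedR (D : V → V → Prop) (Y : Set V) (S : Set V) : Prop :=
  (∃ y ∈ Y, S = reachSetFrom D Y y) ∧ ∀ c ∈ S, reachSetFrom D Y c = S

theorem exists_closedL [Fintype V] (D : V → V → Prop) (X : Set V) :
    ∀ x ∈ X, ∃ R, ClosedL D X R ∧ R ⊆ reachSetTo D X x := by
  have H : ∀ n (x : V), x ∈ X → (reachSetTo D X x).ncard ≤ n →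
      ∃ R, ClosedL D X R ∧ R ⊆ reachSetTo D X x := by
    intro n
    induction n with
    | zero =>
      intro x hx hc
      have h1 : x ∈ reachSetTo D X x := ⟨hx, Relation.ReflTransGen.refl⟩
      have := (Set.ncard_pos (s := reachSetTo D X x) (Set.toFinite _)).mpr ⟨x, h1⟩
      omega
    | succ n ih =>
      intro x hx hc
      by_cases hcl : ∀ b ∈ reachSetTo D X x, reachSetTo D X b = reachSetTo D X x
      · exact ⟨_, ⟨⟨x, hx, rfl⟩, hcl⟩, subset_rfl⟩
      · push_neg at hcl
        obtain ⟨b, hb, hne⟩ := hcl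
        have hsub : reachSetTo D X b ⊆ reachSetTo D X x :=
          fun c hc' => ⟨hc'.1, hc'.2.trans hb.2⟩
        have hlt : (reachSetTo D X b).ncard < (reachSetTo D X x).ncard :=
          Set.ncard_lt_ncard (ssubset_of_subset_of_ne hsub hne) (Set.toFinite _)
        obtain ⟨R, hR, hRs⟩ := ih b hb.1 (by omega)
        exact ⟨R, hR, hRs.trans hsub⟩
  intro x hx
  exact H _ x hx le_rfl

theorem exists_closedR [Fintype V] (D : V → V → Prop) (Y : Set V) :
    ∀ y ∈ Y, ∃ S, ClosedR D Y S ∧ S ⊆ reachSetFrom D Y y := by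
  have H : ∀ n (y : V), y ∈ Y → (reachSetFrom D Y y).ncard ≤ n →
      ∃ S, ClosedR D Y S ∧ S ⊆ reachSetFrom D Y y := by
    intro n
    induction n with
    | zero =>
      intro y hy hc
      have h1 : y ∈ reachSetFrom D Y y := ⟨hy, Relation.ReflTransGen.refl⟩
      have := (Set.ncard_pos (s := reachSetFrom D Y y) (Set.toFinite _)).mpr ⟨y, h1⟩
      omega
    | succ n ih =>
      intro y hy hc
      by_cases hcl : ∀ c ∈ reachSetFrom D Y y, reachSetFrom D Y c = reachSetFrom D Y y
      · exact ⟨_, ⟨⟨y, hy, rfl⟩, hcl⟩, subset_rfl⟩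
      · push_neg at hcl
        obtain ⟨b, hb, hne⟩ := hcl
        have hsub : reachSetFrom D Y b ⊆ reachSetFrom D Y y :=
          fun c hc' => ⟨hc'.1, hb.2.trans hc'.2⟩
        have hlt : (reachSetFrom D Y b).ncard < (reachSetFrom D Y y).ncard :=
          Set.ncard_lt_ncard (ssubset_of_subset_of_ne hsub hne) (Set.toFinite _)
        obtain ⟨S, hS, hSs⟩ := ih b hb.1 (by omega)
        exact ⟨S, hS, hSs.trans hsub⟩
  intro y hy
  exact H _ y hy le_rfl

/-- If a 2-arc-strong digraph `D` contains a subdigraph `Q` with a good pair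
such that `N_D^-(Q)` and `N_D^+(Q)` are disjoint and cover all vertices
outside `Q`, then `D` has a good pair. -/
theorem hasGoodPair_of_inOut_partition {V : Type*} [Fintype V]
    (D : V → V → Prop) (hloop : ∀ v, ¬ D v v) (hstrong : TwoArcStrong D)
    (Q : Set V) (hQ : HasGoodPairOn D Q)
    (hXY : NMinus D Q ∩ NPlus D Q = ∅)
    (hcover : NMinus D Q ∪ NPlus D Q = Set.univ \ Q) :
    HasGoodPair D := by
  classical
  obtain ⟨Bp, Bm, r, s, hBp, hBm, hpm⟩ := hQ
  set X := NMinus D Q with hXdef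
  set Y := NPlus D Q with hYdef
  have hrQ : r ∈ Q := hBp.1
  have hsQ : s ∈ Q := hBm.1
  have hXQ : ∀ x ∈ X, x ∉ Q := fun x hx => hx.1
  have hYQ : ∀ y ∈ Y, y ∉ Q := fun y hy => hy.1
  have hXY' : ∀ v, v ∈ X → v ∈ Y → False := by
    intro v h1 h2
    have hv : v ∈ X ∩ Y := ⟨h1, h2⟩
    rw [hXY] at hv
    exact hv
  have hcov : ∀ v, v ∉ Q → v ∈ X ∨ v ∈ Y := by
    intro v hv
    have h : v ∈ X ∪ Y := by rw [hcover]; exact ⟨trivial, hv⟩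
    exact h
  have harcQout : ∀ u ∈ Q, ∀ v, D u v → v ∈ Q ∨ v ∈ Y := by
    intro u hu v hD
    by_cases hv : v ∈ Q
    · exact Or.inl hv
    · exact Or.inr ⟨hv, u, hu, hD⟩
  -- lower bounds on candidate arc sets
  have candL2 : ∀ R : Set V, ClosedL D X R →
      2 ≤ {p : V × V | p.1 ∈ Y ∧ p.2 ∈ R ∧ D p.1 p.2}.ncard := by
    intro R hR
    obtain ⟨⟨x0, hx0, hR0⟩, hcl⟩ := hR
    have hRX : R ⊆ X := by rw [hR0]; exact fun b hb => hb.1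
    have hx0R : x0 ∈ R := by rw [hR0]; exact ⟨hx0, Relation.ReflTransGen.refl⟩
    have hne : (Rᶜ : Set V).Nonempty := ⟨r, fun hr => hXQ r (hRX hr) hrQ⟩
    have hnuniv : (Rᶜ : Set V) ≠ Set.univ :=
      (Set.ne_univ_iff_exists_notMem _).mpr ⟨x0, by simpa using hx0R⟩
    refine le_trans (hstrong Rᶜ hne hnuniv) (Set.ncard_le_ncard ?_ (Set.toFinite _))
    rintro ⟨a, b⟩ ⟨ha, hb, hD⟩
    have hbR : b ∈ R := not_not.mp hb
    have hbX : b ∈ X := hRX hbR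
    have haY : a ∈ Y := by
      by_cases haQ : a ∈ Q
      · rcases harcQout a haQ b hD with h | h
        · exact absurd h (hXQ b hbX)
        · exact (hXY' b hbX h).elim
      · rcases hcov a haQ with haX | haY
        · exfalso
          have haR : a ∈ R := by
            rw [← hcl b hbR]
            exact ⟨haX, Relation.ReflTransGen.single ⟨hD, haX, hbX⟩⟩
          exact ha haR
        · exact haY
    exact ⟨haY, hbR, hD⟩
  have candR2 : ∀ S : Set V, ClosedR D Y S →
      2 ≤ {p : V × V | p.1 ∈ S ∧ p.2 ∈ X ∧ D p.1 p.2}.ncard := by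
    intro S hS
    obtain ⟨⟨y0, hy0, hS0⟩, hcl⟩ := hS
    have hSY : S ⊆ Y := by rw [hS0]; exact fun c hc => hc.1
    have hy0S : y0 ∈ S := by rw [hS0]; exact ⟨hy0, Relation.ReflTransGen.refl⟩
    have hne : S.Nonempty := ⟨y0, hy0S⟩
    have hnuniv : S ≠ Set.univ :=
      (Set.ne_univ_iff_exists_notMem _).mpr ⟨r, fun hr => hYQ r (hSY hr) hrQ⟩
    refine le_trans (hstrong S hne hnuniv) (Set.ncard_le_ncard ?_ (Set.toFinite _))
    rintro ⟨a, b⟩ ⟨ha, hb, hD⟩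
    have haY : a ∈ Y := hSY ha
    have hbX : b ∈ X := by
      by_cases hbQ : b ∈ Q
      · exfalso
        have haX : a ∈ X := ⟨hYQ a haY, b, hbQ, hD⟩
        exact hXY' a haX haY
      · rcases hcov b hbQ with hbX | hbY
        · exact hbX
        · exfalso
          have hbS : b ∈ S := by
            rw [← hcl a ha]
            exact ⟨hbY, Relation.ReflTransGen.single ⟨hD, haY, hbY⟩⟩
          exact hb hbS
    exact ⟨ha, hbX, hD⟩
  -- Hall's theorem to pick distinct connector arcs
  set candl : {R : Set V // ClosedL D X R} → Finset (V × V) := fun R =>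
    (Set.toFinite {p : V × V | p.1 ∈ Y ∧ p.2 ∈ R.1 ∧ D p.1 p.2}).toFinset with hcandl
  set candr : {S : Set V // ClosedR D Y S} → Finset (V × V) := fun S =>
    (Set.toFinite {p : V × V | p.1 ∈ S.1 ∧ p.2 ∈ X ∧ D p.1 p.2}).toFinset with hcandr
  set cand : {R : Set V // ClosedL D X R} ⊕ {S : Set V // ClosedR D Y S} → Finset (V × V) :=
    Sum.elim candl candr with hcand
  have hcard2 : ∀ i, 2 ≤ (cand i).card := by
    intro i
    rcases i with R | S
    · have := candL2 R.1 R.2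
      rwa [Set.ncard_eq_toFinset_card _ (Set.toFinite _)] at this
    · have := candR2 S.1 S.2
      rwa [Set.ncard_eq_toFinset_card _ (Set.toFinite _)] at this
  have hall : ∀ t : Finset ({R : Set V // ClosedL D X R} ⊕ {S : Set V // ClosedR D Y S}),
      t.card ≤ (t.biUnion cand).card := by
    intro t
    have h2 : 2 * t.card ≤ (t.sigma fun i => cand i).card := by
      rw [Finset.card_sigma]
      calc 2 * t.card = ∑ _i ∈ t, 2 := by
            rw [Finset.sum_const, smul_eq_mul, mul_comm]
        _ ≤ ∑ i ∈ t, (cand i).card := Finset.sum_le_sum fun i _ => hcard2 i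
    have h3 : (t.sigma fun i => cand i).card ≤ 2 * (t.biUnion cand).card := by
      refine Finset.card_le_mul_card_image_of_maps_to
        (f := fun x : Σ _i : {R : Set V // ClosedL D X R} ⊕ {S : Set V // ClosedR D Y S},
          V × V => x.2) ?_ 2 ?_
      · intro a ha
        rw [Finset.mem_sigma] at ha
        exact Finset.mem_biUnion.mpr ⟨a.1, ha.1, ha.2⟩
      · intro b hb
        refine le_trans (Finset.card_le_card_of_injOn (fun x => x.1.isLeft)
          (fun a _ => Finset.mem_univ _) ?_) (by simp)
        rintro ⟨i1, p1⟩ h1 ⟨i2, p2⟩ h2 heq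
        simp only [Finset.coe_filter, Set.mem_setOf_eq, Finset.mem_sigma] at h1 h2
        obtain ⟨⟨ht1, hm1⟩, he1⟩ := h1
        obtain ⟨⟨ht2, hm2⟩, he2⟩ := h2
        dsimp only at he1 he2 heq hm1 hm2 ⊢
        obtain rfl : p2 = p1 := he2.trans he1.symm
        rcases i1 with R1 | S1 <;> rcases i2 with R2 | S2
        · simp only [hcand, Sum.elim_inl, hcandl, Set.Finite.mem_toFinset,
            Set.mem_setOf_eq] at hm1 hm2
          have hR : R1 = R2 := Subtype.ext
            ((R1.2.2 p2.2 hm1.2.1).symm.trans (R2.2.2 p2.2 hm2.2.1))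
          rw [hR]
        · simp at heq
        · simp at heq
        · simp only [hcand, Sum.elim_inr, hcandr, Set.Finite.mem_toFinset,
            Set.mem_setOf_eq] at hm1 hm2
          have hS : S1 = S2 := Subtype.ext
            ((S1.2.2 p2.1 hm1.1).symm.trans (S2.2.2 p2.1 hm2.1))
          rw [hS]
    omega
  obtain ⟨f, hfinj, hfmem⟩ := (Finset.all_card_le_biUnion_card_iff_exists_injective cand).mp hall
  have hmemL : ∀ i : {R : Set V // ClosedL D X R},
      (f (Sum.inl i)).1 ∈ Y ∧ (f (Sum.inl i)).2 ∈ i.1 ∧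
        D (f (Sum.inl i)).1 (f (Sum.inl i)).2 := by
    intro i
    have h := hfmem (Sum.inl i)
    simp only [hcand, Sum.elim_inl, hcandl, Set.Finite.mem_toFinset, Set.mem_setOf_eq] at h
    exact h
  have hmemR : ∀ j : {S : Set V // ClosedR D Y S},
      (f (Sum.inr j)).1 ∈ j.1 ∧ (f (Sum.inr j)).2 ∈ X ∧
        D (f (Sum.inr j)).1 (f (Sum.inr j)).2 := by
    intro j
    have h := hfmem (Sum.inr j)
    simp only [hcand, Sum.elim_inr, hcandr, Set.Finite.mem_toFinset, Set.mem_setOf_eq] at h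
    exact h
  -- the two spanning arc sets
  set Fp : V → V → Prop := fun u v => ∃ i, f (Sum.inl i) = (u, v) with hFpdef
  set Fm : V → V → Prop := fun u v => ∃ j, f (Sum.inr j) = (u, v) with hFmdef
  set Ep : V → V → Prop := fun u v =>
    Bp u v ∨ (u ∈ Q ∧ v ∈ Y ∧ D u v) ∨ (u ∈ X ∧ v ∈ X ∧ D u v) ∨ Fp u v with hEpdef
  set Em : V → V → Prop := fun u v =>
    Bm u v ∨ (u ∈ X ∧ v ∈ Q ∧ D u v) ∨ (u ∈ Y ∧ v ∈ Y ∧ D u v) ∨ Fm u v with hEmdef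
  have hFp : ∀ u v, Fp u v → u ∈ Y ∧ v ∈ X ∧ D u v := by
    rintro u v ⟨i, hi⟩
    obtain ⟨h1, h2, h3⟩ := hmemL i
    rw [hi] at h1 h2 h3
    obtain ⟨⟨x0, hx0, hR0⟩, -⟩ := i.2
    have : v ∈ X := by
      have := h2
      rw [hR0] at this
      exact this.1
    exact ⟨h1, this, h3⟩
  have hFm : ∀ u v, Fm u v → u ∈ Y ∧ v ∈ X ∧ D u v := by
    rintro u v ⟨j, hj⟩
    obtain ⟨h1, h2, h3⟩ := hmemR j
    rw [hj] at h1 h2 h3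
    obtain ⟨⟨y0, hy0, hS0⟩, -⟩ := j.2
    have : u ∈ Y := by
      have := h1
      rw [hS0] at this
      exact this.1
    exact ⟨this, h2, h3⟩
  have hEpD : ∀ u v, Ep u v → D u v := by
    rintro u v (h | h | h | h)
    · exact (hBp.2.1 u v h).1
    · exact h.2.2
    · exact h.2.2
    · exact (hFp u v h).2.2
  have hEmD : ∀ u v, Em u v → D u v := by
    rintro u v (h | h | h | h)
    · exact (hBm.2.1 u v h).1
    · exact h.2.2
    · exact h.2.2
    · exact (hFm u v h).2.2
  -- reachability from r in Ep
  have reachQp : ∀ v ∈ Q, Relation.ReflTransGen Ep r v := fun v hv =>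
    Relation.ReflTransGen.mono (fun a b h => Or.inl h) _ _ (hBp.2.2.2.2 v hv)
  have reachYp : ∀ v ∈ Y, Relation.ReflTransGen Ep r v := by
    intro v hv
    obtain ⟨hvQ, q, hq, hD⟩ := id hv
    exact (reachQp q hq).tail (Or.inr (Or.inl ⟨hq, hv, hD⟩))
  have reachXp : ∀ v ∈ X, Relation.ReflTransGen Ep r v := by
    intro v hv
    obtain ⟨R, hR, hsub⟩ := exists_closedL D X v hv
    obtain ⟨h1, h2, h3⟩ := hmemL ⟨R, hR⟩
    have harc : Ep (f (Sum.inl ⟨R, hR⟩)).1 (f (Sum.inl ⟨R, hR⟩)).2 :=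
      Or.inr (Or.inr (Or.inr ⟨⟨R, hR⟩, rfl⟩))
    have hb := hsub h2
    have hrest : Relation.ReflTransGen Ep (f (Sum.inl ⟨R, hR⟩)).2 v :=
      Relation.ReflTransGen.mono
        (fun a b h => Or.inr (Or.inr (Or.inl ⟨h.2.1, h.2.2, h.1⟩))) _ _ hb.2
    exact ((reachYp _ h1).tail harc).trans hrest
  have reachAllp : ∀ v, Relation.ReflTransGen Ep r v := by
    intro v
    by_cases hv : v ∈ Q
    · exact reachQp v hv
    · rcases hcov v hv with h | h
      · exact reachXp v h
      · exact reachYp v h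
  -- reachability to s in Em
  have reachQm : ∀ v ∈ Q, Relation.ReflTransGen Em v s := fun v hv =>
    Relation.ReflTransGen.mono (fun a b h => Or.inl h) _ _ (hBm.2.2.2.2 v hv)
  have reachXm : ∀ v ∈ X, Relation.ReflTransGen Em v s := by
    intro v hv
    obtain ⟨hvQ, q, hq, hD⟩ := id hv
    exact (Relation.ReflTransGen.single (show Em v q from Or.inr (Or.inl ⟨hv, hq, hD⟩))).trans (reachQm q hq)
  have reachYm : ∀ v ∈ Y, Relation.ReflTransGen Em v s := by
    intro v hv
    obtain ⟨S, hS, hsub⟩ := exists_closedR D Y v hv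
    obtain ⟨h1, h2, h3⟩ := hmemR ⟨S, hS⟩
    have harc : Em (f (Sum.inr ⟨S, hS⟩)).1 (f (Sum.inr ⟨S, hS⟩)).2 :=
      Or.inr (Or.inr (Or.inr ⟨⟨S, hS⟩, rfl⟩))
    have hy := hsub h1
    have hfirst : Relation.ReflTransGen Em v (f (Sum.inr ⟨S, hS⟩)).1 :=
      Relation.ReflTransGen.mono
        (fun a b h => Or.inr (Or.inr (Or.inl ⟨h.2.1, h.2.2, h.1⟩))) _ _ hy.2
    exact (hfirst.tail harc).trans (reachXm _ h2)
  have reachAllm : ∀ v, Relation.ReflTransGen Em v s := by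
    intro v
    by_cases hv : v ∈ Q
    · exact reachQm v hv
    · rcases hcov v hv with h | h
      · exact reachXm v h
      · exact reachYm v h
  -- arc-disjointness of Ep and Em
  have hdisjE : ∀ u v, Ep u v → Em u v → False := by
    intro u v h1 h2
    rcases h1 with h1 | ⟨hu1, hv1, -⟩ | ⟨hu1, hv1, -⟩ | h1
    · obtain ⟨-, hu1, hv1⟩ := hBp.2.1 u v h1
      rcases h2 with h2 | ⟨hu2, hv2, -⟩ | ⟨hu2, hv2, -⟩ | h2
      · exact hpm u v ⟨h1, h2⟩
      · exact hXQ u hu2 hu1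
      · exact hYQ u hu2 hu1
      · exact hYQ u (hFm u v h2).1 hu1
    · rcases h2 with h2 | ⟨hu2, hv2, -⟩ | ⟨hu2, hv2, -⟩ | h2
      · exact hYQ v hv1 (hBm.2.1 u v h2).2.2
      · exact hXQ u hu2 hu1
      · exact hYQ u hu2 hu1
      · exact hYQ u (hFm u v h2).1 hu1
    · rcases h2 with h2 | ⟨hu2, hv2, -⟩ | ⟨hu2, hv2, -⟩ | h2
      · exact hXQ u hu1 (hBm.2.1 u v h2).2.1
      · exact hXQ v hv1 hv2
      · exact hXY' u hu1 hu2
      · exact hXY' u hu1 (hFm u v h2).1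
    · obtain ⟨hu1, hv1, -⟩ := hFp u v h1
      rcases h2 with h2 | ⟨hu2, hv2, -⟩ | ⟨hu2, hv2, -⟩ | h2
      · exact hYQ u hu1 (hBm.2.1 u v h2).2.1
      · exact hXY' u hu2 hu1
      · exact hXY' v hv1 hv2
      · obtain ⟨i, hi⟩ := h1
        obtain ⟨j, hj⟩ := h2
        have := hfinj (hi.trans hj.symm)
        simp at this
  obtain ⟨B1, hB1, hB1E⟩ := exists_outBranching D Ep r hEpD reachAllp
  obtain ⟨B2, hB2, hB2E⟩ := exists_inBranching D Em s hEmD reachAllm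
  exact ⟨B1, B2, r, s, hB1, hB2,
    fun u v h => hdisjE u v (hB1E u v h.1) (hB2E u v h.2)⟩
end

section
/- Every 2-arc-strong oriented graph on at least seven vertices contains a directed path on 6 vertices. -/
/-!
Basic notions for finite digraphs (modelled as an arc relation `D : V → V → Prop`
on a finite vertex type; absence of loops is an explicit hypothesis, parallel
arcs are impossible in this model).
-/

variable {V : Type*}

section AuxLemmas

variable {V : Type*} [Fintype V] {D : V → V → Prop}

private lemma aux_mk6 {a b c d e f : V}
    (h1 : D a b) (h2 : D b c) (h3 : D c d) (h4 : D d e) (h5 : D e f)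
    (n1 : a ≠ b) (n2 : a ≠ c) (n3 : a ≠ d) (n4 : a ≠ e) (n5 : a ≠ f)
    (n6 : b ≠ c) (n7 : b ≠ d) (n8 : b ≠ e) (n9 : b ≠ f)
    (n10 : c ≠ d) (n11 : c ≠ e) (n12 : c ≠ f)
    (n13 : d ≠ e) (n14 : d ≠ f) (n15 : e ≠ f) : HasDipath D 6 := by
  refine ⟨![a, b, c, d, e, f], ?_, ?_⟩
  · intro i j hij
    fin_cases i <;> fin_cases j <;>
      first
        | rfl
        | exact absurd hij n1 | exact absurd hij.symm n1
        | exact absurd hij n2 | exact absurd hij.symm n2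
        | exact absurd hij n3 | exact absurd hij.symm n3
        | exact absurd hij n4 | exact absurd hij.symm n4
        | exact absurd hij n5 | exact absurd hij.symm n5
        | exact absurd hij n6 | exact absurd hij.symm n6
        | exact absurd hij n7 | exact absurd hij.symm n7
        | exact absurd hij n8 | exact absurd hij.symm n8
        | exact absurd hij n9 | exact absurd hij.symm n9
        | exact absurd hij n10 | exact absurd hij.symm n10
        | exact absurd hij n11 | exact absurd hij.symm n11
        | exact absurd hij n12 | exact absurd hij.symm n12
        | exact absurd hij n13 | exact absurd hij.symm n13
        | exact absurd hij n14 | exact absurd hij.symm n14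
        | exact absurd hij n15 | exact absurd hij.symm n15
  · intro i h
    fin_cases i
    · exact h1
    · exact h2
    · exact h3
    · exact h4
    · exact h5
    · exact absurd h (by decide)

private lemma aux_mk5 {a b c d e : V}
    (h1 : D a b) (h2 : D b c) (h3 : D c d) (h4 : D d e)
    (n1 : a ≠ b) (n2 : a ≠ c) (n3 : a ≠ d) (n4 : a ≠ e)
    (n6 : b ≠ c) (n7 : b ≠ d) (n8 : b ≠ e)
    (n10 : c ≠ d) (n11 : c ≠ e)
    (n13 : d ≠ e) : HasDipath D 5 := by
  refine ⟨![a, b, c, d, e], ?_, ?_⟩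
  · intro i j hij
    fin_cases i <;> fin_cases j <;>
      first
        | rfl
        | exact absurd hij n1 | exact absurd hij.symm n1
        | exact absurd hij n2 | exact absurd hij.symm n2
        | exact absurd hij n3 | exact absurd hij.symm n3
        | exact absurd hij n4 | exact absurd hij.symm n4
        | exact absurd hij n6 | exact absurd hij.symm n6
        | exact absurd hij n7 | exact absurd hij.symm n7
        | exact absurd hij n8 | exact absurd hij.symm n8
        | exact absurd hij n10 | exact absurd hij.symm n10
        | exact absurd hij n11 | exact absurd hij.symm n11
        | exact absurd hij n13 | exact absurd hij.symm n13
  · intro i h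
    fin_cases i
    · exact h1
    · exact h2
    · exact h3
    · exact h4
    · exact absurd h (by decide)

private lemma aux_mk4 {a b c d : V}
    (h1 : D a b) (h2 : D b c) (h3 : D c d)
    (n1 : a ≠ b) (n2 : a ≠ c) (n3 : a ≠ d)
    (n6 : b ≠ c) (n7 : b ≠ d)
    (n10 : c ≠ d) : HasDipath D 4 := by
  refine ⟨![a, b, c, d], ?_, ?_⟩
  · intro i j hij
    fin_cases i <;> fin_cases j <;>
      first
        | rfl
        | exact absurd hij n1 | exact absurd hij.symm n1
        | exact absurd hij n2 | exact absurd hij.symm n2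
        | exact absurd hij n3 | exact absurd hij.symm n3
        | exact absurd hij n6 | exact absurd hij.symm n6
        | exact absurd hij n7 | exact absurd hij.symm n7
        | exact absurd hij n10 | exact absurd hij.symm n10
  · intro i h
    fin_cases i
    · exact h1
    · exact h2
    · exact h3
    · exact absurd h (by decide)

private lemma aux_noloop (horient : IsOriented D) {u w : V} (h : D u w) : u ≠ w := by
  intro heq; subst heq; exact horient u u h h

private lemma aux_outdeg (hstrong : TwoArcStrong D)
    (hcard : 2 ≤ Fintype.card V) (v : V) :
    ∃ a b : V, a ≠ b ∧ D v a ∧ D v b := by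
  have h2 := hstrong {v} ⟨v, rfl⟩ (by
    intro h
    obtain ⟨u, hu⟩ := Fintype.exists_ne_of_one_lt_card (by omega) v
    exact hu (by have : u ∈ ({v} : Set V) := h ▸ Set.mem_univ u; simpa using this))
  obtain ⟨p, hp, q, hq, hpq⟩ :=
    (Set.one_lt_ncard (Set.toFinite _)).mp (lt_of_lt_of_le one_lt_two h2)
  obtain ⟨hp1, hp2, hp3⟩ := hp
  obtain ⟨hq1, hq2, hq3⟩ := hq
  simp only [Set.mem_singleton_iff] at hp1 hq1
  refine ⟨p.2, q.2, ?_, hp1 ▸ hp3, hq1 ▸ hq3⟩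
  intro h
  exact hpq (Prod.ext (hp1.trans hq1.symm) h)

private lemma aux_indeg (hstrong : TwoArcStrong D)
    (hcard : 2 ≤ Fintype.card V) (v : V) :
    ∃ a b : V, a ≠ b ∧ D a v ∧ D b v := by
  obtain ⟨u, hu⟩ := Fintype.exists_ne_of_one_lt_card (by omega) v
  have h2 := hstrong {v}ᶜ ⟨u, by simpa using hu⟩ (by
    intro h
    have : v ∈ ({v}ᶜ : Set V) := h ▸ Set.mem_univ v
    simp at this)
  obtain ⟨p, hp, q, hq, hpq⟩ :=
    (Set.one_lt_ncard (Set.toFinite _)).mp (lt_of_lt_of_le one_lt_two h2)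
  obtain ⟨hp1, hp2, hp3⟩ := hp
  obtain ⟨hq1, hq2, hq3⟩ := hq
  simp only [Set.mem_compl_iff, Set.mem_singleton_iff, not_not] at hp1 hp2 hq1 hq2
  refine ⟨p.1, q.1, ?_, hp2 ▸ hp3, hq2 ▸ hq3⟩
  intro h
  exact hpq (Prod.ext h (hp2.trans hq2.symm))

private lemma aux_outarc (hstrong : TwoArcStrong D) (X : Set V) (hne : X.Nonempty)
    (hX : X ≠ Set.univ) : ∃ a b : V, a ∈ X ∧ b ∉ X ∧ D a b := by
  have h2 := hstrong X hne hX
  have hnz : ({p : V × V | p.1 ∈ X ∧ p.2 ∉ X ∧ D p.1 p.2}).ncard ≠ 0 := by omega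
  obtain ⟨p, hp⟩ := Set.nonempty_of_ncard_ne_zero hnz
  exact ⟨p.1, p.2, hp.1, hp.2.1, hp.2.2⟩

private lemma aux_ncard5 (a b c d e : V) : ({a, b, c, d, e} : Set V).ncard ≤ 5 := by
  refine le_trans (Set.ncard_insert_le _ _) ?_
  refine le_trans (Nat.add_le_add_right (Set.ncard_insert_le _ _) 1) ?_
  refine le_trans (Nat.add_le_add_right (Nat.add_le_add_right (Set.ncard_insert_le _ _) 1) 1) ?_
  refine le_trans (Nat.add_le_add_right (Nat.add_le_add_right
    (Nat.add_le_add_right (Set.ncard_insert_le _ _) 1) 1) 1) ?_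
  simp [Set.ncard_singleton]

private lemma aux_ncard4 (a b c d : V) : ({a, b, c, d} : Set V).ncard ≤ 4 := by
  refine le_trans (Set.ncard_insert_le _ _) ?_
  refine le_trans (Nat.add_le_add_right (Set.ncard_insert_le _ _) 1) ?_
  refine le_trans (Nat.add_le_add_right (Nat.add_le_add_right (Set.ncard_insert_le _ _) 1) 1) ?_
  simp [Set.ncard_singleton]

end AuxLemmas

/-- Every 2-arc-strong oriented graph on at least seven vertices contains a
directed path on 6 vertices. -/
theorem twoArcStrong_oriented_hasDipath_six {V : Type*} [Fintype V]
    (D : V → V → Prop) (horient : IsOriented D) (hstrong : TwoArcStrong D)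
    (hcard : 7 ≤ Fintype.card V) :
    HasDipath D 6 := by
  by_contra h6
  have hcard2 : 2 ≤ Fintype.card V := by omega
  by_cases h5 : HasDipath D 5
  · -- a longest path has 5 vertices (or we find a 6-path)
    obtain ⟨x, hinj, harcs⟩ := h5
    have a01 : D (x 0) (x 1) := harcs 0 (by decide)
    have a12 : D (x 1) (x 2) := harcs 1 (by decide)
    have a23 : D (x 2) (x 3) := harcs 2 (by decide)
    have a34 : D (x 3) (x 4) := harcs 3 (by decide)
    have d01 : x 0 ≠ x 1 := fun h => absurd (hinj h) (by decide)
    have d02 : x 0 ≠ x 2 := fun h => absurd (hinj h) (by decide)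
    have d03 : x 0 ≠ x 3 := fun h => absurd (hinj h) (by decide)
    have d04 : x 0 ≠ x 4 := fun h => absurd (hinj h) (by decide)
    have d12 : x 1 ≠ x 2 := fun h => absurd (hinj h) (by decide)
    have d13 : x 1 ≠ x 3 := fun h => absurd (hinj h) (by decide)
    have d14 : x 1 ≠ x 4 := fun h => absurd (hinj h) (by decide)
    have d23 : x 2 ≠ x 3 := fun h => absurd (hinj h) (by decide)
    have d24 : x 2 ≠ x 4 := fun h => absurd (hinj h) (by decide)
    have d34 : x 3 ≠ x 4 := fun h => absurd (hinj h) (by decide)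
    set X : Set V := {x 0, x 1, x 2, x 3, x 4} with hXdef
    have hXne : X.Nonempty := ⟨x 0, by simp [hXdef]⟩
    have hXuniv : X ≠ Set.univ := by
      intro h
      have h1 : (Set.univ : Set V).ncard ≤ 5 := h ▸ aux_ncard5 (x 0) (x 1) (x 2) (x 3) (x 4)
      rw [Set.ncard_univ, Nat.card_eq_fintype_card] at h1
      omega
    by_cases h40 : D (x 4) (x 0)
    · -- 5-cycle: any arc leaving it yields a 6-path
      obtain ⟨a, b, haX, hbX, hab⟩ := aux_outarc hstrong X hXne hXuniv
      simp only [hXdef, Set.mem_insert_iff, Set.mem_singleton_iff, not_or] at haX hbX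
      obtain ⟨hb0, hb1, hb2, hb3, hb4⟩ := hbX
      rcases haX with h | h | h | h | h <;> subst h
      · exact h6 (aux_mk6 a12 a23 a34 h40 hab d12 d13 d14 d01.symm
          (Ne.symm hb1) d23 d24 d02.symm (Ne.symm hb2) d34 d03.symm (Ne.symm hb3)
          d04.symm (Ne.symm hb4) (Ne.symm hb0))
      · exact h6 (aux_mk6 a23 a34 h40 a01 hab d23 d24 d02.symm d12.symm
          (Ne.symm hb2) d34 d03.symm d13.symm (Ne.symm hb3) d04.symm d14.symm
          (Ne.symm hb4) d01 (Ne.symm hb0) (Ne.symm hb1))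
      · exact h6 (aux_mk6 a34 h40 a01 a12 hab d34 d03.symm d13.symm d23.symm
          (Ne.symm hb3) d04.symm d14.symm d24.symm (Ne.symm hb4) d01 d02
          (Ne.symm hb0) d12 (Ne.symm hb1) (Ne.symm hb2))
      · exact h6 (aux_mk6 h40 a01 a12 a23 hab d04.symm d14.symm d24.symm d34.symm
          (Ne.symm hb4) d01 d02 d03 (Ne.symm hb0) d12 d13 (Ne.symm hb1) d23
          (Ne.symm hb2) (Ne.symm hb3))
      · exact h6 (aux_mk6 a01 a12 a23 a34 hab d01 d02 d03 d04 (Ne.symm hb0)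
          d12 d13 d14 (Ne.symm hb1) d23 d24 (Ne.symm hb2) d34 (Ne.symm hb3)
          (Ne.symm hb4))
    · -- no 5-cycle
      have hout4 : ∀ w, D (x 4) w → w = x 1 ∨ w = x 2 := by
        intro w hw
        by_contra hc
        push_neg at hc
        obtain ⟨hw1, hw2⟩ := hc
        have hw3 : w ≠ x 3 := by intro h; subst h; exact horient _ _ a34 hw
        have hw4 : w ≠ x 4 := (aux_noloop horient hw).symm
        have hw0 : w ≠ x 0 := by intro h; subst h; exact h40 hw
        exact h6 (aux_mk6 a01 a12 a23 a34 hw d01 d02 d03 d04 (Ne.symm hw0)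
          d12 d13 d14 (Ne.symm hw1) d23 d24 (Ne.symm hw2) d34 (Ne.symm hw3)
          (Ne.symm hw4))
      have h4out : D (x 4) (x 1) ∧ D (x 4) (x 2) := by
        obtain ⟨p, q, hpq, hp, hq⟩ := aux_outdeg hstrong hcard2 (x 4)
        rcases hout4 p hp with h | h <;> rcases hout4 q hq with h' | h'
        · exact absurd (h.trans h'.symm) hpq
        · exact ⟨h ▸ hp, h' ▸ hq⟩
        · exact ⟨h' ▸ hq, h ▸ hp⟩
        · exact absurd (h.trans h'.symm) hpq
      obtain ⟨h41, h42⟩ := h4out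
      have hin0 : ∀ w, D w (x 0) → w = x 2 ∨ w = x 3 := by
        intro w hw
        by_contra hc
        push_neg at hc
        obtain ⟨hw2, hw3⟩ := hc
        have hw1 : w ≠ x 1 := by intro h; subst h; exact horient _ _ a01 hw
        have hw0 : w ≠ x 0 := aux_noloop horient hw
        have hw4 : w ≠ x 4 := by intro h; subst h; exact h40 hw
        exact h6 (aux_mk6 hw a01 a12 a23 a34 hw0 hw1 hw2 hw3 hw4
          d01 d02 d03 d04 d12 d13 d14 d23 d24 d34)
      have h0in : D (x 2) (x 0) ∧ D (x 3) (x 0) := by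
        obtain ⟨p, q, hpq, hp, hq⟩ := aux_indeg hstrong hcard2 (x 0)
        rcases hin0 p hp with h | h <;> rcases hin0 q hq with h' | h'
        · exact absurd (h.trans h'.symm) hpq
        · exact ⟨h ▸ hp, h' ▸ hq⟩
        · exact ⟨h' ▸ hq, h ▸ hp⟩
        · exact absurd (h.trans h'.symm) hpq
      obtain ⟨h20, h30⟩ := h0in
      have hout0 : ∀ w, D (x 0) w → w = x 1 ∨ w = x 4 := by
        intro w hw
        by_contra hc
        push_neg at hc
        obtain ⟨hw1, hw4⟩ := hc
        have hw2 : w ≠ x 2 := by intro h; subst h; exact horient _ _ h20 hw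
        have hw3 : w ≠ x 3 := by intro h; subst h; exact horient _ _ h30 hw
        have hw0 : w ≠ x 0 := (aux_noloop horient hw).symm
        exact h6 (aux_mk6 a34 h41 a12 h20 hw d34 d13.symm d23.symm d03.symm
          (Ne.symm hw3) d14.symm d24.symm d04.symm (Ne.symm hw4) d12 d01.symm
          (Ne.symm hw1) d02.symm (Ne.symm hw2) (Ne.symm hw0))
      have h04 : D (x 0) (x 4) := by
        obtain ⟨p, q, hpq, hp, hq⟩ := aux_outdeg hstrong hcard2 (x 0)
        rcases hout0 p hp with h | h <;> rcases hout0 q hq with h' | h'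
        · exact absurd (h.trans h'.symm) hpq
        · exact h' ▸ hq
        · exact h ▸ hp
        · exact absurd (h.trans h'.symm) hpq
      obtain ⟨a, b, haX, hbX, hab⟩ := aux_outarc hstrong X hXne hXuniv
      simp only [hXdef, Set.mem_insert_iff, Set.mem_singleton_iff, not_or] at haX hbX
      obtain ⟨hb0, hb1, hb2, hb3, hb4⟩ := hbX
      rcases haX with h | h | h | h | h <;> subst h
      · -- path x3 x4 x1 x2 x0 b
        exact h6 (aux_mk6 a34 h41 a12 h20 hab d34 d13.symm d23.symm d03.symm
          (Ne.symm hb3) d14.symm d24.symm d04.symm (Ne.symm hb4) d12 d01.symm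
          (Ne.symm hb1) d02.symm (Ne.symm hb2) (Ne.symm hb0))
      · -- path x2 x3 x0 x4 x1 b
        exact h6 (aux_mk6 a23 h30 h04 h41 hab d23 d02.symm d24 d12.symm
          (Ne.symm hb2) d03.symm d34 d13.symm (Ne.symm hb3) d04 d01
          (Ne.symm hb0) d14.symm (Ne.symm hb4) (Ne.symm hb1))
      · -- path x3 x0 x4 x1 x2 b
        exact h6 (aux_mk6 h30 h04 h41 a12 hab d03.symm d34 d13.symm d23.symm
          (Ne.symm hb3) d04 d01 d02 (Ne.symm hb0) d14.symm d24.symm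
          (Ne.symm hb4) d12 (Ne.symm hb1) (Ne.symm hb2))
      · -- path x0 x4 x1 x2 x3 b
        exact h6 (aux_mk6 h04 h41 a12 a23 hab d04 d01 d02 d03 (Ne.symm hb0)
          d14.symm d24.symm d34.symm (Ne.symm hb4) d12 d13 (Ne.symm hb1) d23
          (Ne.symm hb2) (Ne.symm hb3))
      · -- path x1 x2 x3 x0 x4 b
        exact h6 (aux_mk6 a12 a23 h30 h04 hab d12 d13 d01.symm d14
          (Ne.symm hb1) d23 d02.symm d24 (Ne.symm hb2) d03.symm d34
          (Ne.symm hb3) d04 (Ne.symm hb0) (Ne.symm hb4))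
  · by_cases h4 : HasDipath D 4
    · -- a longest path has 4 vertices: we find a 5-path, contradiction
      obtain ⟨x, hinj, harcs⟩ := h4
      have a01 : D (x 0) (x 1) := harcs 0 (by decide)
      have a12 : D (x 1) (x 2) := harcs 1 (by decide)
      have a23 : D (x 2) (x 3) := harcs 2 (by decide)
      have d01 : x 0 ≠ x 1 := fun h => absurd (hinj h) (by decide)
      have d02 : x 0 ≠ x 2 := fun h => absurd (hinj h) (by decide)
      have d03 : x 0 ≠ x 3 := fun h => absurd (hinj h) (by decide)
      have d12 : x 1 ≠ x 2 := fun h => absurd (hinj h) (by decide)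
      have d13 : x 1 ≠ x 3 := fun h => absurd (hinj h) (by decide)
      have d23 : x 2 ≠ x 3 := fun h => absurd (hinj h) (by decide)
      have hout3 : ∀ w, D (x 3) w → w = x 0 ∨ w = x 1 := by
        intro w hw
        by_contra hc
        push_neg at hc
        obtain ⟨hw0, hw1⟩ := hc
        have hw2 : w ≠ x 2 := by intro h; subst h; exact horient _ _ a23 hw
        have hw3 : w ≠ x 3 := (aux_noloop horient hw).symm
        exact h5 (aux_mk5 a01 a12 a23 hw d01 d02 d03 (Ne.symm hw0)
          d12 d13 (Ne.symm hw1) d23 (Ne.symm hw2) (Ne.symm hw3))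
      have h30 : D (x 3) (x 0) := by
        obtain ⟨p, q, hpq, hp, hq⟩ := aux_outdeg hstrong hcard2 (x 3)
        rcases hout3 p hp with h | h <;> rcases hout3 q hq with h' | h'
        · exact absurd (h.trans h'.symm) hpq
        · exact h ▸ hp
        · exact h' ▸ hq
        · exact absurd (h.trans h'.symm) hpq
      set X : Set V := {x 0, x 1, x 2, x 3} with hXdef
      have hXne : X.Nonempty := ⟨x 0, by simp [hXdef]⟩
      have hXuniv : X ≠ Set.univ := by
        intro h
        have h1 : (Set.univ : Set V).ncard ≤ 4 := h ▸ aux_ncard4 (x 0) (x 1) (x 2) (x 3)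
        rw [Set.ncard_univ, Nat.card_eq_fintype_card] at h1
        omega
      obtain ⟨a, b, haX, hbX, hab⟩ := aux_outarc hstrong X hXne hXuniv
      simp only [hXdef, Set.mem_insert_iff, Set.mem_singleton_iff, not_or] at haX hbX
      obtain ⟨hb0, hb1, hb2, hb3⟩ := hbX
      rcases haX with h | h | h | h <;> subst h
      · exact h5 (aux_mk5 a12 a23 h30 hab d12 d13 d01.symm (Ne.symm hb1)
          d23 d02.symm (Ne.symm hb2) d03.symm (Ne.symm hb3) (Ne.symm hb0))
      · exact h5 (aux_mk5 a23 h30 a01 hab d23 d02.symm d12.symm (Ne.symm hb2)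
          d03.symm d13.symm (Ne.symm hb3) d01 (Ne.symm hb0) (Ne.symm hb1))
      · exact h5 (aux_mk5 h30 a01 a12 hab d03.symm d13.symm d23.symm
          (Ne.symm hb3) d01 d02 (Ne.symm hb0) d12 (Ne.symm hb1) (Ne.symm hb2))
      · exact h5 (aux_mk5 a01 a12 a23 hab d01 d02 d03 (Ne.symm hb0)
          d12 d13 (Ne.symm hb1) d23 (Ne.symm hb2) (Ne.symm hb3))
    · -- no 4-path at all: impossible
      have hpos : 0 < Fintype.card V := by omega
      obtain ⟨v⟩ := Fintype.card_pos_iff.mp hpos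
      obtain ⟨a, b, hab, hva, hvb⟩ := aux_outdeg hstrong hcard2 v
      obtain ⟨c, d, hcd, hac, had⟩ := aux_outdeg hstrong hcard2 a
      have hcv : c ≠ v := by intro h; subst h; exact horient _ _ hva hac
      have hca : c ≠ a := (aux_noloop horient hac).symm
      have hva' : v ≠ a := aux_noloop horient hva
      obtain ⟨p, q, hpq, hp, hq⟩ := aux_outdeg hstrong hcard2 c
      have key : ∀ w, D c w → w = v := by
        intro w hw
        by_contra hwv
        have hwa : w ≠ a := by intro h; subst h; exact horient _ _ hac hw
        have hwc : w ≠ c := (aux_noloop horient hw).symm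
        exact h4 (aux_mk4 hva hac hw hva' hcv.symm (Ne.symm hwv)
          hca.symm (Ne.symm hwa) (Ne.symm hwc))
      exact hpq ((key p hp).trans (key q hq).symm)
end

section
/- Let D be a 2-arc-strong oriented graph on n vertices, where 8 ≤ n ≤ 9, that does not contain K_4 as a subdigraph. If D has two vertex-disjoint directed cycles C^1 and C^2 whose vertex sets together cover 7 vertices, then D contains a directed path on 8 vertices. -/
/-!
Basic notions for finite digraphs (modelled as an arc relation `D : V → V → Prop`
on a finite vertex type; absence of loops is an explicit hypothesis, parallel
arcs are impossible in this model).
-/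

variable {V : Type*}

/-! ### Auxiliary machinery for the proof -/

set_option maxRecDepth 4000

section Aux

variable {V : Type*}

private lemma f3a : ∀ j : Fin 3, j+1+2 = j := by decide
private lemma f3b : ∀ j : Fin 3, j+2+1 = j := by decide
private lemma f4a : ∀ i : Fin 4, i+1+3 = i := by decide
private lemma fin3_cases : ∀ p j : Fin 3, p = j ∨ p = j+1 ∨ p = j+2 := by decide
private lemma fin3_cover : ∀ p q t m : Fin 3, p ≠ q → p ≠ t → q ≠ t →
    (m = p ∨ m = q ∨ m = t) := by decide
private lemma finL1 : ∀ i1 i2 w w' : Fin 4, i1≠i2 → i1≠w+2 → i1≠w+3 → i2≠w+2 → i2≠w+3 →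
    i1≠w'+2 → i1≠w'+3 → i2≠w'+2 → i2≠w'+3 → w = w' := by decide
private lemma finL2 : ∀ i1 i2 o1 o2 w : Fin 4, i1≠i2 → o1≠o2 → i1≠o1 → i1≠o2 → i2≠o1 → i2≠o2 →
    ((w+3=i1 ∨ w+3=i2) ∨ ((w=i1∨w=i2)∧(w+1=o1∨w+1=o2)) ∨ ((w+1=i1∨w+1=i2)∧(w+2=o1∨w+2=o2)) ∨
      ((w+2=i1∨w+2=i2)∧(w+3=o1∨w+3=o2))) := by decide

private def vtx8 (a b c d e f g h : V) : Fin 8 → V := fun i =>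
  if i.val = 0 then a else if i.val = 1 then b else if i.val = 2 then c
  else if i.val = 3 then d else if i.val = 4 then e else if i.val = 5 then f
  else if i.val = 6 then g else h

private lemma path8' {D : V → V → Prop} {a b c d e f g h : V}
    (n01 : a≠b) (n02 : a≠c) (n03 : a≠d) (n04 : a≠e) (n05 : a≠f) (n06 : a≠g) (n07 : a≠h)
    (n12 : b≠c) (n13 : b≠d) (n14 : b≠e) (n15 : b≠f) (n16 : b≠g) (n17 : b≠h)
    (n23 : c≠d) (n24 : c≠e) (n25 : c≠f) (n26 : c≠g) (n27 : c≠h)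
    (n34 : d≠e) (n35 : d≠f) (n36 : d≠g) (n37 : d≠h)
    (n45 : e≠f) (n46 : e≠g) (n47 : e≠h)
    (n56 : f≠g) (n57 : f≠h)
    (n67 : g≠h)
    (h1 : D a b) (h2 : D b c) (h3 : D c d) (h4 : D d e) (h5 : D e f) (h6 : D f g)
    (h7 : D g h) : HasDipath D 8 := by
  refine ⟨vtx8 a b c d e f g h, ?_, ?_⟩
  · intro i j hij
    fin_cases i <;> fin_cases j <;> simp_all [vtx8]
  · intro i hi
    have hv : i.val < 7 := by omega
    fin_cases i <;> simp_all [vtx8]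

/-- Normalized path shapes through the 3-cycle `x`, then into the 4-cycle `y` at `y 0`,
with extra vertex `u` (and possibly `v`). -/
private lemma shapes {D : V → V → Prop}
    (x : Fin 3 → V) (y : Fin 4 → V)
    (hxinj : Function.Injective x) (hyinj : Function.Injective y)
    (hxy : ∀ i j, x i ≠ y j)
    (hxarc : ∀ i, D (x i) (x (i+1))) (hyarc : ∀ i, D (y i) (y (i+1)))
    (u : V) (hux : ∀ j, u ≠ x j) (huy : ∀ i, u ≠ y i)
    (hjw : D (x 2) (y 0)) :
    (D (y 3) u → HasDipath D 8) ∧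
    (D (y 0) u → D u (y 1) → HasDipath D 8) ∧
    (D (y 1) u → D u (y 2) → HasDipath D 8) ∧
    (D (y 2) u → D u (y 3) → HasDipath D 8) ∧
    (∀ v, D u v → (∀ a, v ≠ x a) → (∀ b, v ≠ y b) → v ≠ u → D (y 2) u → HasDipath D 8) := by
  have a01 : D (x 0) (x 1) := by have := hxarc 0; rwa [show (0:Fin 3)+1 = 1 by decide] at this
  have a12 : D (x 1) (x 2) := by have := hxarc 1; rwa [show (1:Fin 3)+1 = 2 by decide] at this
  have b01 : D (y 0) (y 1) := by have := hyarc 0; rwa [show (0:Fin 4)+1 = 1 by decide] at this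
  have b12 : D (y 1) (y 2) := by have := hyarc 1; rwa [show (1:Fin 4)+1 = 2 by decide] at this
  have b23 : D (y 2) (y 3) := by have := hyarc 2; rwa [show (2:Fin 4)+1 = 3 by decide] at this
  refine ⟨?_, ?_, ?_, ?_, ?_⟩
  · -- x0 x1 x2 y0 y1 y2 y3 u
    intro hy3u
    exact path8' (hxinj.ne (by decide)) (hxinj.ne (by decide)) (hxy 0 0) (hxy 0 1) (hxy 0 2)
      (hxy 0 3) ((hux 0).symm)
      (hxinj.ne (by decide)) (hxy 1 0) (hxy 1 1) (hxy 1 2) (hxy 1 3) ((hux 1).symm)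
      (hxy 2 0) (hxy 2 1) (hxy 2 2) (hxy 2 3) ((hux 2).symm)
      (hyinj.ne (by decide)) (hyinj.ne (by decide)) (hyinj.ne (by decide)) ((huy 0).symm)
      (hyinj.ne (by decide)) (hyinj.ne (by decide)) ((huy 1).symm)
      (hyinj.ne (by decide)) ((huy 2).symm)
      ((huy 3).symm)
      a01 a12 hjw b01 b12 b23 hy3u
  · -- x0 x1 x2 y0 u y1 y2 y3
    intro h0 h1
    exact path8' (hxinj.ne (by decide)) (hxinj.ne (by decide)) (hxy 0 0) ((hux 0).symm)
      (hxy 0 1) (hxy 0 2) (hxy 0 3)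
      (hxinj.ne (by decide)) (hxy 1 0) ((hux 1).symm) (hxy 1 1) (hxy 1 2) (hxy 1 3)
      (hxy 2 0) ((hux 2).symm) (hxy 2 1) (hxy 2 2) (hxy 2 3)
      ((huy 0).symm) (hyinj.ne (by decide)) (hyinj.ne (by decide)) (hyinj.ne (by decide))
      (huy 1) (huy 2) (huy 3)
      (hyinj.ne (by decide)) (hyinj.ne (by decide))
      (hyinj.ne (by decide))
      a01 a12 hjw h0 h1 b12 b23
  · -- x0 x1 x2 y0 y1 u y2 y3
    intro h1 h2
    exact path8' (hxinj.ne (by decide)) (hxinj.ne (by decide)) (hxy 0 0) (hxy 0 1)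
      ((hux 0).symm) (hxy 0 2) (hxy 0 3)
      (hxinj.ne (by decide)) (hxy 1 0) (hxy 1 1) ((hux 1).symm) (hxy 1 2) (hxy 1 3)
      (hxy 2 0) (hxy 2 1) ((hux 2).symm) (hxy 2 2) (hxy 2 3)
      (hyinj.ne (by decide)) ((huy 0).symm) (hyinj.ne (by decide)) (hyinj.ne (by decide))
      ((huy 1).symm) (hyinj.ne (by decide)) (hyinj.ne (by decide))
      (huy 2) (huy 3)
      (hyinj.ne (by decide))
      a01 a12 hjw b01 h1 h2 b23
  · -- x0 x1 x2 y0 y1 y2 u y3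
    intro h2 h3
    exact path8' (hxinj.ne (by decide)) (hxinj.ne (by decide)) (hxy 0 0) (hxy 0 1) (hxy 0 2)
      ((hux 0).symm) (hxy 0 3)
      (hxinj.ne (by decide)) (hxy 1 0) (hxy 1 1) (hxy 1 2) ((hux 1).symm) (hxy 1 3)
      (hxy 2 0) (hxy 2 1) (hxy 2 2) ((hux 2).symm) (hxy 2 3)
      (hyinj.ne (by decide)) (hyinj.ne (by decide)) ((huy 0).symm) (hyinj.ne (by decide))
      (hyinj.ne (by decide)) ((huy 1).symm) (hyinj.ne (by decide))
      ((huy 2).symm) (hyinj.ne (by decide))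
      (huy 3)
      a01 a12 hjw b01 b12 h2 h3
  · -- x0 x1 x2 y0 y1 y2 u v
    intro v huv hvx hvy hvu h2
    exact path8' (hxinj.ne (by decide)) (hxinj.ne (by decide)) (hxy 0 0) (hxy 0 1) (hxy 0 2)
      ((hux 0).symm) ((hvx 0).symm)
      (hxinj.ne (by decide)) (hxy 1 0) (hxy 1 1) (hxy 1 2) ((hux 1).symm) ((hvx 1).symm)
      (hxy 2 0) (hxy 2 1) (hxy 2 2) ((hux 2).symm) ((hvx 2).symm)
      (hyinj.ne (by decide)) (hyinj.ne (by decide)) ((huy 0).symm) ((hvy 0).symm)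
      (hyinj.ne (by decide)) ((huy 1).symm) ((hvy 1).symm)
      ((huy 2).symm) ((hvy 2).symm)
      (Ne.symm hvu)
      a01 a12 hjw b01 b12 h2 huv

/-- path: y0 y1 y2 y3 u x0 x1 x2 -/
private lemma pathQA {D : V → V → Prop}
    (x : Fin 3 → V) (y : Fin 4 → V)
    (hxinj : Function.Injective x) (hyinj : Function.Injective y)
    (hxy : ∀ i j, x i ≠ y j)
    (hxarc : ∀ i, D (x i) (x (i+1))) (hyarc : ∀ i, D (y i) (y (i+1)))
    (u : V) (hux : ∀ j, u ≠ x j) (huy : ∀ i, u ≠ y i)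
    (h1 : D (y 3) u) (h2 : D u (x 0)) : HasDipath D 8 := by
  have a01 : D (x 0) (x 1) := by have := hxarc 0; rwa [show (0:Fin 3)+1 = 1 by decide] at this
  have a12 : D (x 1) (x 2) := by have := hxarc 1; rwa [show (1:Fin 3)+1 = 2 by decide] at this
  have b01 : D (y 0) (y 1) := by have := hyarc 0; rwa [show (0:Fin 4)+1 = 1 by decide] at this
  have b12 : D (y 1) (y 2) := by have := hyarc 1; rwa [show (1:Fin 4)+1 = 2 by decide] at this
  have b23 : D (y 2) (y 3) := by have := hyarc 2; rwa [show (2:Fin 4)+1 = 3 by decide] at this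
  exact path8' (hyinj.ne (by decide)) (hyinj.ne (by decide)) (hyinj.ne (by decide))
      ((huy 0).symm) ((hxy 0 0).symm) ((hxy 1 0).symm) ((hxy 2 0).symm)
      (hyinj.ne (by decide)) (hyinj.ne (by decide)) ((huy 1).symm) ((hxy 0 1).symm)
      ((hxy 1 1).symm) ((hxy 2 1).symm)
      (hyinj.ne (by decide)) ((huy 2).symm) ((hxy 0 2).symm) ((hxy 1 2).symm) ((hxy 2 2).symm)
      ((huy 3).symm) ((hxy 0 3).symm) ((hxy 1 3).symm) ((hxy 2 3).symm)
      (hux 0) (hux 1) (hux 2)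
      (hxinj.ne (by decide)) (hxinj.ne (by decide))
      (hxinj.ne (by decide))
      b01 b12 b23 h1 h2 a01 a12

/-- path: x0 x1 x2 u y0 y1 y2 y3 -/
private lemma pathQB {D : V → V → Prop}
    (x : Fin 3 → V) (y : Fin 4 → V)
    (hxinj : Function.Injective x) (hyinj : Function.Injective y)
    (hxy : ∀ i j, x i ≠ y j)
    (hxarc : ∀ i, D (x i) (x (i+1))) (hyarc : ∀ i, D (y i) (y (i+1)))
    (u : V) (hux : ∀ j, u ≠ x j) (huy : ∀ i, u ≠ y i)
    (h1 : D (x 2) u) (h2 : D u (y 0)) : HasDipath D 8 := by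
  have a01 : D (x 0) (x 1) := by have := hxarc 0; rwa [show (0:Fin 3)+1 = 1 by decide] at this
  have a12 : D (x 1) (x 2) := by have := hxarc 1; rwa [show (1:Fin 3)+1 = 2 by decide] at this
  have b01 : D (y 0) (y 1) := by have := hyarc 0; rwa [show (0:Fin 4)+1 = 1 by decide] at this
  have b12 : D (y 1) (y 2) := by have := hyarc 1; rwa [show (1:Fin 4)+1 = 2 by decide] at this
  have b23 : D (y 2) (y 3) := by have := hyarc 2; rwa [show (2:Fin 4)+1 = 3 by decide] at this
  exact path8' (hxinj.ne (by decide)) (hxinj.ne (by decide)) ((hux 0).symm) (hxy 0 0)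
      (hxy 0 1) (hxy 0 2) (hxy 0 3)
      (hxinj.ne (by decide)) ((hux 1).symm) (hxy 1 0) (hxy 1 1) (hxy 1 2) (hxy 1 3)
      ((hux 2).symm) (hxy 2 0) (hxy 2 1) (hxy 2 2) (hxy 2 3)
      (huy 0) (huy 1) (huy 2) (huy 3)
      (hyinj.ne (by decide)) (hyinj.ne (by decide)) (hyinj.ne (by decide))
      (hyinj.ne (by decide)) (hyinj.ne (by decide))
      (hyinj.ne (by decide))
      a01 a12 h1 h2 b01 b12 b23

/-- The main covering lemma: a vertex `u` outside the two cycles whose in-neighbourhood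
contains two vertices of the 4-cycle, and either two out-neighbours on the 4-cycle or an
out-neighbour outside both cycles. -/
private lemma cover {D : V → V → Prop} (horient : IsOriented D) (hK4 : ¬ ContainsK4 D)
    (x : Fin 3 → V) (y : Fin 4 → V)
    (hxinj : Function.Injective x) (hyinj : Function.Injective y)
    (hxy : ∀ i j, x i ≠ y j)
    (hxarc : ∀ i, D (x i) (x (i+1))) (hyarc : ∀ i, D (y i) (y (i+1)))
    (u : V) (hux : ∀ j, u ≠ x j) (huy : ∀ i, u ≠ y i)
    (h2I : ∃ i j : Fin 4, i ≠ j ∧ D (y i) u ∧ D (y j) u)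
    (hOr : (∃ i j : Fin 4, i ≠ j ∧ D u (y i) ∧ D u (y j)) ∨
        (∃ v, D u v ∧ (∀ a, v ≠ x a) ∧ (∀ b, v ≠ y b) ∧ v ≠ u))
    (houtx : ∀ j : Fin 3, ∃ w : Fin 4, D (x j) (y w)) :
    HasDipath D 8 := by
  classical
  have a01 : D (x 0) (x 1) := by have := hxarc 0; rwa [show (0:Fin 3)+1 = 1 by decide] at this
  have a12 : D (x 1) (x 2) := by have := hxarc 1; rwa [show (1:Fin 3)+1 = 2 by decide] at this
  have a20 : D (x 2) (x 0) := by have := hxarc 2; rwa [show (2:Fin 3)+1 = 0 by decide] at this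
  have hsh : ∀ (j : Fin 3) (w : Fin 4), D (x j) (y w) →
      (D (y (w+3)) u → HasDipath D 8) ∧
      (D (y (w+0)) u → D u (y (w+1)) → HasDipath D 8) ∧
      (D (y (w+1)) u → D u (y (w+2)) → HasDipath D 8) ∧
      (D (y (w+2)) u → D u (y (w+3)) → HasDipath D 8) ∧
      (∀ v, D u v → (∀ a, v ≠ x a) → (∀ b, v ≠ y b) → v ≠ u → D (y (w+2)) u →
        HasDipath D 8) := by
    intro j w hjw
    have hxinj' : Function.Injective (fun k : Fin 3 => x (j+1+k)) :=
      fun p q e => add_left_cancel (hxinj e)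
    have hyinj' : Function.Injective (fun k : Fin 4 => y (w+k)) :=
      fun p q e => add_left_cancel (hyinj e)
    have hxy' : ∀ a b, (fun k : Fin 3 => x (j+1+k)) a ≠ (fun k : Fin 4 => y (w+k)) b :=
      fun a b => hxy _ _
    have hxarc' : ∀ i, D ((fun k : Fin 3 => x (j+1+k)) i) ((fun k : Fin 3 => x (j+1+k)) (i+1)) := by
      intro i
      show D (x (j+1+i)) (x (j+1+(i+1)))
      have := hxarc (j+1+i)
      rwa [add_assoc (j+1) i 1] at this
    have hyarc' : ∀ i, D ((fun k : Fin 4 => y (w+k)) i) ((fun k : Fin 4 => y (w+k)) (i+1)) := by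
      intro i
      show D (y (w+i)) (y (w+(i+1)))
      have := hyarc (w+i)
      rwa [add_assoc w i 1] at this
    have hux' : ∀ a, u ≠ (fun k : Fin 3 => x (j+1+k)) a := fun a => hux _
    have huy' : ∀ b, u ≠ (fun k : Fin 4 => y (w+k)) b := fun b => huy _
    have hjw' : D ((fun k : Fin 3 => x (j+1+k)) 2) ((fun k : Fin 4 => y (w+k)) 0) := by
      show D (x (j+1+2)) (y (w+0))
      rw [f3a j, add_zero]
      exact hjw
    have hres := shapes (fun k : Fin 3 => x (j+1+k)) (fun k : Fin 4 => y (w+k))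
      hxinj' hyinj' hxy' hxarc' hyarc' u hux' huy' hjw'
    refine ⟨hres.1, hres.2.1, hres.2.2.1, hres.2.2.2.1, ?_⟩
    intro v huv hvx hvy hvu h2
    exact hres.2.2.2.2 v huv (fun a => hvx _) (fun b => hvy _) hvu h2
  obtain ⟨i1, i2, hi12, hIi1, hIi2⟩ := h2I
  rcases hOr with ⟨o1, o2, ho12, hOo1, hOo2⟩ | ⟨v, huv, hvx, hvy, hvu⟩
  · -- two out-neighbours on the 4-cycle
    obtain ⟨w, hw⟩ := houtx 0
    have hsh0 := hsh 0 w hw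
    have c11 : i1 ≠ o1 := fun e => horient _ _ hIi1 (by rw [e]; exact hOo1)
    have c12 : i1 ≠ o2 := fun e => horient _ _ hIi1 (by rw [e]; exact hOo2)
    have c21 : i2 ≠ o1 := fun e => horient _ _ hIi2 (by rw [e]; exact hOo1)
    have c22 : i2 ≠ o2 := fun e => horient _ _ hIi2 (by rw [e]; exact hOo2)
    rcases finL2 i1 i2 o1 o2 w hi12 ho12 c11 c12 c21 c22 with
      (h|h) | ⟨hi, ho⟩ | ⟨hi, ho⟩ | ⟨hi, ho⟩
    · exact hsh0.1 (by rw [h]; exact hIi1)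
    · exact hsh0.1 (by rw [h]; exact hIi2)
    · refine hsh0.2.1 ?_ ?_
      · rw [add_zero]; rcases hi with h|h
        · rw [h]; exact hIi1
        · rw [h]; exact hIi2
      · rcases ho with h|h
        · rw [h]; exact hOo1
        · rw [h]; exact hOo2
    · refine hsh0.2.2.1 ?_ ?_
      · rcases hi with h|h
        · rw [h]; exact hIi1
        · rw [h]; exact hIi2
      · rcases ho with h|h
        · rw [h]; exact hOo1
        · rw [h]; exact hOo2
    · refine hsh0.2.2.2.1 ?_ ?_
      · rcases hi with h|h
        · rw [h]; exact hIi1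
        · rw [h]; exact hIi2
      · rcases ho with h|h
        · rw [h]; exact hOo1
        · rw [h]; exact hOo2
  · -- out-neighbour v outside both cycles
    by_cases hg : ∃ (j : Fin 3) (w : Fin 4), D (x j) (y w) ∧ (D (y (w+2)) u ∨ D (y (w+3)) u)
    · obtain ⟨j, w, hjw, hgd⟩ := hg
      have hshj := hsh j w hjw
      rcases hgd with h2 | h3
      · exact hshj.2.2.2.2 v huv hvx hvy hvu h2
      · exact hshj.1 h3
    · push_neg at hg
      obtain ⟨w0, hw0⟩ := houtx 0
      obtain ⟨w1, hw1⟩ := houtx 1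
      obtain ⟨w2, hw2⟩ := houtx 2
      have hb0 := hg 0 w0 hw0
      have hb1 := hg 1 w1 hw1
      have hb2 := hg 2 w2 hw2
      have n102 : i1 ≠ w0+2 := fun e => hb0.1 (by rw [← e]; exact hIi1)
      have n103 : i1 ≠ w0+3 := fun e => hb0.2 (by rw [← e]; exact hIi1)
      have n202 : i2 ≠ w0+2 := fun e => hb0.1 (by rw [← e]; exact hIi2)
      have n203 : i2 ≠ w0+3 := fun e => hb0.2 (by rw [← e]; exact hIi2)
      have n112 : i1 ≠ w1+2 := fun e => hb1.1 (by rw [← e]; exact hIi1)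
      have n113 : i1 ≠ w1+3 := fun e => hb1.2 (by rw [← e]; exact hIi1)
      have n212 : i2 ≠ w1+2 := fun e => hb1.1 (by rw [← e]; exact hIi2)
      have n213 : i2 ≠ w1+3 := fun e => hb1.2 (by rw [← e]; exact hIi2)
      have n122 : i1 ≠ w2+2 := fun e => hb2.1 (by rw [← e]; exact hIi1)
      have n123 : i1 ≠ w2+3 := fun e => hb2.2 (by rw [← e]; exact hIi1)
      have n222 : i2 ≠ w2+2 := fun e => hb2.1 (by rw [← e]; exact hIi2)
      have n223 : i2 ≠ w2+3 := fun e => hb2.2 (by rw [← e]; exact hIi2)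
      have e10 : w1 = w0 := finL1 i1 i2 w1 w0 hi12 n112 n113 n212 n213 n102 n103 n202 n203
      have e20 : w2 = w0 := finL1 i1 i2 w2 w0 hi12 n122 n123 n222 n223 n102 n103 n202 n203
      rw [e10] at hw1
      rw [e20] at hw2
      exact absurd ⟨x 0, x 1, x 2, y w0, hxinj.ne (by decide), hxinj.ne (by decide),
        hxy 0 w0, hxinj.ne (by decide), hxy 1 w0, hxy 2 w0,
        Or.inl a01, Or.inr a20, Or.inl hw0, Or.inl a12, Or.inl hw1, Or.inl hw2⟩ hK4

end Aux

section Core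

variable {V : Type*}

private lemma core [Fintype V] {D : V → V → Prop}
    (horient : IsOriented D) (hstrong : TwoArcStrong D)
    (hcard₁ : 8 ≤ Fintype.card V) (hcard₂ : Fintype.card V ≤ 9) (hK4 : ¬ ContainsK4 D)
    (x : Fin 3 → V) (y : Fin 4 → V)
    (hxinj : Function.Injective x) (hyinj : Function.Injective y)
    (hxy : ∀ i j, x i ≠ y j)
    (hxarc : ∀ i, D (x i) (x (i+1))) (hyarc : ∀ i, D (y i) (y (i+1))) :
    HasDipath D 8 := by
  classical
  have hnt : Nontrivial V := Fintype.one_lt_card_iff_nontrivial.mp (by omega)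
  have hloop : ∀ v : V, ¬ D v v := fun v h => horient v v h h
  -- minimum out-degree 2
  have hout : ∀ v : V, ∃ a b, a ≠ b ∧ D v a ∧ D v b := by
    intro v
    obtain ⟨w, hw⟩ := exists_ne v
    have hXne : ({v} : Set V) ≠ Set.univ := by
      intro h
      have : w ∈ ({v} : Set V) := h ▸ Set.mem_univ w
      exact hw (by simpa using this)
    have h2 := hstrong {v} ⟨v, rfl⟩ hXne
    have h1 : 1 < {p : V × V | p.1 ∈ ({v}:Set V) ∧ p.2 ∉ ({v}:Set V) ∧ D p.1 p.2}.ncard := by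
      omega
    obtain ⟨p, q, hp, hq, hpq⟩ := (Set.one_lt_ncard_iff (Set.toFinite _)).mp h1
    obtain ⟨hp1, _, hp3⟩ := hp
    obtain ⟨hq1, _, hq3⟩ := hq
    have hp1' : p.1 = v := hp1
    have hq1' : q.1 = v := hq1
    refine ⟨p.2, q.2, ?_, ?_, ?_⟩
    · intro e; exact hpq (Prod.ext (hp1'.trans hq1'.symm) e)
    · rw [hp1'] at hp3; exact hp3
    · rw [hq1'] at hq3; exact hq3
  -- minimum in-degree 2
  have hin : ∀ v : V, ∃ a b, a ≠ b ∧ D a v ∧ D b v := by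
    intro v
    obtain ⟨w, hw⟩ := exists_ne v
    have hXne : ({z : V | z ≠ v} : Set V) ≠ Set.univ := by
      intro h
      have : v ∈ ({z : V | z ≠ v} : Set V) := h ▸ Set.mem_univ v
      exact this rfl
    have h2 := hstrong {z : V | z ≠ v} ⟨w, hw⟩ hXne
    have h1 : 1 < {p : V × V | p.1 ∈ {z : V | z ≠ v} ∧ p.2 ∉ {z : V | z ≠ v} ∧
        D p.1 p.2}.ncard := by omega
    obtain ⟨p, q, hp, hq, hpq⟩ := (Set.one_lt_ncard_iff (Set.toFinite _)).mp h1
    obtain ⟨_, hp2, hp3⟩ := hp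
    obtain ⟨_, hq2, hq3⟩ := hq
    have hp2' : p.2 = v := not_ne_iff.mp hp2
    have hq2' : q.2 = v := not_ne_iff.mp hq2
    refine ⟨p.1, q.1, ?_, ?_, ?_⟩
    · intro e; exact hpq (Prod.ext e (hp2'.trans hq2'.symm))
    · rw [hp2'] at hp3; exact hp3
    · rw [hq2'] at hq3; exact hq3
  set S : Set V := Set.range x ∪ Set.range y with hSdef
  have hrx : (Set.range x).ncard = 3 := by
    rw [← Set.image_univ, Set.ncard_image_of_injective _ hxinj, Set.ncard_univ,
      Nat.card_eq_fintype_card, Fintype.card_fin]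
  have hry : (Set.range y).ncard = 4 := by
    rw [← Set.image_univ, Set.ncard_image_of_injective _ hyinj, Set.ncard_univ,
      Nat.card_eq_fintype_card, Fintype.card_fin]
  have hdisjS : Disjoint (Set.range x) (Set.range y) := by
    rw [Set.disjoint_left]
    rintro a ⟨i, rfl⟩ ⟨j, hj⟩
    exact hxy i j hj.symm
  have hS7 : S.ncard = 7 := by
    rw [hSdef, Set.ncard_union_eq hdisjS (Set.toFinite _) (Set.toFinite _), hrx, hry]
  have hRcard : Sᶜ.ncard ≤ 2 := by
    have h := Set.ncard_add_ncard_compl S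
    rw [Nat.card_eq_fintype_card] at h
    omega
  have hR2 : ∀ a b c : V, a ∈ Sᶜ → b ∈ Sᶜ → c ∈ Sᶜ → a ≠ b → a ≠ c → b ≠ c → False := by
    intro a b c ha hb hc hab hac hbc
    have h3 : ({a,b,c} : Set V).ncard = 3 := by
      rw [Set.ncard_insert_of_notMem (by simp [hab, hac]), Set.ncard_pair hbc]
    have hsub : ({a,b,c} : Set V) ⊆ Sᶜ := by
      simp only [Set.insert_subset_iff, Set.singleton_subset_iff]
      exact ⟨ha, hb, hc⟩
    have := Set.ncard_le_ncard hsub (Set.toFinite _)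
    omega
  have hRne : Sᶜ.Nonempty := by
    rw [Set.nonempty_iff_ne_empty]
    intro h
    have hU : S = Set.univ := by rwa [Set.compl_empty_iff] at h
    rw [hU, Set.ncard_univ, Nat.card_eq_fintype_card] at hS7
    omega
  have hmem : ∀ z : V, z ∈ Sᶜ ∨ (∃ p, z = x p) ∨ (∃ q, z = y q) := by
    intro z
    by_cases h : z ∈ S
    · rcases h with ⟨p, hp⟩ | ⟨q, hq⟩
      · exact Or.inr (Or.inl ⟨p, hp.symm⟩)
      · exact Or.inr (Or.inr ⟨q, hq.symm⟩)
    · exact Or.inl h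
  have hRx : ∀ z ∈ Sᶜ, ∀ j, z ≠ x j := fun z hz j e => hz (Or.inl ⟨j, e.symm⟩)
  have hRy : ∀ z ∈ Sᶜ, ∀ i, z ≠ y i := fun z hz i e => hz (Or.inr ⟨i, e.symm⟩)
  obtain ⟨u0, hu0⟩ := hRne
  -- Case A: some u outside cycles with in-arc from y and out-arc to x
  by_cases hA : ∃ u ∈ Sᶜ, ∃ (i : Fin 4) (j : Fin 3), D (y i) u ∧ D u (x j)
  · obtain ⟨u, hu, i, j, hyu, huxj⟩ := hA
    refine pathQA (fun k : Fin 3 => x (j+k)) (fun k : Fin 4 => y (i+1+k))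
      (fun p q e => add_left_cancel (hxinj e)) (fun p q e => add_left_cancel (hyinj e))
      (fun a b => hxy _ _) ?_ ?_ u (fun a => hRx u hu _) (fun b => hRy u hu _) ?_ ?_
    · intro k
      show D (x (j+k)) (x (j+(k+1)))
      have := hxarc (j+k)
      rwa [add_assoc j k 1] at this
    · intro k
      show D (y (i+1+k)) (y (i+1+(k+1)))
      have := hyarc (i+1+k)
      rwa [add_assoc (i+1) k 1] at this
    · show D (y (i+1+3)) u
      rw [f4a i]
      exact hyu
    · show D u (x (j+0))
      rw [add_zero]
      exact huxj
  -- Case B: some u outside cycles with in-arc from x and out-arc to y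
  by_cases hB : ∃ u ∈ Sᶜ, ∃ (j : Fin 3) (i : Fin 4), D (x j) u ∧ D u (y i)
  · obtain ⟨u, hu, j, i, hxu, huyi⟩ := hB
    refine pathQB (fun k : Fin 3 => x (j+1+k)) (fun k : Fin 4 => y (i+k))
      (fun p q e => add_left_cancel (hxinj e)) (fun p q e => add_left_cancel (hyinj e))
      (fun a b => hxy _ _) ?_ ?_ u (fun a => hRx u hu _) (fun b => hRy u hu _) ?_ ?_
    · intro k
      show D (x (j+1+k)) (x (j+1+(k+1)))
      have := hxarc (j+1+k)
      rwa [add_assoc (j+1) k 1] at this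
    · intro k
      show D (y (i+k)) (y (i+(k+1)))
      have := hyarc (i+k)
      rwa [add_assoc i k 1] at this
    · show D (x (j+1+2)) u
      rw [f3a j]
      exact hxu
    · show D u (y (i+0))
      rw [add_zero]
      exact huyi
  push_neg at hA hB
  -- no arcs from the 3-cycle into the complement
  have notInX : ∀ u ∈ Sᶜ, ∀ j, ¬ D (x j) u := by
    intro u hu j0 hj0
    have hnoy : ∀ i, ¬ D u (y i) := fun i hi => hB u hu j0 i hj0 hi
    have hnoyin : ∀ i, ¬ D (y i) u := by
      intro i hi
      obtain ⟨a, b, hab, hua, hub⟩ := hout u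
      have hnox : ∀ j, ¬ D u (x j) := fun j h => hA u hu i j hi h
      have ha : a ∈ Sᶜ := by
        rcases hmem a with h | ⟨p, rfl⟩ | ⟨q, rfl⟩
        · exact h
        · exact absurd hua (hnox p)
        · exact absurd hua (hnoy q)
      have hb : b ∈ Sᶜ := by
        rcases hmem b with h | ⟨p, rfl⟩ | ⟨q, rfl⟩
        · exact h
        · exact absurd hub (hnox p)
        · exact absurd hub (hnoy q)
      have hua' : u ≠ a := fun e => hloop a (by rw [e] at hua; exact hua)
      have hub' : u ≠ b := fun e => hloop b (by rw [e] at hub; exact hub)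
      exact hR2 u a b hu ha hb hua' hub' hab
    obtain ⟨a, b, hab, hau, hbu⟩ := hin u
    obtain ⟨c, d, hcd, huc, hud⟩ := hout u
    have clIn : ∀ z, D z u → (∃ p, z = x p) ∨ (z ∈ Sᶜ ∧ z ≠ u) := by
      intro z hz
      rcases hmem z with h | ⟨p, rfl⟩ | ⟨q, rfl⟩
      · exact Or.inr ⟨h, fun e => hloop u (by rw [e] at hz; exact hz)⟩
      · exact Or.inl ⟨p, rfl⟩
      · exact absurd hz (hnoyin q)
    have clOut : ∀ z, D u z → (∃ p, z = x p) ∨ (z ∈ Sᶜ ∧ z ≠ u) := by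
      intro z hz
      rcases hmem z with h | ⟨p, rfl⟩ | ⟨q, rfl⟩
      · exact Or.inr ⟨h, fun e => hloop u (by rw [e] at hz; exact hz)⟩
      · exact Or.inl ⟨p, rfl⟩
      · exact absurd hz (hnoy q)
    have K4 : ∀ p q t : Fin 3, p ≠ q → p ≠ t → q ≠ t →
        (D (x p) u ∨ D u (x p)) → (D (x q) u ∨ D u (x q)) → (D (x t) u ∨ D u (x t)) →
        False := by
      intro p q t hpq hpt hqt h1 h2 h3
      have a01 : D (x 0) (x 1) := by
        have := hxarc 0; rwa [show (0:Fin 3)+1 = 1 by decide] at this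
      have a12 : D (x 1) (x 2) := by
        have := hxarc 1; rwa [show (1:Fin 3)+1 = 2 by decide] at this
      have a20 : D (x 2) (x 0) := by
        have := hxarc 2; rwa [show (2:Fin 3)+1 = 0 by decide] at this
      have hadj : ∀ m : Fin 3, D (x m) u ∨ D u (x m) := by
        intro m
        rcases fin3_cover p q t m hpq hpt hqt with e | e | e
        · rw [e]; exact h1
        · rw [e]; exact h2
        · rw [e]; exact h3
      exact hK4 ⟨x 0, x 1, x 2, u, hxinj.ne (by decide), hxinj.ne (by decide),
        (hRx u hu 0).symm, hxinj.ne (by decide), (hRx u hu 1).symm, (hRx u hu 2).symm,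
        Or.inl a01, Or.inr a20, hadj 0, Or.inl a12, hadj 1, hadj 2⟩
    rcases clIn a hau with ⟨p, rfl⟩ | ⟨haR, hane⟩
    · rcases clIn b hbu with ⟨q, rfl⟩ | ⟨hbR, hbne⟩
      · -- both in-neighbours on the 3-cycle
        have hpq : p ≠ q := fun e => hab (by rw [e])
        rcases clOut c huc with ⟨s, rfl⟩ | ⟨hcR, hcne⟩
        · have hsp : s ≠ p := fun e => horient _ _ hau (by rw [← e]; exact huc)
          have hsq : s ≠ q := fun e => horient _ _ hbu (by rw [← e]; exact huc)
          exact K4 p q s hpq (Ne.symm hsp) (Ne.symm hsq) (Or.inl hau) (Or.inl hbu)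
            (Or.inr huc)
        · rcases clOut d hud with ⟨s, rfl⟩ | ⟨hdR, hdne⟩
          · have hsp : s ≠ p := fun e => horient _ _ hau (by rw [← e]; exact hud)
            have hsq : s ≠ q := fun e => horient _ _ hbu (by rw [← e]; exact hud)
            exact K4 p q s hpq (Ne.symm hsp) (Ne.symm hsq) (Or.inl hau) (Or.inl hbu)
              (Or.inr hud)
          · exact hR2 u c d hu hcR hdR (Ne.symm hcne) (Ne.symm hdne) hcd
      · -- a = x p, b outside
        rcases clOut c huc with ⟨s, rfl⟩ | ⟨hcR, hcne⟩
        · rcases clOut d hud with ⟨t, rfl⟩ | ⟨hdR, hdne⟩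
          · have hst : s ≠ t := fun e => hcd (by rw [e])
            have hps : p ≠ s := fun e => horient _ _ hau (by rw [e]; exact huc)
            have hpt : p ≠ t := fun e => horient _ _ hau (by rw [e]; exact hud)
            exact K4 p s t hps hpt hst (Or.inl hau) (Or.inr huc) (Or.inr hud)
          · by_cases e : b = d
            · rw [e] at hbu; exact horient _ _ hbu hud
            · exact hR2 u b d hu hbR hdR (Ne.symm hbne) (Ne.symm hdne) e
        · by_cases e : b = c
          · rw [e] at hbu; exact horient _ _ hbu huc
          · exact hR2 u b c hu hbR hcR (Ne.symm hbne) (Ne.symm hcne) e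
    · rcases clIn b hbu with ⟨q, rfl⟩ | ⟨hbR, hbne⟩
      · -- b = x q, a outside
        rcases clOut c huc with ⟨s, rfl⟩ | ⟨hcR, hcne⟩
        · rcases clOut d hud with ⟨t, rfl⟩ | ⟨hdR, hdne⟩
          · have hst : s ≠ t := fun e => hcd (by rw [e])
            have hqs : q ≠ s := fun e => horient _ _ hbu (by rw [e]; exact huc)
            have hqt : q ≠ t := fun e => horient _ _ hbu (by rw [e]; exact hud)
            exact K4 q s t hqs hqt hst (Or.inl hbu) (Or.inr huc) (Or.inr hud)
          · by_cases e : a = d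
            · rw [e] at hau; exact horient _ _ hau hud
            · exact hR2 u a d hu haR hdR (Ne.symm hane) (Ne.symm hdne) e
        · by_cases e : a = c
          · rw [e] at hau; exact horient _ _ hau huc
          · exact hR2 u a c hu haR hcR (Ne.symm hane) (Ne.symm hcne) e
      · exact hR2 u a b hu haR hbR (Ne.symm hane) (Ne.symm hbne) hab
  -- every vertex of the 3-cycle has an out-neighbour on the 4-cycle
  have houtx : ∀ j : Fin 3, ∃ w, D (x j) (y w) := by
    intro j
    obtain ⟨a, b, hab, hja, hjb⟩ := hout (x j)
    have cl : ∀ z, D (x j) z → z = x (j+1) ∨ ∃ w, z = y w := by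
      intro z hz
      rcases hmem z with h | ⟨p, rfl⟩ | ⟨q, rfl⟩
      · exact absurd hz (notInX z h j)
      · left
        rcases fin3_cases p j with e | e | e
        · exfalso; rw [e] at hz; exact hloop _ hz
        · rw [e]
        · exfalso
          rw [e] at hz
          have h2 := hxarc (j+2)
          rw [f3b j] at h2
          exact horient _ _ hz h2
      · exact Or.inr ⟨q, rfl⟩
    rcases cl a hja with e1 | ⟨w, rfl⟩
    · rcases cl b hjb with e2 | ⟨w, rfl⟩
      · exact absurd (e1.trans e2.symm) hab
      · exact ⟨w, hjb⟩
    · exact ⟨w, hja⟩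
  -- choose the special vertex u
  by_cases hvu : ∃ v ∈ Sᶜ, v ≠ u0 ∧ D v u0
  · obtain ⟨v, hv, hvne, hvu0⟩ := hvu
    -- use u := v; its in-neighbours are all on the 4-cycle
    have h2I : ∃ i j : Fin 4, i ≠ j ∧ D (y i) v ∧ D (y j) v := by
      obtain ⟨a, b, hab, hav, hbv⟩ := hin v
      have cl : ∀ z, D z v → ∃ q, z = y q := by
        intro z hz
        rcases hmem z with h | ⟨p, rfl⟩ | ⟨q, rfl⟩
        · exfalso
          have hzv : z ≠ v := fun e => hloop v (by rw [e] at hz; exact hz)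
          by_cases e : z = u0
          · exact horient z v hz (by rw [e]; exact hvu0)
          · exact hR2 v z u0 hv h hu0 (Ne.symm hzv) hvne e
        · exact absurd hz (notInX v hv p)
        · exact ⟨q, rfl⟩
      obtain ⟨ia, ea⟩ := cl a hav
      obtain ⟨ib, eb⟩ := cl b hbv
      refine ⟨ia, ib, ?_, ?_, ?_⟩
      · intro e; exact hab (by rw [ea, eb, e])
      · rw [ea] at hav; exact hav
      · rw [eb] at hbv; exact hbv
    exact cover horient hK4 x y hxinj hyinj hxy hxarc hyarc v (hRx v hv) (hRy v hv) h2I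
      (Or.inr ⟨u0, hvu0, hRx u0 hu0, hRy u0 hu0, Ne.symm hvne⟩) houtx
  · push_neg at hvu
    -- use u := u0; its in-neighbours are all on the 4-cycle
    have h2I : ∃ i j : Fin 4, i ≠ j ∧ D (y i) u0 ∧ D (y j) u0 := by
      obtain ⟨a, b, hab, hav, hbv⟩ := hin u0
      have cl : ∀ z, D z u0 → ∃ q, z = y q := by
        intro z hz
        rcases hmem z with h | ⟨p, rfl⟩ | ⟨q, rfl⟩
        · exfalso
          have hzv : z ≠ u0 := fun e => hloop u0 (by rw [e] at hz; exact hz)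
          exact hvu z h hzv hz
        · exact absurd hz (notInX u0 hu0 p)
        · exact ⟨q, rfl⟩
      obtain ⟨ia, ea⟩ := cl a hav
      obtain ⟨ib, eb⟩ := cl b hbv
      refine ⟨ia, ib, ?_, ?_, ?_⟩
      · intro e; exact hab (by rw [ea, eb, e])
      · rw [ea] at hav; exact hav
      · rw [eb] at hbv; exact hbv
    obtain ⟨i1, i2, hii, hyi1, hyi2⟩ := h2I
    have hOr : (∃ i j : Fin 4, i ≠ j ∧ D u0 (y i) ∧ D u0 (y j)) ∨
        (∃ v, D u0 v ∧ (∀ a, v ≠ x a) ∧ (∀ b, v ≠ y b) ∧ v ≠ u0) := by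
      obtain ⟨c, d, hcd, huc, hud⟩ := hout u0
      have cl : ∀ z, D u0 z → (∃ q, z = y q) ∨ (z ∈ Sᶜ ∧ z ≠ u0) := by
        intro z hz
        rcases hmem z with h | ⟨p, rfl⟩ | ⟨q, rfl⟩
        · exact Or.inr ⟨h, fun e => hloop u0 (by rw [e] at hz; exact hz)⟩
        · exact absurd hz (hA u0 hu0 i1 p hyi1)
        · exact Or.inl ⟨q, rfl⟩
      rcases cl c huc with ⟨qc, rfl⟩ | ⟨hcR, hcne⟩
      · rcases cl d hud with ⟨qd, rfl⟩ | ⟨hdR, hdne⟩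
        · exact Or.inl ⟨qc, qd, fun e => hcd (by rw [e]), huc, hud⟩
        · exact Or.inr ⟨d, hud, hRx d hdR, hRy d hdR, hdne⟩
      · exact Or.inr ⟨c, huc, hRx c hcR, hRy c hcR, hcne⟩
    exact cover horient hK4 x y hxinj hyinj hxy hxarc hyarc u0 (hRx u0 hu0) (hRy u0 hu0)
      ⟨i1, i2, hii, hyi1, hyi2⟩ hOr houtx

end Core

/-- Let `D` be a 2-arc-strong oriented graph on `n` vertices, `8 ≤ n ≤ 9`,
with no `K₄`. If `D` has two vertex-disjoint directed cycles covering 7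
vertices, then `D` contains a directed path on 8 vertices. -/
theorem hasDipath_eight_of_two_cycles_cover_seven {V : Type*} [Fintype V]
    (D : V → V → Prop) (horient : IsOriented D) (hstrong : TwoArcStrong D)
    (hcard₁ : 8 ≤ Fintype.card V) (hcard₂ : Fintype.card V ≤ 9)
    (hK4 : ¬ ContainsK4 D)
    (C1 C2 : Set V) (hC1 : IsDicycle D C1) (hC2 : IsDicycle D C2)
    (hdisj : C1 ∩ C2 = ∅) (hcover : (C1 ∪ C2).ncard = 7) :
    HasDipath D 8 := by
  classical
  obtain ⟨m1, c1, hm1, hc1inj, hC1eq, h1arc, h1wrap⟩ := hC1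
  obtain ⟨m2, c2, hm2, hc2inj, hC2eq, h2arc, h2wrap⟩ := hC2
  have hn1 : C1.ncard = m1 := by
    rw [hC1eq, ← Set.image_univ, Set.ncard_image_of_injective _ hc1inj, Set.ncard_univ,
      Nat.card_eq_fintype_card, Fintype.card_fin]
  have hn2 : C2.ncard = m2 := by
    rw [hC2eq, ← Set.image_univ, Set.ncard_image_of_injective _ hc2inj, Set.ncard_univ,
      Nat.card_eq_fintype_card, Fintype.card_fin]
  have hdis : Disjoint C1 C2 := Set.disjoint_iff_inter_eq_empty.mpr hdisj
  have hsum : m1 + m2 = 7 := by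
    rw [← hn1, ← hn2, ← Set.ncard_union_eq hdis (Set.toFinite _) (Set.toFinite _)]
    exact hcover
  have hxy12 : ∀ (a : Fin m1) (b : Fin m2), c1 a ≠ c2 b := by
    intro a b e
    have h1 : c1 a ∈ C1 := by rw [hC1eq]; exact ⟨a, rfl⟩
    have h2 : c1 a ∈ C2 := by rw [hC2eq, e]; exact ⟨b, rfl⟩
    have h3 : c1 a ∈ C1 ∩ C2 := ⟨h1, h2⟩
    rw [hdisj] at h3
    exact h3
  have hm1_3 : 3 ≤ m1 := by
    by_contra h
    have hm1' : m1 = 2 := by omega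
    subst hm1'
    have d1 := h1arc ⟨0, by omega⟩ (by norm_num)
    have d2 := h1wrap (by omega)
    exact horient _ _ d1 d2
  have hm2_3 : 3 ≤ m2 := by
    by_contra h
    have hm2' : m2 = 2 := by omega
    subst hm2'
    have d1 := h2arc ⟨0, by omega⟩ (by norm_num)
    have d2 := h2wrap (by omega)
    exact horient _ _ d1 d2
  have hcases : (m1 = 3 ∧ m2 = 4) ∨ (m1 = 4 ∧ m2 = 3) := by omega
  rcases hcases with ⟨e1, e2⟩ | ⟨e1, e2⟩
  · subst e1; subst e2
    have hxarc : ∀ i : Fin 3, D (c1 i) (c1 (i+1)) := by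
      intro i
      fin_cases i
      · exact h1arc 0 (by norm_num)
      · exact h1arc 1 (by norm_num)
      · exact h1wrap (by norm_num)
    have hyarc : ∀ i : Fin 4, D (c2 i) (c2 (i+1)) := by
      intro i
      fin_cases i
      · exact h2arc 0 (by norm_num)
      · exact h2arc 1 (by norm_num)
      · exact h2arc 2 (by norm_num)
      · exact h2wrap (by norm_num)
    exact core horient hstrong hcard₁ hcard₂ hK4 c1 c2 hc1inj hc2inj hxy12 hxarc hyarc
  · subst e1; subst e2
    have hxarc : ∀ i : Fin 3, D (c2 i) (c2 (i+1)) := by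
      intro i
      fin_cases i
      · exact h2arc 0 (by norm_num)
      · exact h2arc 1 (by norm_num)
      · exact h2wrap (by norm_num)
    have hyarc : ∀ i : Fin 4, D (c1 i) (c1 (i+1)) := by
      intro i
      fin_cases i
      · exact h1arc 0 (by norm_num)
      · exact h1arc 1 (by norm_num)
      · exact h1arc 2 (by norm_num)
      · exact h1wrap (by norm_num)
    exact core horient hstrong hcard₁ hcard₂ hK4 c2 c1 hc2inj hc1inj
      (fun a b => (hxy12 b a).symm) hxarc hyarc
end

section
/- Let D be a 2-arc-strong oriented graph on 9 vertices that does not contain K_4 as a subdigraph. If D has two vertex-disjoint directed cycles C^1 and C^2 whose vertex sets together cover 8 vertices, then D contains a Hamilton dipath. -/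
/-!
Basic notions for finite digraphs (modelled as an arc relation `D : V → V → Prop`
on a finite vertex type; absence of loops is an explicit hypothesis, parallel
arcs are impossible in this model).
-/

variable {V : Type*}

section AuxHamilton
open Classical
set_option linter.unusedSectionVars false
variable {V : Type*} {D : V → V → Prop}

lemma hasDipath_of_list (l : List V) (hnd : l.Nodup) (hlen : l.length = 9)
    (hch : l.Chain' D) : HasDipath D 9 := by
  refine ⟨fun i => l.get (Fin.cast hlen.symm i), ?_, ?_⟩
  · exact (List.nodup_iff_injective_get.mp hnd).comp fun a b h => by
      simpa using (Fin.cast_injective _) h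
  · intro i h
    have := List.isChain_iff_getElem.mp hch i (by omega)
    exact this

def rotL {m : ℕ} (c : Fin (m+1) → V) (k : Fin (m+1)) : List V :=
  List.ofFn (fun i => c (k + i))

variable {m n : ℕ}

lemma length_rotL (c : Fin (m+1) → V) (k : Fin (m+1)) : (rotL c k).length = m+1 := by
  simp [rotL]

lemma nodup_rotL {c : Fin (m+1) → V} (hc : Function.Injective c) (k : Fin (m+1)) :
    (rotL c k).Nodup :=
  List.nodup_ofFn.mpr (hc.comp fun a b h => by simpa using h)

lemma mem_rotL {c : Fin (m+1) → V} {k : Fin (m+1)} {a : V} :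
    a ∈ rotL c k ↔ ∃ i, c i = a := by
  simp only [rotL, List.mem_ofFn, Set.mem_range]
  constructor
  · rintro ⟨i, rfl⟩; exact ⟨k + i, rfl⟩
  · rintro ⟨i, rfl⟩; exact ⟨i - k, by simp⟩

lemma rotL_ne_nil (c : Fin (m+1) → V) (k : Fin (m+1)) : rotL c k ≠ [] := by
  have := length_rotL c k
  intro h; rw [h] at this; simp at this

lemma head?_rotL (c : Fin (m+1) → V) (k : Fin (m+1)) :
    (rotL c k).head? = some (c k) := by
  unfold rotL
  rw [List.head?_eq_head (by simp), List.head_ofFn]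
  congr 1
  have : (⟨0, Nat.succ_pos m⟩ : Fin (m+1)) = 0 := rfl
  rw [this, add_zero]

lemma getLast?_rotL (c : Fin (m+1) → V) (k : Fin (m+1)) :
    (rotL c k).getLast? = some (c (k - 1)) := by
  unfold rotL
  rw [List.getLast?_eq_getLast (by simp), List.getLast_ofFn]
  congr 1
  have h1 : (⟨m + 1 - 1, by omega⟩ : Fin (m+1)) = -1 := by
    refine eq_neg_of_add_eq_zero_left ?_
    have : (⟨m + 1 - 1, by omega⟩ : Fin (m+1)) = Fin.last m := rfl
    rw [this, Fin.last_add_one]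
  rw [h1]
  rw [sub_eq_add_neg]

lemma chain'_rotL {c : Fin (m+1) → V} (hstep : ∀ i : Fin (m+1), D (c i) (c (i + 1)))
    (k : Fin (m+1)) : (rotL c k).Chain' D := by
  rw [List.Chain', List.isChain_iff_getElem]
  intro i hi
  have hi' : i < m := by
    have := length_rotL c k; omega
  simp only [rotL, List.getElem_ofFn]
  have h2 : i < m + 1 := by omega
  have h3 : i + 1 < m + 1 := by omega
  show D (c (k + ⟨i, h2⟩)) (c (k + ⟨i+1, h3⟩))
  have he : (⟨i+1, h3⟩ : Fin (m+1)) = ⟨i, h2⟩ + 1 := by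
    ext
    rw [Fin.val_add_one_of_lt (by rw [Fin.lt_def, Fin.val_last]; exact hi')]
  rw [he, ← add_assoc]
  exact hstep _

/-- glue: explicit 6-list followed by a full rotation of a cycle -/
lemma glue_six_T (cT : Fin (m+1) → V) (hinjT : Function.Injective cT)
    (hstepT : ∀ i, D (cT i) (cT (i+1))) (t : Fin (m+1)) (u0 u1 u2 u3 u4 u5 : V)
    (hlen : m + 1 = 3)
    (hnd : List.Nodup [u0,u1,u2,u3,u4,u5]) (hch : List.Chain' D [u0,u1,u2,u3,u4,u5])
    (harc : D u5 (cT t)) (hdis : ∀ a ∈ [u0,u1,u2,u3,u4,u5], ∀ j, a ≠ cT j) :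
    HasDipath D 9 := by
  refine hasDipath_of_list ([u0,u1,u2,u3,u4,u5] ++ rotL cT t) ?_ ?_ ?_
  · rw [List.nodup_append]
    refine ⟨hnd, nodup_rotL hinjT t, ?_⟩
    rintro a ha _ hb rfl
    obtain ⟨j, rfl⟩ := mem_rotL.mp hb
    exact hdis _ ha j rfl
  · rw [List.length_append, length_rotL]; simp [hlen]
  · rw [List.Chain', List.isChain_append]
    refine ⟨hch, chain'_rotL hstepT t, ?_⟩
    intro a ha b hb
    rw [head?_rotL] at hb
    simp at ha hb
    subst ha; subst hb
    exact harc

/-- glue: full rotation of a 3-cycle ending at `cT s`, then explicit 6-list -/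
lemma glue_T_six (cT : Fin (m+1) → V) (hinjT : Function.Injective cT)
    (hstepT : ∀ i, D (cT i) (cT (i+1))) (s : Fin (m+1)) (u0 u1 u2 u3 u4 u5 : V)
    (hlen : m + 1 = 3)
    (hnd : List.Nodup [u0,u1,u2,u3,u4,u5]) (hch : List.Chain' D [u0,u1,u2,u3,u4,u5])
    (harc : D (cT s) u0) (hdis : ∀ a ∈ [u0,u1,u2,u3,u4,u5], ∀ j, a ≠ cT j) :
    HasDipath D 9 := by
  refine hasDipath_of_list (rotL cT (s+1) ++ [u0,u1,u2,u3,u4,u5]) ?_ ?_ ?_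
  · rw [List.nodup_append]
    refine ⟨nodup_rotL hinjT _, hnd, ?_⟩
    rintro a ha _ hb rfl
    obtain ⟨j, rfl⟩ := mem_rotL.mp ha
    exact hdis _ hb j rfl
  · rw [List.length_append, length_rotL]; simp [hlen]
  · rw [List.Chain', List.isChain_append]
    refine ⟨chain'_rotL hstepT _, hch, ?_⟩
    intro a ha b hb
    rw [getLast?_rotL] at ha
    simp at ha hb
    subst ha; subst hb
    exact harc

/-- glue: rotation, middle vertex, rotation -/
lemma glue_rot_v_rot (c1 : Fin (m+1) → V) (c2 : Fin (n+1) → V) (v : V)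
    (hinj1 : Function.Injective c1) (hinj2 : Function.Injective c2)
    (hstep1 : ∀ i, D (c1 i) (c1 (i+1))) (hstep2 : ∀ i, D (c2 i) (c2 (i+1)))
    (hd : ∀ i j, c1 i ≠ c2 j) (hv1 : ∀ i, c1 i ≠ v) (hv2 : ∀ j, c2 j ≠ v)
    (x : Fin (m+1)) (w : Fin (n+1)) (hxv : D (c1 x) v) (hvw : D v (c2 w))
    (hlen : (m+1) + 1 + (n+1) = 9) : HasDipath D 9 := by
  refine hasDipath_of_list (rotL c1 (x+1) ++ v :: rotL c2 w) ?_ ?_ ?_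
  · rw [List.nodup_append]
    refine ⟨nodup_rotL hinj1 _, ?_, ?_⟩
    · rw [List.nodup_cons]
      refine ⟨fun hmem => ?_, nodup_rotL hinj2 _⟩
      obtain ⟨j, hj⟩ := mem_rotL.mp hmem
      exact hv2 j hj
    · rintro a ha _ hb rfl
      obtain ⟨i, rfl⟩ := mem_rotL.mp ha
      rcases List.mem_cons.mp hb with h | h
      · exact hv1 i h
      · obtain ⟨j, hj⟩ := mem_rotL.mp h
        exact hd i j hj.symm
  · rw [List.length_append, List.length_cons, length_rotL, length_rotL]; omega
  · rw [List.Chain', List.isChain_append]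
    refine ⟨chain'_rotL hstep1 _, ?_, ?_⟩
    · rw [List.isChain_cons]
      refine ⟨fun y hy => ?_, chain'_rotL hstep2 _⟩
      rw [head?_rotL] at hy
      simp at hy; subst hy; exact hvw
    · intro a ha b hb
      rw [getLast?_rotL] at ha
      simp at ha hb
      subst ha; subst hb
      exact hxv

/-- glue: rotation then rotation -/
lemma glue_rot_rot (c1 : Fin (m+1) → V) (c2 : Fin (n+1) → V)
    (hinj1 : Function.Injective c1) (hinj2 : Function.Injective c2)
    (hstep1 : ∀ i, D (c1 i) (c1 (i+1))) (hstep2 : ∀ i, D (c2 i) (c2 (i+1)))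
    (hd : ∀ i j, c1 i ≠ c2 j)
    (s : Fin (m+1)) (e : Fin (n+1)) (harc : D (c1 s) (c2 e))
    (hlen : (m+1) + (n+1) = 9) : HasDipath D 9 := by
  refine hasDipath_of_list (rotL c1 (s+1) ++ rotL c2 e) ?_ ?_ ?_
  · rw [List.nodup_append]
    refine ⟨nodup_rotL hinj1 _, nodup_rotL hinj2 _, ?_⟩
    rintro a ha _ hb rfl
    obtain ⟨i, rfl⟩ := mem_rotL.mp ha
    obtain ⟨j, hj⟩ := mem_rotL.mp hb
    exact hd i j hj.symm
  · rw [List.length_append, length_rotL, length_rotL]; omega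
  · rw [List.Chain', List.isChain_append]
    refine ⟨chain'_rotL hstep1 _, chain'_rotL hstep2 _, ?_⟩
    intro a ha b hb
    rw [getLast?_rotL] at ha
    rw [head?_rotL] at hb
    simp at ha hb
    subst ha; subst hb
    exact harc
/-- extraction with uniform step and size >= 3 -/
lemma dicycle_extract {C : Set V} (hC : IsDicycle D C) (horient : IsOriented D) :
    ∃ (n : ℕ) (c : Fin (n+3) → V), Function.Injective c ∧ C = Set.range c ∧
      ∀ i : Fin (n+3), D (c i) (c (i+1)) := by
  obtain ⟨m, c, hm, hinj, hrange, harc, hwrap⟩ := hC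
  obtain ⟨m', rfl⟩ : ∃ m', m = m' + 2 := ⟨m - 2, by omega⟩
  have hstep : ∀ i : Fin (m' + 2), D (c i) (c (i+1)) := by
    intro i
    rcases Nat.lt_or_ge ((i : ℕ) + 1) (m' + 2) with h | h
    · have he : (i + 1 : Fin (m'+2)) = ⟨(i:ℕ)+1, h⟩ := by
        ext; rw [Fin.val_add_one_of_lt (by rw [Fin.lt_def, Fin.val_last]; omega)]
      rw [he]; exact harc i h
    · have hi : (i : ℕ) = m' + 1 := by have := i.isLt; omega
      have he0 : (i + 1 : Fin (m'+2)) = ⟨0, by omega⟩ := by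
        ext
        rw [Fin.val_add_one]
        rw [if_pos (by ext; simpa using hi)]
      rw [he0]
      have := hwrap (by omega)
      convert this using 2
      ext; simpa using hi
  rcases Nat.eq_zero_or_pos m' with rfl | hm'
  · exfalso
    have h01 := hstep 0
    have h10 := hstep 1
    have e1 : ((0:Fin 2) + 1) = 1 := rfl
    have e2 : ((1:Fin 2) + 1) = 0 := rfl
    rw [e1] at h01; rw [e2] at h10
    exact horient _ _ h01 h10
  · obtain ⟨m'', rfl⟩ : ∃ k, m' = k + 1 := ⟨m' - 1, by omega⟩
    exact ⟨m'', c, hinj, hrange, hstep⟩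

/-- inserting a vertex after position x in a cycle -/
def insVert {m : ℕ} (c : Fin (m+1) → V) (x : Fin (m+1)) (v : V) : Fin (m+2) → V :=
  fun i => if h : (i : ℕ) ≤ (x : ℕ) then c ⟨i, by omega⟩
    else if hi : (i : ℕ) = (x : ℕ) + 1 then v
    else c ⟨(i : ℕ) - 1, by have := i.isLt; omega⟩

lemma insVert_inj {m : ℕ} {c : Fin (m+1) → V} {x : Fin (m+1)} {v : V}
    (hinj : Function.Injective c) (hv : ∀ j, c j ≠ v) :
    Function.Injective (insVert c x v) := by
  intro a b hab
  unfold insVert at hab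
  split_ifs at hab with h1 h2 h3 h4 h5
  all_goals
    first
      | (exact absurd hab (hv _))
      | (exact absurd hab.symm (hv _))
      | (ext; omega)
      | (have h := hinj hab; simp only [Fin.mk.injEq] at h; ext; omega)

lemma insVert_step {m : ℕ} {c : Fin (m+1) → V} {x : Fin (m+1)} {v : V}
    (hstep : ∀ i : Fin (m+1), D (c i) (c (i+1)))
    (hxv : D (c x) v) (hvx : D v (c (x+1))) :
    ∀ i : Fin (m+2), D (insVert c x v i) (insVert c x v (i+1)) := by
  intro i
  have hx := x.isLt
  have hi := i.isLt
  have hsucc : ∀ (j : Fin (m+1)) (h : (j:ℕ) + 1 < m + 1), (j + 1 : Fin (m+1)) = ⟨(j:ℕ)+1, h⟩ := by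
    intro j h; ext
    rw [Fin.val_add_one_of_lt (by rw [Fin.lt_def, Fin.val_last]; omega)]
  have hwrapc : ∀ (j : Fin (m+1)), (j:ℕ) = m → (j + 1 : Fin (m+1)) = ⟨0, by omega⟩ := by
    intro j h
    have : j = Fin.last m := by ext; simpa using h
    rw [this, Fin.last_add_one]; rfl
  by_cases hlast : (i : ℕ) = m + 1
  · have hv0 : ((i + 1 : Fin (m+2)) : ℕ) = 0 := by
      have : i = Fin.last (m+1) := by ext; simpa using hlast
      rw [this, Fin.last_add_one]; rfl
    have h1 : insVert c x v (i+1) = c ⟨0, by omega⟩ := by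
      unfold insVert
      rw [dif_pos (by omega)]
      congr 1; ext; exact hv0
    by_cases hxm : (x : ℕ) = m
    · have h2 : insVert c x v i = v := by
        unfold insVert
        rw [dif_neg (by omega), dif_pos (by omega)]
      rw [h1, h2]
      have h3 := hvx
      rw [hwrapc x hxm] at h3
      exact h3
    · have h2 : insVert c x v i = c ⟨m, by omega⟩ := by
        unfold insVert
        rw [dif_neg (by omega), dif_neg (by omega)]
        congr 1; ext; show (i:ℕ) - 1 = m; omega
      rw [h1, h2]
      have h3 := hstep ⟨m, by omega⟩
      rw [hwrapc ⟨m, by omega⟩ rfl] at h3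
      exact h3
  · have hv1 : ((i + 1 : Fin (m+2)) : ℕ) = (i:ℕ) + 1 := by
      rw [Fin.val_add_one_of_lt (by rw [Fin.lt_def, Fin.val_last]; omega)]
    by_cases h1 : (i : ℕ) < (x : ℕ)
    · have ha : insVert c x v i = c ⟨i, by omega⟩ := by
        unfold insVert; rw [dif_pos (by omega)]
      have hb : insVert c x v (i+1) = c ⟨(i:ℕ)+1, by omega⟩ := by
        unfold insVert; rw [dif_pos (by omega)]
        congr 1; ext; exact hv1
      rw [ha, hb]
      have h3 := hstep ⟨i, by omega⟩
      rw [hsucc ⟨i, by omega⟩ (by show (i:ℕ)+1 < m+1; omega)] at h3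
      exact h3
    · by_cases h2 : (i : ℕ) = (x : ℕ)
      · have ha : insVert c x v i = c x := by
          unfold insVert; rw [dif_pos (by omega)]
          congr 1; ext; exact h2
        have hb : insVert c x v (i+1) = v := by
          unfold insVert; rw [dif_neg (by omega), dif_pos (by omega)]
        rw [ha, hb]; exact hxv
      · by_cases h3 : (i : ℕ) = (x : ℕ) + 1
        · have ha : insVert c x v i = v := by
            unfold insVert; rw [dif_neg (by omega), dif_pos (by omega)]
          have hxm : (x : ℕ) + 1 < m + 1 := by omega
          have hb : insVert c x v (i+1) = c ⟨(x:ℕ)+1, hxm⟩ := by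
            unfold insVert; rw [dif_neg (by omega), dif_neg (by omega)]
            congr 1; ext; show ((i+1 : Fin (m+2)):ℕ) - 1 = (x:ℕ)+1; omega
          rw [ha, hb]
          have h4 := hvx
          rw [hsucc x hxm] at h4
          exact h4
        · have ha : insVert c x v i = c ⟨(i:ℕ)-1, by omega⟩ := by
            unfold insVert; rw [dif_neg (by omega), dif_neg (by omega)]
          have hb : insVert c x v (i+1) = c ⟨(i:ℕ), by omega⟩ := by
            unfold insVert; rw [dif_neg (by omega), dif_neg (by omega)]
            congr 1; ext; show ((i+1 : Fin (m+2)):ℕ) - 1 = (i:ℕ); omega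
          rw [ha, hb]
          have h4 := hstep ⟨(i:ℕ)-1, by omega⟩
          rw [hsucc ⟨(i:ℕ)-1, by omega⟩ (by show (i:ℕ)-1+1 < m+1; omega)] at h4
          convert h4 using 2
          ext; show (i:ℕ) = (i:ℕ) - 1 + 1; omega

lemma insVert_mem {m : ℕ} (c : Fin (m+1) → V) (x : Fin (m+1)) (v : V) (i : Fin (m+2)) :
    insVert c x v i = v ∨ ∃ j, insVert c x v i = c j := by
  unfold insVert
  split_ifs with h1 h2
  · exact Or.inr ⟨_, rfl⟩
  · exact Or.inl rfl
  · exact Or.inr ⟨_, rfl⟩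

lemma insVert_hits {m : ℕ} (c : Fin (m+1) → V) (x : Fin (m+1)) (v : V) (j : Fin (m+1)) :
    ∃ e : Fin (m+2), insVert c x v e = c j := by
  by_cases h : (j : ℕ) ≤ (x : ℕ)
  · exact ⟨⟨j, by omega⟩, by unfold insVert; rw [dif_pos (by simpa using h)]⟩
  · refine ⟨⟨(j:ℕ)+1, by have := j.isLt; omega⟩, ?_⟩
    unfold insVert
    rw [dif_neg (by simp; omega), dif_neg (by simp; omega)]
    congr 1
lemma ne_univ_of_not_mem {X : Set V} {a : V} (h : a ∉ X) : X ≠ Set.univ := by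
  intro he; rw [he] at h; exact h (Set.mem_univ a)

lemma two_out [Fintype V] (hstrong : TwoArcStrong D)
    (v : V) (hne : ∃ u, u ≠ v) : 2 ≤ {w | D v w}.ncard := by
  obtain ⟨u, hu⟩ := hne
  have h1 := hstrong {v} ⟨v, rfl⟩ (ne_univ_of_not_mem (a := u) (by simpa using hu))
  refine le_trans h1 (Set.ncard_le_ncard_of_injOn Prod.snd ?_ ?_ (Set.toFinite _))
  · rintro ⟨a, b⟩ ⟨ha, _, hd⟩
    exact Set.mem_singleton_iff.mp ha ▸ hd
  · rintro ⟨a, b⟩ ⟨ha, _⟩ ⟨a', b'⟩ ⟨ha', _⟩ h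
    simp only [Set.mem_singleton_iff] at ha ha'
    simp_all

lemma two_in [Fintype V] (hstrong : TwoArcStrong D)
    (v : V) (hne : ∃ u, u ≠ v) : 2 ≤ {w | D w v}.ncard := by
  obtain ⟨u, hu⟩ := hne
  have h1 := hstrong {v}ᶜ ⟨u, hu⟩ (ne_univ_of_not_mem (a := v) (by simp))
  refine le_trans h1 (Set.ncard_le_ncard_of_injOn Prod.fst ?_ ?_ (Set.toFinite _))
  · rintro ⟨a, b⟩ ⟨ha, hb, hd⟩
    have : b = v := by simpa using hb
    exact this ▸ hd
  · rintro ⟨a, b⟩ ⟨_, hb, _⟩ ⟨a', b'⟩ ⟨_, hb', _⟩ h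
    simp only [Set.mem_compl_iff, Set.mem_singleton_iff, not_not] at hb hb'
    simp_all

lemma exists_arc_out [Fintype V] (hstrong : TwoArcStrong D) (X : Set V)
    (hne : X.Nonempty) (hproper : X ≠ Set.univ) :
    ∃ u w, u ∈ X ∧ w ∉ X ∧ D u w := by
  have h1 := hstrong X hne hproper
  obtain ⟨⟨a, b⟩, ha, hb, hd⟩ := Set.nonempty_of_ncard_ne_zero (by omega :
    {p : V × V | p.1 ∈ X ∧ p.2 ∉ X ∧ D p.1 p.2}.ncard ≠ 0)
  exact ⟨a, b, ha, hb, hd⟩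
lemma nodup6 {u0 u1 u2 u3 u4 u5 : V}
    (h01 : u0 ≠ u1) (h02 : u0 ≠ u2) (h03 : u0 ≠ u3) (h04 : u0 ≠ u4) (h05 : u0 ≠ u5)
    (h12 : u1 ≠ u2) (h13 : u1 ≠ u3) (h14 : u1 ≠ u4) (h15 : u1 ≠ u5)
    (h23 : u2 ≠ u3) (h24 : u2 ≠ u4) (h25 : u2 ≠ u5)
    (h34 : u3 ≠ u4) (h35 : u3 ≠ u5) (h45 : u4 ≠ u5) :
    List.Nodup [u0,u1,u2,u3,u4,u5] := by
  simp only [List.nodup_cons, List.mem_cons, List.mem_singleton, List.not_mem_nil,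
    or_false, not_or, List.nodup_nil, and_true, not_false_eq_true]
  exact ⟨⟨h01, h02, h03, h04, h05⟩, ⟨h12, h13, h14, h15⟩, ⟨h23, h24, h25⟩, ⟨h34, h35⟩, h45⟩

lemma chain6 {u0 u1 u2 u3 u4 u5 : V}
    (h1 : D u0 u1) (h2 : D u1 u2) (h3 : D u2 u3) (h4 : D u3 u4) (h5 : D u4 u5) :
    List.Chain' D [u0,u1,u2,u3,u4,u5] := by
  simp only [List.Chain', List.isChain_cons_cons, List.isChain_singleton, and_true]
  exact ⟨h1, h2, h3, h4, h5⟩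

set_option maxHeartbeats 1000000 in
lemma fin5_struct : ∀ (pI pO : Fin 5 → Bool),
    (∀ i, ¬(pI i = true ∧ pO i = true)) →
    2 ≤ (Finset.univ.filter (fun i => pI i = true)).card →
    2 ≤ (Finset.univ.filter (fun i => pO i = true)).card →
    (∀ i, pI i = true → ¬ pO (i+1) = true) →
    ∃ x : Fin 5, (∀ i, pI i = true ↔ (i = x ∨ i = x + 1)) ∧
      (∀ i, pO i = true ↔ (i = x + 3 ∨ i = x + 4)) := by decide

set_option maxHeartbeats 1000000 in
lemma fin4_struct : ∀ (pI pO : Fin 4 → Bool),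
    (∀ i, ¬(pI i = true ∧ pO i = true)) →
    2 ≤ (Finset.univ.filter (fun i => pI i = true)).card →
    2 ≤ (Finset.univ.filter (fun i => pO i = true)).card →
    (∀ i, pI i = true → ¬ pO (i+1) = true) → False := by decide
set_option maxHeartbeats 2000000 in
lemma attached [Fintype V] {mc mt : ℕ}
    (horient : IsOriented D) (hstrong : TwoArcStrong D) (hK4 : ¬ ContainsK4 D)
    (cC : Fin (mc+3) → V) (cT : Fin (mt+3) → V) (v : V)
    (hinjC : Function.Injective cC) (hinjT : Function.Injective cT)
    (hstepC : ∀ i, D (cC i) (cC (i+1))) (hstepT : ∀ i, D (cT i) (cT (i+1)))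
    (hdCT : ∀ i j, cC i ≠ cT j) (hvC : ∀ i, cC i ≠ v) (hvT : ∀ j, cT j ≠ v)
    (hcov : ∀ u, u = v ∨ (∃ i, cC i = u) ∨ (∃ j, cT j = u))
    (hsum : (mc+3) + (mt+3) = 8)
    (hIn : ∀ u, D u v → ∃ i, cC i = u) (hOut : ∀ u, D v u → ∃ i, cC i = u) :
    HasDipath D 9 := by
  have hloop : ∀ u, ¬ D u u := fun u h => horient u u h h
  have hne : ∃ u, u ≠ v := ⟨cC 0, hvC 0⟩
  have hvin : 2 ≤ {w | D w v}.ncard := two_in hstrong v hne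
  have hvout : 2 ≤ {w | D v w}.ncard := two_out hstrong v hne
  have hSIeq : {w | D w v} = cC '' {i | D (cC i) v} := by
    ext u
    simp only [Set.mem_setOf_eq, Set.mem_image]
    constructor
    · intro h
      obtain ⟨i, rfl⟩ := hIn u h
      exact ⟨i, h, rfl⟩
    · rintro ⟨i, hi, rfl⟩; exact hi
  have hSOeq : {w | D v w} = cC '' {i | D v (cC i)} := by
    ext u
    simp only [Set.mem_setOf_eq, Set.mem_image]
    constructor
    · intro h
      obtain ⟨i, rfl⟩ := hOut u h
      exact ⟨i, h, rfl⟩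
    · rintro ⟨i, hi, rfl⟩; exact hi
  rw [hSIeq, Set.ncard_image_of_injective _ hinjC] at hvin
  rw [hSOeq, Set.ncard_image_of_injective _ hinjC] at hvout
  by_cases hic : ∃ x : Fin (mc+3), D (cC x) v ∧ D v (cC (x+1))
  · -- insert v into the cycle C, glue T in front
    obtain ⟨x, hxv, hvx⟩ := hic
    obtain ⟨u, w, hu, hw, harc⟩ := exists_arc_out hstrong {u | ∃ j, cT j = u}
      ⟨cT 0, 0, rfl⟩ (ne_univ_of_not_mem (a := v) (by rintro ⟨j, hj⟩; exact hvT j hj))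
    obtain ⟨s, rfl⟩ := hu
    have hwC : ∃ j, cC j = w := by
      rcases hcov w with rfl | hC | hT
      · exfalso
        obtain ⟨i, hi⟩ := hIn _ harc
        exact hdCT i s hi
      · exact hC
      · exact absurd hT hw
    obtain ⟨j, rfl⟩ := hwC
    obtain ⟨e, he⟩ := insVert_hits cC x v j
    refine glue_rot_rot (m := mt+2) (n := mc+3) cT (insVert cC x v) hinjT
      (insVert_inj hinjC hvC) hstepT (insVert_step hstepC hxv hvx) ?_ s e ?_ ?_
    · intro i j' hij
      rcases insVert_mem cC x v j' with hm | ⟨j2, hm⟩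
      · rw [hm] at hij; exact hvT i hij
      · rw [hm] at hij; exact hdCT j2 i hij.symm
    · rw [he]; exact harc
    · omega
  · push_neg at hic
    have hmc : mc ≤ 2 := by omega
    have hdisjIO : ∀ i : Fin (mc+3), D (cC i) v → D v (cC i) → False :=
      fun i h1 h2 => horient _ _ h1 h2
    interval_cases mc
    · -- |C| = 3 : impossible
      exfalso
      have hdisj : Disjoint {i : Fin (0+3) | D (cC i) v} {i : Fin (0+3) | D v (cC i)} :=
        Set.disjoint_left.mpr (fun i hi1 hi2 => hdisjIO i hi1 hi2)
      have h4 : 4 ≤ ({i : Fin (0+3) | D (cC i) v} ∪ {i : Fin (0+3) | D v (cC i)}).ncard := by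
        rw [Set.ncard_union_eq hdisj]; omega
      have h3 : ({i : Fin (0+3) | D (cC i) v} ∪ {i : Fin (0+3) | D v (cC i)}).ncard ≤ 3 := by
        refine le_trans (Set.ncard_le_ncard (Set.subset_univ _)) ?_
        rw [Set.ncard_univ, Nat.card_eq_fintype_card, Fintype.card_fin]
      omega
    · -- |C| = 4 : impossible
      exfalso
      have hIcard : {i : Fin 4 | D (cC i) v}.ncard
          = (Finset.univ.filter (fun i : Fin 4 => decide (D (cC i) v) = true)).card := by
        rw [← Set.ncard_coe_finset]
        congr 1
        ext i
        simp [decide_eq_true_eq]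
      have hOcard : {i : Fin 4 | D v (cC i)}.ncard
          = (Finset.univ.filter (fun i : Fin 4 => decide (D v (cC i)) = true)).card := by
        rw [← Set.ncard_coe_finset]
        congr 1
        ext i
        simp [decide_eq_true_eq]
      refine fin4_struct (fun i => decide (D (cC i) v)) (fun i => decide (D v (cC i)))
        ?_ ?_ ?_ ?_
      · rintro i ⟨h1, h2⟩
        exact hdisjIO i (of_decide_eq_true h1) (of_decide_eq_true h2)
      · rw [← hIcard]; exact hvin
      · rw [← hOcard]; exact hvout
      · intro i h1 h2
        exact hic i (of_decide_eq_true h1) (of_decide_eq_true h2)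
    · -- |C| = 5, |T| = 3 : the main case
      have hmt : mt = 0 := by omega
      subst hmt
      have hIcard : {i : Fin 5 | D (cC i) v}.ncard
          = (Finset.univ.filter (fun i : Fin 5 => decide (D (cC i) v) = true)).card := by
        rw [← Set.ncard_coe_finset]
        congr 1
        ext i
        simp [decide_eq_true_eq]
      have hOcard : {i : Fin 5 | D v (cC i)}.ncard
          = (Finset.univ.filter (fun i : Fin 5 => decide (D v (cC i)) = true)).card := by
        rw [← Set.ncard_coe_finset]
        congr 1
        ext i
        simp [decide_eq_true_eq]
      obtain ⟨x, hI, hO⟩ := fin5_struct (fun i => decide (D (cC i) v))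
        (fun i => decide (D v (cC i)))
        (fun i ⟨h1, h2⟩ => hdisjIO i (of_decide_eq_true h1) (of_decide_eq_true h2))
        (by rw [← hIcard]; exact hvin) (by rw [← hOcard]; exact hvout)
        (fun i h1 h2 => hic i (of_decide_eq_true h1) (of_decide_eq_true h2))
      set c' : Fin 5 → V := fun i => cC (x + i) with hc'
      have hinj' : Function.Injective c' := hinjC.comp fun a b h => by simpa using h
      have hstep' : ∀ i, D (c' i) (c' (i+1)) := by
        intro i
        have h := hstepC (x + i)
        show D (cC (x + i)) (cC (x + (i + 1)))
        rwa [← add_assoc]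
      have hvC' : ∀ i, c' i ≠ v := fun i => hvC _
      have hv' : ∀ i, v ≠ c' i := fun i h => hvC' i h.symm
      have hd' : ∀ i j, c' i ≠ cT j := fun i j => hdCT _ _
      have hneq : ∀ i j : Fin 5, i ≠ j → c' i ≠ c' j := fun i j hij h => hij (hinj' h)
      have hsurj' : ∀ i : Fin 5, ∃ i', c' i' = cC i := by
        intro i
        refine ⟨i - x, ?_⟩
        show cC (x + (i - x)) = cC i
        rw [add_comm, sub_add_cancel]
      have hIiff : ∀ i : Fin 5, D (c' i) v ↔ (i = 0 ∨ i = 1) := by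
        intro i
        have h := hI (x + i)
        rw [decide_eq_true_eq] at h
        show D (cC (x + i)) v ↔ _
        rw [h]
        constructor
        · rintro (h1 | h1)
          · left; rwa [add_eq_left] at h1
          · right; rwa [add_right_inj] at h1
        · rintro (rfl | rfl)
          · left; exact add_zero x
          · right; rfl
      have hOiff : ∀ i : Fin 5, D v (c' i) ↔ (i = 3 ∨ i = 4) := by
        intro i
        have h := hO (x + i)
        rw [decide_eq_true_eq] at h
        show D v (cC (x + i)) ↔ _
        rw [h]
        constructor
        · rintro (h1 | h1)
          · left; rwa [add_right_inj] at h1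
          · right; rwa [add_right_inj] at h1
        · rintro (rfl | rfl) <;> simp
      have a0 : D (c' 0) v := (hIiff 0).mpr (Or.inl rfl)
      have a1 : D (c' 1) v := (hIiff 1).mpr (Or.inr rfl)
      have a3 : D v (c' 3) := (hOiff 3).mpr (Or.inl rfl)
      have a4 : D v (c' 4) := (hOiff 4).mpr (Or.inr rfl)
      have s01 : D (c' 0) (c' 1) := by have h := hstep' 0; rwa [show (0:Fin 5)+1 = 1 by decide] at h
      have s12 : D (c' 1) (c' 2) := by have h := hstep' 1; rwa [show (1:Fin 5)+1 = 2 by decide] at h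
      have s23 : D (c' 2) (c' 3) := by have h := hstep' 2; rwa [show (2:Fin 5)+1 = 3 by decide] at h
      have s34 : D (c' 3) (c' 4) := by have h := hstep' 3; rwa [show (3:Fin 5)+1 = 4 by decide] at h
      have s40 : D (c' 4) (c' 0) := by have h := hstep' 4; rwa [show (4:Fin 5)+1 = 0 by decide] at h
      have hOutLoc : ∀ u, D v u → u = c' 3 ∨ u = c' 4 := by
        intro u h
        obtain ⟨i, rfl⟩ := hOut u h
        obtain ⟨i', hi'⟩ := hsurj' i
        rw [← hi'] at h ⊢
        rcases (hOiff i').mp h with rfl | rfl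
        · exact Or.inl rfl
        · exact Or.inr rfl
      by_cases hS1 : ∃ t, D (c' 2) (cT t)
      · obtain ⟨t, ht⟩ := hS1
        refine glue_six_T cT hinjT hstepT t v (c' 3) (c' 4) (c' 0) (c' 1) (c' 2) rfl
          (nodup6 (hv' 3) (hv' 4) (hv' 0) (hv' 1) (hv' 2)
            (hneq 3 4 (by decide)) (hneq 3 0 (by decide)) (hneq 3 1 (by decide)) (hneq 3 2 (by decide))
            (hneq 4 0 (by decide)) (hneq 4 1 (by decide)) (hneq 4 2 (by decide))
            (hneq 0 1 (by decide)) (hneq 0 2 (by decide)) (hneq 1 2 (by decide)))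
          (chain6 a3 s34 s40 s01 s12) ht ?_
        intro a ha j
        fin_cases ha <;>
          first
            | exact hd' _ j
            | exact fun h => hvT j h.symm
      by_cases hS2 : ∃ t, D (c' 3) (cT t)
      · obtain ⟨t, ht⟩ := hS2
        refine glue_six_T cT hinjT hstepT t v (c' 4) (c' 0) (c' 1) (c' 2) (c' 3) rfl
          (nodup6 (hv' 4) (hv' 0) (hv' 1) (hv' 2) (hv' 3)
            (hneq 4 0 (by decide)) (hneq 4 1 (by decide)) (hneq 4 2 (by decide)) (hneq 4 3 (by decide))
            (hneq 0 1 (by decide)) (hneq 0 2 (by decide)) (hneq 0 3 (by decide))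
            (hneq 1 2 (by decide)) (hneq 1 3 (by decide)) (hneq 2 3 (by decide)))
          (chain6 a4 s40 s01 s12 s23) ht ?_
        intro a ha j
        fin_cases ha <;>
          first
            | exact hd' _ j
            | exact fun h => hvT j h.symm
      by_cases hS3 : ∃ s, D (cT s) (c' 2)
      · obtain ⟨s, hs⟩ := hS3
        refine glue_T_six cT hinjT hstepT s (c' 2) (c' 3) (c' 4) (c' 0) (c' 1) v rfl
          (nodup6 (hneq 2 3 (by decide)) (hneq 2 4 (by decide)) (hneq 2 0 (by decide)) (hneq 2 1 (by decide)) (hvC' 2)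
            (hneq 3 4 (by decide)) (hneq 3 0 (by decide)) (hneq 3 1 (by decide)) (hvC' 3)
            (hneq 4 0 (by decide)) (hneq 4 1 (by decide)) (hvC' 4)
            (hneq 0 1 (by decide)) (hvC' 0) (hvC' 1))
          (chain6 s23 s34 s40 s01 a1) hs ?_
        intro a ha j
        fin_cases ha <;>
          first
            | exact hd' _ j
            | exact fun h => hvT j h.symm
      push_neg at hS1 hS2 hS3
      -- K4-freeness facts
      have h03 : ¬ (D (c' 0) (c' 3) ∨ D (c' 3) (c' 0)) := by
        intro h
        exact hK4 ⟨v, c' 0, c' 3, c' 4, hv' 0, hv' 3, hv' 4,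
          hneq 0 3 (by decide), hneq 0 4 (by decide), hneq 3 4 (by decide),
          Or.inr a0, Or.inl a3, Or.inl a4, h, Or.inr s40, Or.inl s34⟩
      have h14 : ¬ (D (c' 1) (c' 4) ∨ D (c' 4) (c' 1)) := by
        intro h
        exact hK4 ⟨v, c' 0, c' 1, c' 4, hv' 0, hv' 1, hv' 4,
          hneq 0 1 (by decide), hneq 0 4 (by decide), hneq 1 4 (by decide),
          Or.inr a0, Or.inr a1, Or.inl a4, Or.inl s01, Or.inr s40, h⟩
      -- degree analysis of c' 2
      have hout2sub : {w | D (c' 2) w} ⊆ {c' 0, c' 3, c' 4} := by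
        intro w hw
        simp only [Set.mem_setOf_eq] at hw
        rcases hcov w with rfl | ⟨i, rfl⟩ | ⟨j, rfl⟩
        · rcases (hIiff 2).mp hw with h | h <;> exact absurd h (by decide)
        · obtain ⟨i', hi'⟩ := hsurj' i
          rw [← hi'] at hw ⊢
          fin_cases i'
          · exact Or.inl rfl
          · exact absurd hw (fun h => horient _ _ s12 h)
          · exact absurd hw (hloop _)
          · exact Or.inr (Or.inl rfl)
          · exact Or.inr (Or.inr rfl)
        · exact absurd hw (hS1 j)
      have hin2sub : {w | D w (c' 2)} ⊆ {c' 1, c' 0, c' 4} := by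
        intro w hw
        simp only [Set.mem_setOf_eq] at hw
        rcases hcov w with rfl | ⟨i, rfl⟩ | ⟨j, rfl⟩
        · rcases (hOiff 2).mp hw with h | h <;> exact absurd h (by decide)
        · obtain ⟨i', hi'⟩ := hsurj' i
          rw [← hi'] at hw ⊢
          fin_cases i'
          · exact Or.inr (Or.inl rfl)
          · exact Or.inl rfl
          · exact absurd hw (hloop _)
          · exact absurd hw (fun h => horient _ _ s23 h)
          · exact Or.inr (Or.inr rfl)
        · exact absurd hw (hS3 j)
      have hpairbound : ∀ (a b : V), ({a, b} : Set V).ncard ≤ 2 := by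
        intro a b
        refine le_trans (Set.ncard_insert_le a {b}) ?_
        rw [Set.ncard_singleton]
      have hout2 : D (c' 2) (c' 0) ∨ D (c' 2) (c' 4) := by
        by_contra h
        push_neg at h
        have hsub : {w | D (c' 2) w} ⊆ {c' 3} := by
          intro w hw
          rcases hout2sub hw with rfl | rfl | rfl
          · exact absurd hw h.1
          · rfl
          · exact absurd hw h.2
        have hle := le_trans (Set.ncard_le_ncard hsub (Set.toFinite _)) (by rw [Set.ncard_singleton] : ({c' 3} : Set V).ncard ≤ 1)
        have h2 := two_out hstrong (c' 2) ⟨v, hv' 2⟩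
        omega
      have hin2 : D (c' 0) (c' 2) ∨ D (c' 4) (c' 2) := by
        by_contra h
        push_neg at h
        have hsub : {w | D w (c' 2)} ⊆ {c' 1} := by
          intro w hw
          rcases hin2sub hw with rfl | rfl | rfl
          · rfl
          · exact absurd hw h.1
          · exact absurd hw h.2
        have hle := le_trans (Set.ncard_le_ncard hsub (Set.toFinite _)) (by rw [Set.ncard_singleton] : ({c' 1} : Set V).ncard ≤ 1)
        have h2 := two_in hstrong (c' 2) ⟨v, hv' 2⟩
        omega
      by_cases h20 : D (c' 2) (c' 0)
      · -- case alpha : 4→2 and 2→0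
        have h42 : D (c' 4) (c' 2) := hin2.resolve_left (fun h => horient _ _ h20 h)
        -- an arc from C ∪ {v} into T
        obtain ⟨u, w, hu, hw, harc⟩ := exists_arc_out hstrong {u | ¬ ∃ j, cT j = u}
          ⟨v, fun ⟨j, hj⟩ => hvT j hj⟩ (ne_univ_of_not_mem (a := cT 0) (by simp))
        rw [Set.mem_setOf_eq, not_not] at hw
        obtain ⟨t, rfl⟩ := hw
        have huC : ∃ i', c' i' = u := by
          rcases hcov u with rfl | ⟨i, rfl⟩ | ⟨j, rfl⟩
          · exfalso
            rcases hOutLoc _ harc with h | h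
            · exact hd' 3 t h.symm
            · exact hd' 4 t h.symm
          · exact hsurj' i
          · exact absurd ⟨j, rfl⟩ hu
        obtain ⟨i', rfl⟩ := huC
        fin_cases i'
        · -- path 1 v 3 4 2 0 then T
          refine glue_six_T cT hinjT hstepT t (c' 1) v (c' 3) (c' 4) (c' 2) (c' 0) rfl
            (nodup6 (hvC' 1) (hneq 1 3 (by decide)) (hneq 1 4 (by decide)) (hneq 1 2 (by decide)) (hneq 1 0 (by decide))
              (hv' 3) (hv' 4) (hv' 2) (hv' 0)
              (hneq 3 4 (by decide)) (hneq 3 2 (by decide)) (hneq 3 0 (by decide))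
              (hneq 4 2 (by decide)) (hneq 4 0 (by decide)) (hneq 2 0 (by decide)))
            (chain6 a1 a3 s34 h42 h20) harc ?_
          intro a ha j
          fin_cases ha <;>
            first
              | exact hd' _ j
              | exact fun h => hvT j h.symm
        · -- path v 3 4 2 0 1 then T
          refine glue_six_T cT hinjT hstepT t v (c' 3) (c' 4) (c' 2) (c' 0) (c' 1) rfl
            (nodup6 (hv' 3) (hv' 4) (hv' 2) (hv' 0) (hv' 1)
              (hneq 3 4 (by decide)) (hneq 3 2 (by decide)) (hneq 3 0 (by decide)) (hneq 3 1 (by decide))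
              (hneq 4 2 (by decide)) (hneq 4 0 (by decide)) (hneq 4 1 (by decide))
              (hneq 2 0 (by decide)) (hneq 2 1 (by decide)) (hneq 0 1 (by decide)))
            (chain6 a3 s34 h42 h20 s01) harc ?_
          intro a ha j
          fin_cases ha <;>
            first
              | exact hd' _ j
              | exact fun h => hvT j h.symm
        · exact absurd harc (hS1 t)
        · exact absurd harc (hS2 t)
        · -- path 2 0 1 v 3 4 then T
          refine glue_six_T cT hinjT hstepT t (c' 2) (c' 0) (c' 1) v (c' 3) (c' 4) rfl
            (nodup6 (hneq 2 0 (by decide)) (hneq 2 1 (by decide)) (hvC' 2) (hneq 2 3 (by decide)) (hneq 2 4 (by decide))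
              (hneq 0 1 (by decide)) (hvC' 0) (hneq 0 3 (by decide)) (hneq 0 4 (by decide))
              (hvC' 1) (hneq 1 3 (by decide)) (hneq 1 4 (by decide))
              (hv' 3) (hv' 4) (hneq 3 4 (by decide)))
            (chain6 h20 s01 a1 a3 s34) harc ?_
          intro a ha j
          fin_cases ha <;>
            first
              | exact hd' _ j
              | exact fun h => hvT j h.symm
      · -- case beta : 0→2 and 2→4
        have h24 : D (c' 2) (c' 4) := hout2.resolve_left h20
        have h02 : D (c' 0) (c' 2) := hin2.resolve_right (fun h => horient _ _ h24 h)
        -- derive 3→1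
        have h31 : D (c' 3) (c' 1) := by
          by_contra hno
          have hsub : {w | D (c' 3) w} ⊆ {c' 4} := by
            intro w hw
            simp only [Set.mem_setOf_eq] at hw
            rcases hcov w with rfl | ⟨i, rfl⟩ | ⟨j, rfl⟩
            · rcases (hIiff 3).mp hw with h | h <;> exact absurd h (by decide)
            · obtain ⟨i', hi'⟩ := hsurj' i
              rw [← hi'] at hw ⊢
              fin_cases i'
              · exact absurd (Or.inr hw) h03
              · exact absurd hw hno
              · exact absurd hw (fun h => horient _ _ s23 h)
              · exact absurd hw (hloop _)
              · rfl
            · exact absurd hw (hS2 j)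
          have hle := le_trans (Set.ncard_le_ncard hsub (Set.toFinite _)) (by rw [Set.ncard_singleton] : ({c' 4} : Set V).ncard ≤ 1)
          have h2 := two_out hstrong (c' 3) ⟨v, hv' 3⟩
          omega
        -- derive an arc 4 → T
        have h4T : ∃ t, D (c' 4) (cT t) := by
          by_contra hno
          push_neg at hno
          have hsub : {w | D (c' 4) w} ⊆ {c' 0} := by
            intro w hw
            simp only [Set.mem_setOf_eq] at hw
            rcases hcov w with rfl | ⟨i, rfl⟩ | ⟨j, rfl⟩
            · rcases (hIiff 4).mp hw with h | h <;> exact absurd h (by decide)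
            · obtain ⟨i', hi'⟩ := hsurj' i
              rw [← hi'] at hw ⊢
              fin_cases i'
              · rfl
              · exact absurd (Or.inr hw) h14
              · exact absurd hw (fun h => horient _ _ h24 h)
              · exact absurd hw (fun h => horient _ _ s34 h)
              · exact absurd hw (hloop _)
            · exact absurd hw (hno j)
          have hle := le_trans (Set.ncard_le_ncard hsub (Set.toFinite _)) (by rw [Set.ncard_singleton] : ({c' 0} : Set V).ncard ≤ 1)
          have h2 := two_out hstrong (c' 4) ⟨v, hv' 4⟩
          omega
        obtain ⟨t, ht⟩ := h4T
        -- path 0 v 3 1 2 4 then T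
        refine glue_six_T cT hinjT hstepT t (c' 0) v (c' 3) (c' 1) (c' 2) (c' 4) rfl
          (nodup6 (hvC' 0) (hneq 0 3 (by decide)) (hneq 0 1 (by decide)) (hneq 0 2 (by decide)) (hneq 0 4 (by decide))
            (hv' 3) (hv' 1) (hv' 2) (hv' 4)
            (hneq 3 1 (by decide)) (hneq 3 2 (by decide)) (hneq 3 4 (by decide))
            (hneq 1 2 (by decide)) (hneq 1 4 (by decide)) (hneq 2 4 (by decide)))
          (chain6 a0 a3 h31 s12 h24) ht ?_
        intro a ha j
        fin_cases ha <;>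
          first
            | exact hd' _ j
            | exact fun h => hvT j h.symm

end AuxHamilton

/-- Let `D` be a 2-arc-strong oriented graph on 9 vertices with no `K₄`. If
`D` has two vertex-disjoint directed cycles covering 8 vertices, then `D`
contains a Hamilton dipath. -/
theorem hasHamiltonDipath_of_two_cycles_cover_eight {V : Type*} [Fintype V]
    (D : V → V → Prop) (horient : IsOriented D) (hstrong : TwoArcStrong D)
    (hcard : Fintype.card V = 9) (hK4 : ¬ ContainsK4 D)
    (C1 C2 : Set V) (hC1 : IsDicycle D C1) (hC2 : IsDicycle D C2)
    (hdisj : C1 ∩ C2 = ∅) (hcover : (C1 ∪ C2).ncard = 8) :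
    HasDipath D 9 := by
  classical
  obtain ⟨n1, c1, hinj1, hr1, hstep1⟩ := dicycle_extract hC1 horient
  obtain ⟨n2, c2, hinj2, hr2, hstep2⟩ := dicycle_extract hC2 horient
  have hnc1 : C1.ncard = n1 + 3 := by
    rw [hr1, ← Set.image_univ, Set.ncard_image_of_injective _ hinj1, Set.ncard_univ,
      Nat.card_eq_fintype_card, Fintype.card_fin]
  have hnc2 : C2.ncard = n2 + 3 := by
    rw [hr2, ← Set.image_univ, Set.ncard_image_of_injective _ hinj2, Set.ncard_univ,
      Nat.card_eq_fintype_card, Fintype.card_fin]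
  have hdisj' : Disjoint C1 C2 := Set.disjoint_iff_inter_eq_empty.mpr hdisj
  have hsum : (n1 + 3) + (n2 + 3) = 8 := by
    rw [← hnc1, ← hnc2, ← Set.ncard_union_eq hdisj']; exact hcover
  have h9 : (Set.univ : Set V).ncard = 9 := by
    rw [Set.ncard_univ, Nat.card_eq_fintype_card, hcard]
  have hvex : ∃ v, v ∉ C1 ∪ C2 := by
    by_contra h
    push_neg at h
    have huniv : C1 ∪ C2 = Set.univ := Set.eq_univ_of_forall h
    rw [huniv, h9] at hcover
    omega
  obtain ⟨v, hv⟩ := hvex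
  have hcovu : ∀ u, u = v ∨ u ∈ C1 ∪ C2 := by
    have hins : insert v (C1 ∪ C2) = Set.univ := by
      refine Set.eq_of_subset_of_ncard_le (Set.subset_univ _) ?_ (Set.toFinite _)
      rw [Set.ncard_insert_of_notMem hv (Set.toFinite _), hcover, h9]
    intro u
    have hu : u ∈ insert v (C1 ∪ C2) := hins ▸ Set.mem_univ u
    exact Set.mem_insert_iff.mp hu
  have hm1 : ∀ i, c1 i ∈ C1 := fun i => by rw [hr1]; exact ⟨i, rfl⟩
  have hm2 : ∀ j, c2 j ∈ C2 := fun j => by rw [hr2]; exact ⟨j, rfl⟩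
  have hv1 : ∀ i, c1 i ≠ v := fun i h => hv (Set.mem_union_left C2 (h ▸ hm1 i))
  have hv2 : ∀ j, c2 j ≠ v := fun j h => hv (Set.mem_union_right C1 (h ▸ hm2 j))
  have hd12 : ∀ i j, c1 i ≠ c2 j :=
    fun i j h => (Set.disjoint_left.mp hdisj' (hm1 i)) (h ▸ hm2 j)
  have hd21 : ∀ j i, c2 j ≠ c1 i := fun j i h => hd12 i j h.symm
  by_cases hmix1 : ∃ (i : Fin (n1+3)) (j : Fin (n2+3)), D (c1 i) v ∧ D v (c2 j)
  · obtain ⟨i, j, hiv, hvj⟩ := hmix1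
    exact glue_rot_v_rot (m := n1+2) (n := n2+2) c1 c2 v hinj1 hinj2 hstep1 hstep2
      hd12 hv1 hv2 i j hiv hvj (by omega)
  by_cases hmix2 : ∃ (j : Fin (n2+3)) (i : Fin (n1+3)), D (c2 j) v ∧ D v (c1 i)
  · obtain ⟨j, i, hjv, hvi⟩ := hmix2
    exact glue_rot_v_rot (m := n2+2) (n := n1+2) c2 c1 v hinj2 hinj1 hstep2 hstep1
      hd21 hv2 hv1 j i hjv hvi (by omega)
  push_neg at hmix1 hmix2
  have hloopv : ¬ D v v := fun h => horient v v h h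
  have hnbr : ∀ u, (D u v ∨ D v u) → u ∈ C1 ∪ C2 := by
    intro u h
    rcases hcovu u with rfl | hu
    · exact absurd (h.elim id id) hloopv
    · exact hu
  have hvin := two_in hstrong v ⟨c1 0, hv1 0⟩
  have hvout := two_out hstrong v ⟨c1 0, hv1 0⟩
  obtain ⟨a, ha⟩ : ∃ a, D a v := by
    obtain ⟨a, ha⟩ := Set.nonempty_of_ncard_ne_zero
      (show {w | D w v}.ncard ≠ 0 by omega)
    exact ⟨a, ha⟩
  obtain ⟨b, hb⟩ : ∃ b, D v b := by
    obtain ⟨b, hb⟩ := Set.nonempty_of_ncard_ne_zero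
      (show {w | D v w}.ncard ≠ 0 by omega)
    exact ⟨b, hb⟩
  have hcov' : ∀ u, u = v ∨ (∃ i, c1 i = u) ∨ (∃ j, c2 j = u) := by
    intro u
    rcases hcovu u with rfl | hu
    · exact Or.inl rfl
    · rcases hu with h1 | h2
      · rw [hr1] at h1; exact Or.inr (Or.inl h1)
      · rw [hr2] at h2; exact Or.inr (Or.inr h2)
  have hcov'' : ∀ u, u = v ∨ (∃ j, c2 j = u) ∨ (∃ i, c1 i = u) := by
    intro u
    rcases hcov' u with h | h | h
    · exact Or.inl h
    · exact Or.inr (Or.inr h)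
    · exact Or.inr (Or.inl h)
  rcases hnbr a (Or.inl ha) with haC1 | haC2
  · -- all neighbours of v lie on C1
    rw [hr1] at haC1
    obtain ⟨ia, rfl⟩ := haC1
    have hOut : ∀ u, D v u → ∃ i, c1 i = u := by
      intro u hu
      rcases hcov' u with rfl | h1 | h2
      · exact absurd hu hloopv
      · exact h1
      · obtain ⟨j, rfl⟩ := h2
        exact absurd hu (hmix1 ia j ha)
    have hIn : ∀ u, D u v → ∃ i, c1 i = u := by
      intro u hu
      rcases hcov' u with rfl | h1 | h2
      · exact absurd hu hloopv
      · exact h1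
      · obtain ⟨j, rfl⟩ := h2
        exfalso
        rcases hcov' b with rfl | hb1 | hb2
        · exact hloopv hb
        · obtain ⟨i, rfl⟩ := hb1
          exact hmix2 j i hu hb
        · obtain ⟨j2, rfl⟩ := hb2
          exact hmix1 ia j2 ha hb
    exact attached horient hstrong hK4 c1 c2 v hinj1 hinj2 hstep1 hstep2
      hd12 hv1 hv2 hcov' (by omega) hIn hOut
  · -- all neighbours of v lie on C2
    rw [hr2] at haC2
    obtain ⟨ja, rfl⟩ := haC2
    have hOut : ∀ u, D v u → ∃ j, c2 j = u := by
      intro u hu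
      rcases hcov' u with rfl | h1 | h2
      · exact absurd hu hloopv
      · obtain ⟨i, rfl⟩ := h1
        exact absurd hu (hmix2 ja i ha)
      · exact h2
    have hIn : ∀ u, D u v → ∃ j, c2 j = u := by
      intro u hu
      rcases hcov' u with rfl | h1 | h2
      · exact absurd hu hloopv
      · obtain ⟨i, rfl⟩ := h1
        exfalso
        rcases hcov' b with rfl | hb1 | hb2
        · exact hloopv hb
        · obtain ⟨i2, rfl⟩ := hb1
          exact hmix2 ja i2 ha hb
        · obtain ⟨j2, rfl⟩ := hb2
          exact hmix1 i j2 hu hb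
      · exact h2
    exact attached horient hstrong hK4 c2 c1 v hinj2 hinj1 hstep2 hstep1
      hd21 hv2 hv1 hcov'' (by omega) hIn hOut
end
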